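/- arXiv:1211.3270 — 6 statements merged into one kernel-verified Lean document; each statement's English description precedes it below -/
import Mathlib

section
/- Let -1 < α < -1/2 be fixed. Then, uniformly in u ∈ (-1,1), one has |Π_α(u)| ≍ |u| (1 − |u|)^{α+1/2} ≍ |u| · Γ(α+2)/(√π Γ(α+3/2)) (1−u²)^{α+1/2}; that is, there exist constants 0 < c ≤ C depending only on α such that each of the three quantities is bounded above and below by constant multiples of the others for all u ∈ (-1,1). -/
open MeasureTheory Real Set
open scoped ENNReal Classical

noncomputable def cab (α β : ℝ) : ℝ :=
  Real.Gamma (α + β + 2) / (2 ^ (α + β + 1) * Real.Gamma (α + 1) * Real.Gamma (β + 1))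

noncomputable def F4 (a₁ a₂ b₁ b₂ x y : ℝ) : ℝ :=
  ∑' p : ℕ × ℕ,
    (Polynomial.eval a₁ (ascPochhammer ℝ (p.1 + p.2)) *
      Polynomial.eval a₂ (ascPochhammer ℝ (p.1 + p.2))) /
    (Polynomial.eval b₁ (ascPochhammer ℝ p.1) * Polynomial.eval b₂ (ascPochhammer ℝ p.2) *
      (Nat.factorial p.1) * (Nat.factorial p.2)) * x ^ p.1 * y ^ p.2

noncomputable def Hker (α β t θ φ : ℝ) : ℝ :=
  cab α β * Real.sinh (t / 2) / Real.cosh (t / 2) ^ (α + β + 2) *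
    F4 ((α + β + 2) / 2) ((α + β + 3) / 2) (α + 1) (β + 1)
      ((Real.sin (θ / 2) * Real.sin (φ / 2) / Real.cosh (t / 2)) ^ 2)
      ((Real.cos (θ / 2) * Real.cos (φ / 2) / Real.cosh (t / 2)) ^ 2)

noncomputable def qf (θ φ u v : ℝ) : ℝ :=
  1 - u * Real.sin (θ / 2) * Real.sin (φ / 2) - v * Real.cos (θ / 2) * Real.cos (φ / 2)

noncomputable def Psi (α β t θ φ u v : ℝ) : ℝ :=
  cab α β * Real.sinh (t / 2) / (Real.cosh (t / 2) - 1 + qf θ φ u v) ^ (α + β + 2)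

noncomputable def PsiE (α β t θ φ u v : ℝ) : ℝ :=
  (Psi α β t θ φ u v + Psi α β t θ φ (-u) v + Psi α β t θ φ u (-v) +
    Psi α β t θ φ (-u) (-v)) / 4

noncomputable def PiMeas (ν : ℝ) : Measure ℝ :=
  if ν = -(1/2) then (2⁻¹ : ℝ≥0∞) • (Measure.dirac (-1) + Measure.dirac 1)
  else (volume.restrict (Icc (-1 : ℝ) 1)).withDensity
    (fun u => ENNReal.ofReal
      (Real.Gamma (ν + 1) / (Real.sqrt π * Real.Gamma (ν + 1/2)) * (1 - u ^ 2) ^ (ν - 1/2)))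

noncomputable def PiFun (γ u : ℝ) : ℝ :=
  Real.Gamma (γ + 1) / (Real.sqrt π * Real.Gamma (γ + 1/2)) *
    ∫ w in (0 : ℝ)..u, (1 - w ^ 2) ^ (γ - 1/2)

noncomputable def PiInt (ν : ℝ) (S : Set ℝ) (f : ℝ → ℝ) : ℝ :=
  if ν = -(1/2) then
    ((if (-1 : ℝ) ∈ S then f (-1) else 0) + (if (1 : ℝ) ∈ S then f 1 else 0)) / 2
  else ∫ u in S, f u *
    (Real.Gamma (ν + 1) / (Real.sqrt π * Real.Gamma (ν + 1/2)) * (1 - u ^ 2) ^ (ν - 1/2))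

noncomputable def muab (α β : ℝ) : Measure ℝ :=
  (volume.restrict (Icc (0 : ℝ) π)).withDensity
    (fun θ => ENNReal.ofReal (Real.sin (θ / 2) ^ (2 * α + 1) * Real.cos (θ / 2) ^ (2 * β + 1)))

def ballI (θ r : ℝ) : Set ℝ := Ioo (θ - r) (θ + r) ∩ Icc 0 π


private lemma aux_intble (α : ℝ) {a b : ℝ} (h : ∀ w ∈ Set.uIcc a b, 0 < 1 - w ^ 2) :
    IntervalIntegrable (fun w : ℝ => (1 - w ^ 2) ^ (α - 1/2)) volume a b := by
  apply ContinuousOn.intervalIntegrable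
  exact ContinuousOn.rpow_const (by fun_prop) (fun w hw => Or.inl (ne_of_gt (h w hw)))

private lemma aux_intble' (α : ℝ) {a b : ℝ} (h : ∀ w ∈ Set.uIcc a b, 0 < 1 - w) :
    IntervalIntegrable (fun w : ℝ => (1 - w) ^ (α - 1/2)) volume a b := by
  apply ContinuousOn.intervalIntegrable
  exact ContinuousOn.rpow_const (by fun_prop) (fun w hw => Or.inl (ne_of_gt (h w hw)))

set_option maxHeartbeats 1000000 in
private lemma aux_core (α : ℝ) (hα₁ : -1 < α) (hα₂ : α < -(1/2)) {u : ℝ} (hu0 : 0 ≤ u)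
    (hu1 : u < 1) :
    (2:ℝ) ^ (2*α - 1) * (u * (1 - u) ^ (α + 1/2)) ≤ (∫ w in (0:ℝ)..u, (1 - w ^ 2) ^ (α - 1/2)) ∧
    (∫ w in (0:ℝ)..u, (1 - w ^ 2) ^ (α - 1/2)) ≤ (-(α + 1/2))⁻¹ * (u * (1 - u) ^ (α + 1/2)) := by
  have hu2 : ∀ w ∈ Set.uIcc (0:ℝ) u, 0 < 1 - w ^ 2 := by
    intro w hw
    rw [Set.uIcc_of_le hu0, Set.mem_Icc] at hw
    nlinarith [hw.1, hw.2]
  have h1u : (0:ℝ) < 1 - u := by linarith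
  have hXpos : 0 < (1 - u) ^ (α + 1/2) := Real.rpow_pos_of_pos h1u _
  have h2c : (2:ℝ) ^ (2*α - 1) ≤ 1/2 := by
    have := Real.rpow_le_rpow_of_exponent_le (x := 2) one_le_two (y := 2*α-1) (z := -1)
      (by linarith)
    rw [Real.rpow_neg_one] at this
    linarith
  have h2cpos : (0:ℝ) < (2:ℝ) ^ (2*α - 1) := Real.rpow_pos_of_pos two_pos _
  constructor
  · -- lower bound
    rcases le_or_gt u (1/2) with hhalf | hhalf
    · -- small u : integrand ≥ 1 so integral ≥ u
      have hI1 : u ≤ ∫ w in (0:ℝ)..u, (1 - w ^ 2) ^ (α - 1/2) := by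
        have := intervalIntegral.integral_mono_on (μ := volume) hu0
          (intervalIntegrable_const (c := (1:ℝ))) (aux_intble α hu2)
          (fun w hw => by
            rw [Set.mem_Icc] at hw
            exact Real.one_le_rpow_of_pos_of_le_one_of_nonpos
              (by nlinarith [hw.1, hw.2]) (by nlinarith [hw.1]) (by linarith))
        simpa using this
      have hX2 : (1 - u) ^ (α + 1/2) ≤ 2 := by
        have h2 : (1-u)^(α+1/2) ≤ ((1:ℝ)/2)^(α+1/2) :=
          Real.rpow_le_rpow_of_nonpos (by linarith) (by linarith) (by linarith)
        have h3 : ((1:ℝ)/2)^(α+1/2) = (2:ℝ)^(-(α+1/2)) := by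
          rw [one_div, Real.inv_rpow (by norm_num), ← Real.rpow_neg (by norm_num)]
        have h4 : (2:ℝ)^(-(α+1/2)) ≤ 2 := by
          have := Real.rpow_le_rpow_of_exponent_le (x := 2) one_le_two
            (y := -(α+1/2)) (z := 1) (by linarith)
          rwa [Real.rpow_one] at this
        linarith [h2.trans (h3.le.trans h4)]
      have e1 : u * ((1 - u) ^ (α + 1/2)) ≤ 2*u := by nlinarith
      have e2 : (2:ℝ)^(2*α-1) * (u * (1 - u) ^ (α + 1/2)) ≤
          (1/2) * (u * (1 - u) ^ (α + 1/2)) :=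
        mul_le_mul_of_nonneg_right h2c (mul_nonneg hu0 hXpos.le)
      linarith
    · -- large u : restrict to [2u-1, u]
      have hsub : ∀ w ∈ Set.uIcc (2*u-1) u, 0 < 1 - w ^ 2 := by
        intro w hw
        rw [Set.uIcc_of_le (by linarith), Set.mem_Icc] at hw
        nlinarith [hw.1, hw.2]
      have hsplit := intervalIntegral.integral_add_adjacent_intervals
        (a := 0) (b := 2*u-1) (c := u)
        (aux_intble α (by
          intro w hw
          rw [Set.uIcc_of_le (by linarith), Set.mem_Icc] at hw
          nlinarith [hw.1, hw.2])) (aux_intble α hsub)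
      have hfirst : 0 ≤ ∫ w in (0:ℝ)..(2*u-1), (1 - w ^ 2) ^ (α - 1/2) :=
        intervalIntegral.integral_nonneg (by linarith)
          (fun w hw => by
            rw [Set.mem_Icc] at hw
            exact Real.rpow_nonneg (by nlinarith [hw.1, hw.2]) _)
      have hsecond : (1-u) * ((2:ℝ)^(2*α-1) * (1-u)^(α - 1/2)) ≤
          ∫ w in (2*u-1)..u, (1 - w ^ 2) ^ (α - 1/2) := by
        have hmono := intervalIntegral.integral_mono_on (μ := volume) (a := 2*u-1) (b := u)
          (by linarith)
          (intervalIntegrable_const (c := (2:ℝ)^(2*α-1) * (1-u)^(α - 1/2)))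
          (aux_intble α hsub)
          (fun w hw => by
            rw [Set.mem_Icc] at hw
            have hw1 : 0 < 1 - w := by linarith [hw.2]
            have hw2 : 0 < 1 + w := by nlinarith [hw.1]
            have hfac : (1 - w^2 : ℝ) = (1-w)*(1+w) := by ring
            rw [hfac, Real.mul_rpow (by linarith) (by linarith)]
            have e1 : (2*(1-u):ℝ)^(α-1/2) ≤ (1-w)^(α-1/2) :=
              Real.rpow_le_rpow_of_nonpos hw1 (by linarith [hw.1]) (by linarith)
            have e2 : (2:ℝ)^(α-1/2) ≤ (1+w)^(α-1/2) :=
              Real.rpow_le_rpow_of_nonpos hw2 (by linarith [hw.2]) (by linarith)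
            have e3 : (2*(1-u):ℝ)^(α-1/2) = (2:ℝ)^(α-1/2) * (1-u)^(α-1/2) :=
              Real.mul_rpow (by norm_num) (by linarith)
            have e4 : (2:ℝ)^(α-1/2) * (2:ℝ)^(α-1/2) = (2:ℝ)^(2*α-1) := by
              rw [← Real.rpow_add two_pos]; ring_nf
            calc (2:ℝ)^(2*α-1) * (1-u)^(α - 1/2)
                = ((2:ℝ)^(α-1/2) * (1-u)^(α-1/2)) * (2:ℝ)^(α-1/2) := by
                  rw [← e4]; ring
              _ ≤ (1-w)^(α-1/2) * (1+w)^(α-1/2) := by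
                  apply mul_le_mul (e3 ▸ e1) e2 (Real.rpow_nonneg (by norm_num) _)
                    (Real.rpow_nonneg (by linarith) _)
          )
        rw [intervalIntegral.integral_const] at hmono
        have : (u - (2*u-1)) = 1 - u := by ring
        rw [this] at hmono
        simpa [smul_eq_mul] using hmono
      have hval : (1-u) * ((2:ℝ)^(2*α-1) * (1-u)^(α - 1/2)) =
          (2:ℝ)^(2*α-1) * (1-u)^(α + 1/2) := by
        have : (1-u)^(α + 1/2) = (1-u)^(α - 1/2) * (1-u) := by
          rw [← Real.rpow_add_one (ne_of_gt h1u)]; ring_nf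
        rw [this]; ring
      have hIge : (2:ℝ)^(2*α-1) * (1-u)^(α + 1/2) ≤
          ∫ w in (0:ℝ)..u, (1 - w ^ 2) ^ (α - 1/2) := by
        rw [← hsplit]; rw [hval] at hsecond; linarith
      have e1 : u * ((1 - u) ^ (α + 1/2)) ≤ (1 - u) ^ (α + 1/2) := by nlinarith
      have e2 := mul_le_mul_of_nonneg_left e1 h2cpos.le
      linarith
  · -- upper bound
    have hs : (0:ℝ) < -(α + 1/2) := by linarith
    have hIJ : (∫ w in (0:ℝ)..u, (1 - w ^ 2) ^ (α - 1/2)) ≤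
        ∫ w in (0:ℝ)..u, (1 - w) ^ (α - 1/2) := by
      apply intervalIntegral.integral_mono_on hu0 (aux_intble α hu2)
        (aux_intble' α (by
          intro w hw
          rw [Set.uIcc_of_le hu0, Set.mem_Icc] at hw
          linarith [hw.2]))
      intro w hw
      rw [Set.mem_Icc] at hw
      have hw1 : 0 < 1 - w := by linarith [hw.2]
      have hfac : (1 - w^2 : ℝ) = (1-w)*(1+w) := by ring
      rw [hfac, Real.mul_rpow (by linarith) (by linarith [hw.1])]
      have : (1+w)^(α-1/2) ≤ 1 :=
        Real.rpow_le_one_of_one_le_of_nonpos (by linarith [hw.1]) (by linarith)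
      nlinarith [Real.rpow_nonneg (le_of_lt hw1) (α-1/2)]
    have hJ : (∫ w in (0:ℝ)..u, (1 - w) ^ (α - 1/2)) =
        (1 - (1-u)^(α + 1/2)) / (α + 1/2) := by
      have h1 : (∫ w in (0:ℝ)..u, (1 - w) ^ (α - 1/2)) =
          ∫ x in (1-u)..(1:ℝ), x ^ (α - 1/2) := by
        have := intervalIntegral.integral_comp_sub_left (a := 0) (b := u)
          (fun x : ℝ => x ^ (α - 1/2)) 1
        simpa using this
      have hnot : (0:ℝ) ∉ Set.uIcc (1-u) (1:ℝ) := by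
        rw [Set.uIcc_of_le (by linarith : (1-u:ℝ) ≤ 1)]
        intro hmem
        rw [Set.mem_Icc] at hmem
        linarith [hmem.1]
      have hne : (α - 1/2 : ℝ) ≠ -1 := by intro h; linarith
      have h2 := integral_rpow (r := α - 1/2) (a := 1-u) (b := 1) (Or.inr ⟨hne, hnot⟩)
      rw [h1, h2, Real.one_rpow]
      ring_nf
    have hkey : (1 - (1-u)^(α + 1/2)) / (α + 1/2) ≤
        (-(α + 1/2))⁻¹ * (u * (1 - u) ^ (α + 1/2)) := by
      set X := (1-u)^(α + 1/2) with hX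
      have hub : (1-u) * X ≤ 1 := by
        have : (1-u) * X = (1-u)^(1 + (α+1/2)) := by
          rw [Real.rpow_add h1u, Real.rpow_one]
        rw [this]
        exact Real.rpow_le_one (by linarith) (by linarith) (by linarith)
      have h1 : (1 - X) / (α + 1/2) = (X - 1) / (-(α+1/2)) := by rw [div_neg, ← neg_div, neg_sub]
      rw [h1, div_le_iff₀ hs]
      have h2 : (-(α + 1/2))⁻¹ * (u * X) * -(α + 1/2) = u * X := by
        rw [mul_comm, ← mul_assoc, mul_inv_cancel₀ (ne_of_gt hs), one_mul]
      rw [h2]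
      nlinarith [hub]
    rw [hJ] at hIJ
    linarith

private lemma aux_odd (α : ℝ) (v : ℝ) :
    (∫ w in (0:ℝ)..(-v), (1 - w ^ 2) ^ (α - 1/2)) =
      -∫ w in (0:ℝ)..v, (1 - w ^ 2) ^ (α - 1/2) := by
  have h := intervalIntegral.integral_comp_neg (a := 0) (b := v)
    (f := fun w : ℝ => (1 - w ^ 2) ^ (α - 1/2))
  simp only [neg_sq, neg_zero] at h
  have h2 := intervalIntegral.integral_symm (f := fun w : ℝ => (1 - w ^ 2) ^ (α - 1/2))
    (μ := volume) 0 (-v)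
  rw [h2] at h
  linarith

set_option maxHeartbeats 1000000 in
theorem piFun_comparable (α : ℝ) (hα₁ : -1 < α) (hα₂ : α < -(1/2)) :
    ∃ c C : ℝ, 0 < c ∧ c ≤ C ∧ ∀ u ∈ Ioo (-1 : ℝ) 1,
      (c * (|u| * (1 - |u|) ^ (α + 1/2)) ≤ |PiFun α u| ∧
        |PiFun α u| ≤ C * (|u| * (1 - |u|) ^ (α + 1/2))) ∧
      (c * (|u| * (Real.Gamma (α + 2) / (Real.sqrt π * Real.Gamma (α + 3/2)) *
              (1 - u ^ 2) ^ (α + 1/2))) ≤ |PiFun α u| ∧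
        |PiFun α u| ≤ C * (|u| * (Real.Gamma (α + 2) / (Real.sqrt π * Real.Gamma (α + 3/2)) *
              (1 - u ^ 2) ^ (α + 1/2)))) := by
  have hπ : 0 < Real.sqrt π := Real.sqrt_pos.mpr Real.pi_pos
  have hG1 : 0 < Real.Gamma (α+1) := Real.Gamma_pos_of_pos (by linarith)
  have hG32 : 0 < Real.Gamma (α+3/2) := Real.Gamma_pos_of_pos (by linarith)
  have hG12 : Real.Gamma (α+1/2) < 0 := by
    have h0 : (α+1/2 : ℝ) ≠ 0 := by intro h; linarith
    have h := Real.Gamma_add_one h0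
    have he : (α+1/2+1 : ℝ) = α+3/2 := by ring
    rw [he] at h
    nlinarith [hG32]
  have hK0neg : Real.Gamma (α+1) / (Real.sqrt π * Real.Gamma (α+1/2)) < 0 :=
    div_neg_of_pos_of_neg hG1 (mul_neg_of_pos_of_neg hπ hG12)
  set K : ℝ := -(Real.Gamma (α+1) / (Real.sqrt π * Real.Gamma (α+1/2))) with hKdef
  have hKpos : 0 < K := by rw [hKdef]; linarith
  set K2 : ℝ := Real.Gamma (α+2) / (Real.sqrt π * Real.Gamma (α+3/2)) with hK2def
  have hK2pos : 0 < K2 := div_pos (Real.Gamma_pos_of_pos (by linarith)) (mul_pos hπ hG32)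
  have hs : (0:ℝ) < -(α+1/2) := by linarith
  have hc0pos : (0:ℝ) < (2:ℝ)^(2*α-1) := Real.rpow_pos_of_pos two_pos _
  have hc0le : (2:ℝ)^(2*α-1) ≤ 1 :=
    Real.rpow_le_one_of_one_le_of_nonpos one_le_two (by linarith)
  have hDpos : (0:ℝ) < (2:ℝ)^(α+1/2) := Real.rpow_pos_of_pos two_pos _
  have hsinv : (1:ℝ) ≤ (-(α+1/2))⁻¹ := by
    nlinarith [mul_inv_cancel₀ (ne_of_gt hs), inv_nonneg.mpr hs.le]
  set A : ℝ := K * (2:ℝ)^(2*α-1) with hAdef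
  set B : ℝ := K * (-(α+1/2))⁻¹ with hBdef
  have hApos : 0 < A := mul_pos hKpos hc0pos
  have hBpos : 0 < B := mul_pos hKpos (by positivity)
  have hAB : A ≤ B := by
    rw [hAdef, hBdef]
    exact mul_le_mul_of_nonneg_left (hc0le.trans hsinv) hKpos.le
  refine ⟨min A (A / K2), max B (B / (K2 * (2:ℝ)^(α+1/2))), lt_min hApos (div_pos hApos hK2pos),
    le_trans (min_le_left _ _) (hAB.trans (le_max_left _ _)), ?_⟩
  intro u hu
  have ht0 : 0 ≤ |u| := abs_nonneg u
  have ht1 : |u| < 1 := abs_lt.mpr ⟨hu.1, hu.2⟩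
  obtain ⟨hlow, hup⟩ := aux_core α hα₁ hα₂ ht0 ht1
  have hXnn : 0 ≤ (1 - |u|)^(α+1/2) := Real.rpow_nonneg (by linarith) _
  have hgnn : 0 ≤ |u| * (1 - |u|)^(α+1/2) := mul_nonneg ht0 hXnn
  have hInn : 0 ≤ ∫ w in (0:ℝ)..|u|, (1 - w ^ 2) ^ (α - 1/2) :=
    intervalIntegral.integral_nonneg ht0 (fun w hw => by
      rw [Set.mem_Icc] at hw
      exact Real.rpow_nonneg (by nlinarith [hw.1, hw.2]) _)
  -- |PiFun α u| = K * I(|u|)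
  have hIabs : |∫ w in (0:ℝ)..u, (1 - w ^ 2) ^ (α - 1/2)| =
      ∫ w in (0:ℝ)..|u|, (1 - w ^ 2) ^ (α - 1/2) := by
    rcases le_or_gt 0 u with h | h
    · rw [abs_of_nonneg h] at hInn ⊢
      exact abs_of_nonneg hInn
    · have he : |u| = -u := abs_of_neg h
      have hodd := aux_odd α (-u)
      rw [neg_neg] at hodd
      rw [hodd, abs_neg, he]
      rw [he] at hInn
      exact abs_of_nonneg hInn
  have habs : |PiFun α u| = K * ∫ w in (0:ℝ)..|u|, (1 - w ^ 2) ^ (α - 1/2) := by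
    rw [show PiFun α u = (Real.Gamma (α+1) / (Real.sqrt π * Real.Gamma (α+1/2))) *
        ∫ w in (0:ℝ)..u, (1 - w ^ 2) ^ (α - 1/2) from rfl]
    rw [abs_mul, hIabs, abs_of_neg hK0neg]
  -- bounds for |PiFun| against g := |u| * (1-|u|)^(α+1/2)
  have P1l : A * (|u| * (1 - |u|)^(α+1/2)) ≤ |PiFun α u| := by
    rw [habs, hAdef, mul_assoc]
    exact mul_le_mul_of_nonneg_left hlow hKpos.le
  have P1u : |PiFun α u| ≤ B * (|u| * (1 - |u|)^(α+1/2)) := by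
    rw [habs, hBdef, mul_assoc]
    exact mul_le_mul_of_nonneg_left hup hKpos.le
  constructor
  · constructor
    · exact le_trans (mul_le_mul_of_nonneg_right (min_le_left _ _) hgnn) P1l
    · exact le_trans P1u (mul_le_mul_of_nonneg_right (le_max_left _ _) hgnn)
  · -- second comparison
    have hfac2 : (1 - u^2 : ℝ) = (1-|u|)*(1+|u|) := by
      rw [← sq_abs u]; ring
    have hmul : (1-u^2 : ℝ)^(α+1/2) = (1-|u|)^(α+1/2) * (1+|u|)^(α+1/2) := by
      rw [hfac2, Real.mul_rpow (by linarith) (by linarith)]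
    have hY1 : (1+|u|:ℝ)^(α+1/2) ≤ 1 :=
      Real.rpow_le_one_of_one_le_of_nonpos (by linarith) (by linarith)
    have hYD : (2:ℝ)^(α+1/2) ≤ (1+|u|:ℝ)^(α+1/2) :=
      Real.rpow_le_rpow_of_nonpos (by linarith) (by linarith) (by linarith)
    have hYnn : 0 ≤ (1+|u|:ℝ)^(α+1/2) := Real.rpow_nonneg (by linarith) _
    have hRnn : 0 ≤ |u| * (K2 * (1-u^2)^(α+1/2)) := by
      apply mul_nonneg ht0 (mul_nonneg hK2pos.le _)
      rw [hmul]; exact mul_nonneg hXnn hYnn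
    have hRle : |u| * (K2 * (1-u^2)^(α+1/2)) ≤ K2 * (|u| * (1 - |u|)^(α+1/2)) := by
      have h := mul_le_mul_of_nonneg_left hY1
        (mul_nonneg (mul_nonneg ht0 hK2pos.le) hXnn)
      calc |u| * (K2 * (1-u^2)^(α+1/2))
          = (|u| * K2 * (1-|u|)^(α+1/2)) * ((1+|u|)^(α+1/2)) := by rw [hmul]; ring
        _ ≤ (|u| * K2 * (1-|u|)^(α+1/2)) * 1 := h
        _ = K2 * (|u| * (1 - |u|)^(α+1/2)) := by ring
    have hRge : K2 * (2:ℝ)^(α+1/2) * (|u| * (1 - |u|)^(α+1/2)) ≤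
        |u| * (K2 * (1-u^2)^(α+1/2)) := by
      have h := mul_le_mul_of_nonneg_left hYD
        (mul_nonneg (mul_nonneg ht0 hK2pos.le) hXnn)
      calc K2 * (2:ℝ)^(α+1/2) * (|u| * (1 - |u|)^(α+1/2))
          = (|u| * K2 * (1-|u|)^(α+1/2)) * ((2:ℝ)^(α+1/2)) := by ring
        _ ≤ (|u| * K2 * (1-|u|)^(α+1/2)) * ((1+|u|)^(α+1/2)) := h
        _ = |u| * (K2 * (1-u^2)^(α+1/2)) := by rw [hmul]; ring
    constructor
    · -- lower bound
      have e : A / K2 * K2 = A := div_mul_cancel₀ A (ne_of_gt hK2pos)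
      calc min A (A / K2) * (|u| * (K2 * (1-u^2)^(α+1/2)))
          ≤ (A / K2) * (|u| * (K2 * (1-u^2)^(α+1/2))) :=
            mul_le_mul_of_nonneg_right (min_le_right _ _) hRnn
        _ ≤ (A / K2) * (K2 * (|u| * (1 - |u|)^(α+1/2))) :=
            mul_le_mul_of_nonneg_left hRle (div_nonneg hApos.le hK2pos.le)
        _ = (A / K2 * K2) * (|u| * (1 - |u|)^(α+1/2)) := by ring
        _ = A * (|u| * (1 - |u|)^(α+1/2)) := by rw [e]
        _ ≤ |PiFun α u| := P1l
    · -- upper bound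
      have hKD : (0:ℝ) < K2 * (2:ℝ)^(α+1/2) := mul_pos hK2pos hDpos
      have e : B / (K2 * (2:ℝ)^(α+1/2)) * (K2 * (2:ℝ)^(α+1/2)) = B :=
        div_mul_cancel₀ B (ne_of_gt hKD)
      calc |PiFun α u| ≤ B * (|u| * (1 - |u|)^(α+1/2)) := P1u
        _ = (B / (K2 * (2:ℝ)^(α+1/2)) * (K2 * (2:ℝ)^(α+1/2))) *
              (|u| * (1 - |u|)^(α+1/2)) := by rw [e]
        _ = (B / (K2 * (2:ℝ)^(α+1/2))) *
              (K2 * (2:ℝ)^(α+1/2) * (|u| * (1 - |u|)^(α+1/2))) := by ring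
        _ ≤ (B / (K2 * (2:ℝ)^(α+1/2))) * (|u| * (K2 * (1-u^2)^(α+1/2))) :=
            mul_le_mul_of_nonneg_left hRge (div_nonneg hBpos.le hKD.le)
        _ ≤ max B (B / (K2 * (2:ℝ)^(α+1/2))) * (|u| * (K2 * (1-u^2)^(α+1/2))) :=
            mul_le_mul_of_nonneg_right (le_max_right _ _) hRnn
end

section
/- Let κ ≥ 0 and let γ, ν satisfy γ > ν + 1/2 ≥ 0. Then there exist constants 0 < c ≤ C (depending only on κ, γ, ν) such that for all 0 ≤ B < A ≤ D: c · (D−B)^{-κ} A^{-(ν+1/2)} (A−B)^{-(γ−ν−1/2)} ≤ ∫_{[-1,1]} (D−Bs)^{-κ} (A−Bs)^{-γ} dΠ_ν(s) ≤ C · (D−B)^{-κ} A^{-(ν+1/2)} (A−B)^{-(γ−ν−1/2)}. -/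
open MeasureTheory Real Set
open scoped ENNReal Classical

lemma ii_one_sub (α a : ℝ) (hα : -1 < α) :
    IntervalIntegrable (fun s => (1 - s) ^ α) volume a 1 := by
  have h := (intervalIntegral.intervalIntegrable_rpow' (a := 1 - a) (b := 0) hα).comp_sub_left 1
  simpa using h

lemma int_one_sub (α a : ℝ) (hα : -1 < α) (ha : a ≤ 1) :
    ∫ s in Ioc a 1, (1 - s) ^ α = (1 - a) ^ (α + 1) / (α + 1) := by
  rw [← intervalIntegral.integral_of_le ha,
    intervalIntegral.integral_comp_sub_left (fun x => x ^ α) 1]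
  rw [integral_rpow (Or.inl hα)]
  norm_num [Real.zero_rpow (show α + 1 ≠ 0 by linarith)]

lemma ii_one_sub' (β b : ℝ) (hb : b < 1) :
    IntervalIntegrable (fun s => (1 - s) ^ β) volume 0 b := by
  have h0 : (0:ℝ) ∉ Set.uIcc ((1:ℝ) - b) (1 - 0) := by
    intro hmem
    rw [Set.mem_uIcc] at hmem
    rcases hmem with ⟨h1, _⟩ | ⟨h1, h2⟩ <;> [linarith; linarith]
  have h := (intervalIntegral.intervalIntegrable_rpow (r := β) (a := 1 - b) (b := 1 - 0) (Or.inr h0)).comp_sub_left 1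
  simpa using h.symm

lemma int_one_sub' (β b : ℝ) (hβ : β < -1) (h0 : 0 ≤ b) (hb : b < 1) :
    ∫ s in Ioc 0 b, (1 - s) ^ β ≤ (1 - b) ^ (β + 1) / (-(β + 1)) := by
  rw [← intervalIntegral.integral_of_le h0,
    intervalIntegral.integral_comp_sub_left (fun x => x ^ β) 1]
  have h0' : (0:ℝ) ∉ Set.uIcc ((1:ℝ) - b) (1 - 0) := by
    intro hmem
    rw [Set.mem_uIcc] at hmem
    rcases hmem with ⟨h1, _⟩ | ⟨h1, h2⟩ <;> [linarith; linarith]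
  rw [integral_rpow (Or.inr ⟨by intro h; rw [h] at hβ; linarith, h0'⟩)]
  have e1 : (1:ℝ) - 0 = 1 := by norm_num
  rw [e1, Real.one_rpow]
  have hb1 : (0:ℝ) < (1 - b) ^ (β + 1) := Real.rpow_pos_of_pos (by linarith) _
  have e2 : (1 - (1 - b) ^ (β + 1)) / (β + 1)
      = ((1 - b) ^ (β + 1) - 1) / (-(β + 1)) := by
    rw [div_neg, ← neg_div, neg_sub]
  rw [e2, div_le_div_iff_of_pos_right (show (0:ℝ) < -(β+1) by linarith)]
  linarith

lemma one_add_lb (lam s : ℝ) (h0 : 0 ≤ s) (h1 : s ≤ 1) :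
    min ((2:ℝ) ^ lam) 1 ≤ (1 + s) ^ lam := by
  rcases le_or_gt 0 lam with h | h
  · refine le_trans (min_le_right _ _) ?_
    calc (1:ℝ) = 1 ^ lam := (Real.one_rpow lam).symm
      _ ≤ (1 + s) ^ lam := Real.rpow_le_rpow (by norm_num) (by linarith) h
  · exact le_trans (min_le_left _ _)
      (Real.rpow_le_rpow_of_nonpos (by linarith) (by linarith) h.le)

lemma one_add_ub (lam s : ℝ) (h0 : 0 ≤ s) (h1 : s ≤ 1) :
    (1 + s) ^ lam ≤ max ((2:ℝ) ^ lam) 1 := by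
  rcases le_or_gt 0 lam with h | h
  · exact le_trans (Real.rpow_le_rpow (by linarith) (by linarith) h) (le_max_left _ _)
  · refine le_trans ?_ (le_max_right _ _)
    calc (1 + s) ^ lam ≤ 1 ^ lam :=
          Real.rpow_le_rpow_of_nonpos (by norm_num) (by linarith) h.le
      _ = 1 := Real.one_rpow lam

lemma measurable_base (lam : ℝ) : Measurable fun s : ℝ => (1 - s ^ 2) ^ lam := by
  fun_prop

lemma base_split (lam s : ℝ) (h1 : -1 ≤ s) (h2 : s ≤ 1) :
    (1 - s ^ 2) ^ lam = (1 - s) ^ lam * (1 + s) ^ lam := by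
  rw [show (1:ℝ) - s ^ 2 = (1 - s) * (1 + s) by ring,
    Real.mul_rpow (by linarith) (by linarith)]

lemma base_int (lam : ℝ) (hlam : -1 < lam) :
    IntegrableOn (fun s => (1 - s ^ 2) ^ lam) (Icc (-1:ℝ) 1) volume := by
  have hmeas := measurable_base lam
  have hIcc : Icc (-1:ℝ) 1 = Icc (-1:ℝ) 0 ∪ Ioc 0 1 :=
    (Icc_union_Ioc_eq_Icc (by norm_num) (by norm_num)).symm
  rw [hIcc]
  apply IntegrableOn.union
  · have hg : IntegrableOn (fun s => (1 + s) ^ lam) (Icc (-1:ℝ) 0) volume := by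
      have h := (intervalIntegral.intervalIntegrable_rpow' (a := 0) (b := 1) hlam).comp_add_left 1
      have h2 := (intervalIntegrable_iff_integrableOn_Icc_of_le (by norm_num : (0:ℝ)-1 ≤ 1-1)).mp h
      simpa using h2
    apply Integrable.mono' (hg.const_mul (max ((2:ℝ) ^ lam) 1))
    · exact hmeas.aestronglyMeasurable.restrict
    · rw [ae_restrict_iff' measurableSet_Icc]
      filter_upwards with s hs
      obtain ⟨h1, h2⟩ := hs
      rw [Real.norm_eq_abs, abs_of_nonneg (Real.rpow_nonneg (by nlinarith) _),
        base_split lam s h1 (by linarith)]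
      have hub := one_add_ub lam (-s) (by linarith) (by linarith)
      rw [show (1:ℝ) + -s = 1 - s by ring] at hub
      exact mul_le_mul_of_nonneg_right hub (Real.rpow_nonneg (by linarith) _)
  · have hg : IntegrableOn (fun s => (1 - s) ^ lam) (Ioc (0:ℝ) 1) volume :=
      (intervalIntegrable_iff_integrableOn_Ioc_of_le (by norm_num : (0:ℝ) ≤ 1)).mp
        (ii_one_sub lam 0 hlam)
    apply Integrable.mono' (hg.const_mul (max ((2:ℝ) ^ lam) 1))
    · exact hmeas.aestronglyMeasurable.restrict
    · rw [ae_restrict_iff' measurableSet_Ioc]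
      filter_upwards with s hs
      obtain ⟨h1, h2⟩ := hs
      rw [Real.norm_eq_abs, abs_of_nonneg (Real.rpow_nonneg (by nlinarith) _),
        base_split lam s (by linarith) h2, mul_comm ((1-s)^lam)]
      exact mul_le_mul_of_nonneg_right (one_add_ub lam s (by linarith) h2)
        (Real.rpow_nonneg (by linarith) _)

lemma rpow_anti {x y z : ℝ} (hx : 0 < x) (hxy : x ≤ y) (hz : 0 ≤ z) :
    y ^ (-z) ≤ x ^ (-z) :=
  Real.rpow_le_rpow_of_nonpos hx hxy (neg_nonpos.2 hz)

lemma F_integrable (κ γ lam c0 A B D : ℝ) (hκ : 0 ≤ κ) (hγ : 0 ≤ γ)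
    (hc0 : 0 < c0) (hlam : -1 < lam) (hB : 0 ≤ B) (hBA : B < A) (hAD : A ≤ D) :
    IntegrableOn (fun s => ((D - B*s) ^ (-κ) * (A - B*s) ^ (-γ)) * (c0 * (1 - s^2) ^ lam))
      (Icc (-1:ℝ) 1) volume := by
  have hP : 0 < A - B := by linarith
  have hQ : 0 < D - B := by linarith
  have hmeas : Measurable fun s : ℝ =>
      ((D - B*s) ^ (-κ) * (A - B*s) ^ (-γ)) * (c0 * (1 - s^2) ^ lam) := by fun_prop
  apply Integrable.mono' (((base_int lam hlam).const_mul ((D-B) ^ (-κ) * (A-B) ^ (-γ) * c0)))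
  · exact hmeas.aestronglyMeasurable.restrict
  · rw [ae_restrict_iff' measurableSet_Icc]
    filter_upwards with s hs
    obtain ⟨h1, h2⟩ := hs
    have hBs : B * s ≤ B := by nlinarith
    have hQs : 0 < D - B * s := by linarith
    have hPs : 0 < A - B * s := by linarith
    have hbase : (0:ℝ) ≤ 1 - s^2 := by nlinarith
    rw [Real.norm_eq_abs, abs_of_nonneg (by positivity)]
    calc ((D - B*s) ^ (-κ) * (A - B*s) ^ (-γ)) * (c0 * (1 - s^2) ^ lam)
        ≤ ((D-B) ^ (-κ) * (A-B) ^ (-γ)) * (c0 * (1 - s^2) ^ lam) := by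
          apply mul_le_mul_of_nonneg_right _ (by positivity)
          exact mul_le_mul (rpow_anti hQ (by linarith) hκ) (rpow_anti hP (by linarith) hγ)
            (by positivity) (by positivity)
      _ = (D-B) ^ (-κ) * (A-B) ^ (-γ) * c0 * (1 - s^2) ^ lam := by ring

lemma lower_est (κ γ lam c0 : ℝ) (hκ : 0 ≤ κ) (hlam : -1 < lam) (hγ : lam + 1 < γ)
    (hc0 : 0 < c0) :
    ∃ c : ℝ, 0 < c ∧ ∀ A B D : ℝ, 0 ≤ B → B < A → A ≤ D →
      c * ((D-B) ^ (-κ) * A ^ (-(lam+1)) * (A-B) ^ (-(γ-lam-1)))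
        ≤ ∫ s in Icc (-1:ℝ) 1, ((D - B*s) ^ (-κ) * (A - B*s) ^ (-γ)) * (c0 * (1 - s^2) ^ lam) := by
  have hγ0 : 0 ≤ γ := by linarith
  have hl1 : (0:ℝ) < lam + 1 := by linarith
  refine ⟨c0 * min ((2:ℝ) ^ lam) 1 * ((2:ℝ) ^ (-κ) * (2:ℝ) ^ (-γ)) / (lam + 1),
    div_pos (mul_pos (mul_pos hc0 (lt_min (by positivity) one_pos)) (by positivity)) hl1,
    fun A B D hB hBA hAD => ?_⟩
  have hP : 0 < A - B := by linarith
  have hA : 0 < A := by linarith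
  have hQ : 0 < D - B := by linarith
  set t0 : ℝ := (A - B) / A with ht0def
  have ht0pos : 0 < t0 := div_pos hP hA
  have ht0le : t0 ≤ 1 := by rw [div_le_one hA]; linarith
  have hS : Icc (1 - t0) 1 ⊆ Icc (-1:ℝ) 1 := fun s hs => ⟨by linarith [hs.1], hs.2⟩
  have hBt0 : B * t0 ≤ A - B := by
    rw [ht0def, mul_comm, div_mul_eq_mul_div, div_le_iff₀ hA]; nlinarith
  set mm : ℝ := min ((2:ℝ) ^ lam) 1 with hmmdef
  have hmm : 0 < mm := lt_min (by positivity) one_pos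
  set clow : ℝ := c0 * mm * ((2*(D-B)) ^ (-κ) * (2*(A-B)) ^ (-γ)) with hclowdef
  -- pointwise bound on S
  have hpt : ∀ s ∈ Icc (1 - t0) 1,
      clow * (1 - s) ^ lam
        ≤ ((D - B*s) ^ (-κ) * (A - B*s) ^ (-γ)) * (c0 * (1 - s^2) ^ lam) := by
    intro s hs
    obtain ⟨hs1, hs2⟩ := hs
    have hs0 : 0 ≤ s := by linarith
    have hBs : B * (1 - s) ≤ A - B := le_trans
      (mul_le_mul_of_nonneg_left (by linarith : 1 - s ≤ t0) hB) hBt0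
    have hQs : 0 < D - B * s := by nlinarith
    have hPs : 0 < A - B * s := by nlinarith
    have hDle : D - B * s ≤ 2 * (D - B) := by nlinarith
    have hAle : A - B * s ≤ 2 * (A - B) := by nlinarith
    have h1 : (2*(D-B)) ^ (-κ) ≤ (D - B*s) ^ (-κ) := rpow_anti hQs hDle hκ
    have h2 : (2*(A-B)) ^ (-γ) ≤ (A - B*s) ^ (-γ) := rpow_anti hPs hAle hγ0
    have h3 : mm * (1 - s) ^ lam ≤ (1 - s^2) ^ lam := by
      rw [base_split lam s (by linarith) hs2, mul_comm ((1-s)^lam)]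
      exact mul_le_mul_of_nonneg_right (one_add_lb lam s hs0 hs2)
        (Real.rpow_nonneg (by linarith) _)
    calc clow * (1 - s) ^ lam
        = ((2*(D-B)) ^ (-κ) * (2*(A-B)) ^ (-γ)) * (c0 * (mm * (1 - s) ^ lam)) := by
          rw [hclowdef]; ring
      _ ≤ ((D - B*s) ^ (-κ) * (A - B*s) ^ (-γ)) * (c0 * (1 - s^2) ^ lam) := by
          apply mul_le_mul
          · exact mul_le_mul h1 h2 (by positivity) (Real.rpow_nonneg hQs.le _)
          · exact mul_le_mul_of_nonneg_left h3 hc0.le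
          · exact mul_nonneg hc0.le (mul_nonneg hmm.le (Real.rpow_nonneg (by linarith) _))
          · exact mul_nonneg (Real.rpow_nonneg hQs.le _) (Real.rpow_nonneg hPs.le _)
  -- integrabilities
  have hFint := F_integrable κ γ lam c0 A B D hκ hγ0 hc0 hlam hB hBA hAD
  have hgint : IntegrableOn (fun s => clow * (1 - s) ^ lam) (Icc (1 - t0) 1) volume :=
    (((intervalIntegrable_iff_integrableOn_Icc_of_le (by linarith : 1 - t0 ≤ 1)).mp
      (ii_one_sub lam (1 - t0) hlam))).const_mul clow
  have step1 : (∫ s in Icc (1 - t0) 1, clow * (1 - s) ^ lam)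
      ≤ ∫ s in Icc (1 - t0) 1,
        ((D - B*s) ^ (-κ) * (A - B*s) ^ (-γ)) * (c0 * (1 - s^2) ^ lam) :=
    setIntegral_mono_on hgint (hFint.mono_set hS) measurableSet_Icc hpt
  have step2 : (∫ s in Icc (1 - t0) 1,
        ((D - B*s) ^ (-κ) * (A - B*s) ^ (-γ)) * (c0 * (1 - s^2) ^ lam))
      ≤ ∫ s in Icc (-1:ℝ) 1,
        ((D - B*s) ^ (-κ) * (A - B*s) ^ (-γ)) * (c0 * (1 - s^2) ^ lam) := by
    apply setIntegral_mono_set hFint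
    · filter_upwards [ae_restrict_mem measurableSet_Icc] with s hs
      obtain ⟨h1, h2⟩ := hs
      have hBs : B * s ≤ B := by nlinarith
      have : (0:ℝ) ≤ 1 - s^2 := by nlinarith
      have hQs : (0:ℝ) ≤ D - B * s := by linarith
      have hPs : (0:ℝ) ≤ A - B * s := by linarith
      positivity

    · exact HasSubset.Subset.eventuallyLE hS
  -- compute the small integral
  have hval : (∫ s in Icc (1 - t0) 1, clow * (1 - s) ^ lam)
      = clow * (t0 ^ (lam+1) / (lam+1)) := by
    rw [integral_Icc_eq_integral_Ioc, MeasureTheory.integral_const_mul,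
      int_one_sub lam (1 - t0) hlam (by linarith)]
    norm_num
  -- final algebra
  have e2 : (2*(D-B)) ^ (-κ) = (2:ℝ) ^ (-κ) * (D-B) ^ (-κ) :=
    Real.mul_rpow (by norm_num) hQ.le
  have e3 : (2*(A-B)) ^ (-γ) = (2:ℝ) ^ (-γ) * (A-B) ^ (-γ) :=
    Real.mul_rpow (by norm_num) hP.le
  have e4 : t0 ^ (lam+1) = (A-B) ^ (lam+1) * A ^ (-(lam+1)) := by
    rw [ht0def, Real.div_rpow hP.le hA.le, Real.rpow_neg hA.le, div_eq_mul_inv]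
  have e5 : (A-B) ^ (-γ) * (A-B) ^ (lam+1) = (A-B) ^ (-(γ-lam-1)) := by
    rw [← Real.rpow_add hP]; congr 1; ring
  refine le_trans (le_of_eq ?_) (le_trans (le_of_eq hval.symm) (le_trans step1 step2))
  rw [hclowdef, e2, e3, e4, ← e5]
  ring

lemma half_rpow (A z : ℝ) (hA : 0 ≤ A) : (A/2) ^ (-z) = 2 ^ z * A ^ (-z) := by
  rw [Real.div_rpow hA (by norm_num), Real.rpow_neg (by norm_num : (0:ℝ) ≤ 2),
    div_inv_eq_mul, mul_comm]

lemma div_rpow_neg (P B z : ℝ) (hP : 0 ≤ P) (hB : 0 < B) :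
    (P/B) ^ z = P ^ z * B ^ (-z) := by
  rw [Real.div_rpow hP hB.le, Real.rpow_neg hB.le, div_eq_mul_inv]

lemma H_int (γ lam A B : ℝ) (hlam : -1 < lam) (hγ0 : 0 ≤ γ) (hB : 0 ≤ B) (hBA : B < A) :
    IntegrableOn (fun s => ((A-B) + B*(1-s)) ^ (-γ) * (1-s) ^ lam) (Ioc (0:ℝ) 1) volume := by
  have hP : 0 < A - B := by linarith
  apply Integrable.mono' (((intervalIntegrable_iff_integrableOn_Ioc_of_le
    (by norm_num : (0:ℝ) ≤ 1)).mp (ii_one_sub lam 0 hlam)).const_mul ((A-B) ^ (-γ)))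
  · have : Measurable fun s : ℝ => ((A-B) + B*(1-s)) ^ (-γ) * (1-s) ^ lam := by fun_prop
    exact this.aestronglyMeasurable.restrict
  · filter_upwards [ae_restrict_mem measurableSet_Ioc] with s hs
    obtain ⟨h1, h2⟩ := hs
    have h1s : (0:ℝ) ≤ 1 - s := by linarith
    have hPs : 0 < (A-B) + B*(1-s) := by nlinarith
    rw [Real.norm_eq_abs, abs_of_nonneg
      (mul_nonneg (Real.rpow_nonneg hPs.le _) (Real.rpow_nonneg h1s _))]
    exact mul_le_mul_of_nonneg_right
      (Real.rpow_le_rpow_of_nonpos hP (by nlinarith) (neg_nonpos.2 hγ0))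
      (Real.rpow_nonneg h1s _)

lemma JH_est (γ lam A B : ℝ) (hlam : -1 < lam) (hγ : lam + 1 < γ) (hB : 0 ≤ B) (hBA : B < A) :
    (∫ s in Ioc (0:ℝ) 1, ((A-B) + B*(1-s)) ^ (-γ) * (1-s) ^ lam)
      ≤ ((2:ℝ) ^ (lam+1) * (1/(lam+1) + 1/(γ-lam-1)))
        * (A ^ (-(lam+1)) * (A-B) ^ (-(γ-lam-1))) := by
  have hγ0 : 0 ≤ γ := by linarith
  have hl1 : (0:ℝ) < lam + 1 := by linarith
  have hgl : (0:ℝ) < γ - lam - 1 := by linarith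
  have hP : 0 < A - B := by linarith
  have hA : 0 < A := by linarith
  have hA2 : 0 < A / 2 := by linarith
  have hHint := H_int γ lam A B hlam hγ0 hB hBA
  have hhalf : (A/2) ^ (-(lam+1)) = 2 ^ (lam+1) * A ^ (-(lam+1)) := half_rpow A (lam+1) hA.le
  have hAPpos : 0 ≤ A ^ (-(lam+1)) * (A-B) ^ (-(γ-lam-1)) := by positivity
  have esplitP : (A-B) ^ (-γ) = (A-B) ^ (-(lam+1)) * (A-B) ^ (-(γ-lam-1)) := by
    rw [← Real.rpow_add hP]; congr 1; ring
  by_cases hB2 : 2*B ≤ A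
  · -- case B small
    have hP2 : A/2 ≤ A - B := by linarith
    have hmono : (∫ s in Ioc (0:ℝ) 1, ((A-B) + B*(1-s)) ^ (-γ) * (1-s) ^ lam)
        ≤ ∫ s in Ioc (0:ℝ) 1, (A-B) ^ (-γ) * (1-s) ^ lam := by
      apply setIntegral_mono_on hHint (((intervalIntegrable_iff_integrableOn_Ioc_of_le
        (by norm_num : (0:ℝ) ≤ 1)).mp (ii_one_sub lam 0 hlam)).const_mul _) measurableSet_Ioc
      intro s hs
      obtain ⟨h1, h2⟩ := hs
      have h1s : (0:ℝ) ≤ 1 - s := by linarith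
      exact mul_le_mul_of_nonneg_right
        (rpow_anti hP (by nlinarith) hγ0) (Real.rpow_nonneg h1s _)
    have hval : (∫ s in Ioc (0:ℝ) 1, (A-B) ^ (-γ) * (1-s) ^ lam)
        = (A-B) ^ (-γ) * (1/(lam+1)) := by
      rw [MeasureTheory.integral_const_mul, int_one_sub lam 0 hlam (by norm_num)]
      norm_num
    have halg : (A-B) ^ (-γ) * (1/(lam+1))
        ≤ ((2:ℝ) ^ (lam+1) * (1/(lam+1) + 1/(γ-lam-1)))
          * (A ^ (-(lam+1)) * (A-B) ^ (-(γ-lam-1))) := by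
      calc (A-B) ^ (-γ) * (1/(lam+1))
          = ((A-B) ^ (-(lam+1)) * (A-B) ^ (-(γ-lam-1))) * (1/(lam+1)) := by rw [esplitP]
        _ ≤ (((2:ℝ) ^ (lam+1) * A ^ (-(lam+1))) * (A-B) ^ (-(γ-lam-1))) * (1/(lam+1)) := by
            apply mul_le_mul_of_nonneg_right _ (by positivity)
            exact mul_le_mul_of_nonneg_right
              (le_trans (rpow_anti hA2 hP2 hl1.le) (le_of_eq hhalf))
              (Real.rpow_nonneg hP.le _)
        _ = ((2:ℝ) ^ (lam+1) * (1/(lam+1))) * (A ^ (-(lam+1)) * (A-B) ^ (-(γ-lam-1))) := by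
            ring
        _ ≤ ((2:ℝ) ^ (lam+1) * (1/(lam+1) + 1/(γ-lam-1)))
              * (A ^ (-(lam+1)) * (A-B) ^ (-(γ-lam-1))) := by
            apply mul_le_mul_of_nonneg_right _ hAPpos
            have h2p : (0:ℝ) < (2:ℝ) ^ (lam+1) := by positivity
            have hinv : (0:ℝ) < 1/(γ-lam-1) := by positivity
            nlinarith
    exact le_trans hmono (le_trans (le_of_eq hval) halg)
  · -- case B large
    push_neg at hB2
    have hBpos : 0 < B := by linarith
    have hP2 : A/2 ≤ B := by linarith
    set t1 : ℝ := (A-B)/B with ht1def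
    have ht1pos : 0 < t1 := div_pos hP hBpos
    have ht1lt : t1 < 1 := (div_lt_one hBpos).2 (by linarith)
    have hb0 : (0:ℝ) ≤ 1 - t1 := by linarith
    have hb1 : 1 - t1 < 1 := by linarith
    have hsuba : Ioc (0:ℝ) (1-t1) ⊆ Ioc (0:ℝ) 1 := Ioc_subset_Ioc le_rfl (by linarith)
    have hsubb : Ioc (1-t1) 1 ⊆ Ioc (0:ℝ) 1 := Ioc_subset_Ioc (by linarith) le_rfl
    have hdisj : Disjoint (Ioc (0:ℝ) (1-t1)) (Ioc (1-t1) 1) := by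
      rw [Set.disjoint_left]; rintro x ⟨_, h2⟩ ⟨h3, _⟩; linarith
    have hsplit : (∫ s in Ioc (0:ℝ) 1, ((A-B) + B*(1-s)) ^ (-γ) * (1-s) ^ lam)
        = (∫ s in Ioc (0:ℝ) (1-t1), ((A-B) + B*(1-s)) ^ (-γ) * (1-s) ^ lam)
          + ∫ s in Ioc (1-t1) 1, ((A-B) + B*(1-s)) ^ (-γ) * (1-s) ^ lam := by
      rw [← MeasureTheory.setIntegral_union hdisj measurableSet_Ioc (hHint.mono_set hsuba)
        (hHint.mono_set hsubb), Ioc_union_Ioc_eq_Ioc hb0 (by linarith)]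
    have hBlow : B ^ (-(lam+1)) ≤ (2:ℝ) ^ (lam+1) * A ^ (-(lam+1)) :=
      le_trans (rpow_anti hA2 hP2 hl1.le) (le_of_eq hhalf)
    have hBnn : (0:ℝ) ≤ B ^ (-γ) := Real.rpow_nonneg hBpos.le _
    -- piece a
    have Ja : (∫ s in Ioc (0:ℝ) (1-t1), ((A-B) + B*(1-s)) ^ (-γ) * (1-s) ^ lam)
        ≤ ((2:ℝ) ^ (lam+1) * (1/(γ-lam-1))) * (A ^ (-(lam+1)) * (A-B) ^ (-(γ-lam-1))) := by
      have hmono : (∫ s in Ioc (0:ℝ) (1-t1), ((A-B) + B*(1-s)) ^ (-γ) * (1-s) ^ lam)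
          ≤ ∫ s in Ioc (0:ℝ) (1-t1), B ^ (-γ) * (1-s) ^ (lam-γ) := by
        apply setIntegral_mono_on (hHint.mono_set hsuba)
          (((intervalIntegrable_iff_integrableOn_Ioc_of_le hb0).mp
            (ii_one_sub' (lam-γ) (1-t1) hb1)).const_mul _) measurableSet_Ioc
        intro s hs
        obtain ⟨h1, h2⟩ := hs
        have hpos1s : 0 < 1 - s := by linarith
        calc ((A-B) + B*(1-s)) ^ (-γ) * (1-s) ^ lam
            ≤ (B*(1-s)) ^ (-γ) * (1-s) ^ lam :=
              mul_le_mul_of_nonneg_right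
                (rpow_anti (mul_pos hBpos hpos1s) (by nlinarith) hγ0)
                (Real.rpow_nonneg hpos1s.le _)
          _ = B ^ (-γ) * (1-s) ^ (lam-γ) := by
              rw [Real.mul_rpow hBpos.le hpos1s.le, mul_assoc,
                ← Real.rpow_add hpos1s, show -γ + lam = lam - γ by ring]
      have hval : (∫ s in Ioc (0:ℝ) (1-t1), B ^ (-γ) * (1-s) ^ (lam-γ))
          ≤ B ^ (-γ) * (t1 ^ (lam-γ+1) / (γ-lam-1)) := by
        rw [MeasureTheory.integral_const_mul]
        apply mul_le_mul_of_nonneg_left _ hBnn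
        have h := int_one_sub' (lam-γ) (1-t1) (by linarith) hb0 hb1
        rw [show (1:ℝ) - (1-t1) = t1 by ring, show -(lam-γ+1) = γ-lam-1 by ring] at h
        exact h
      have halg : B ^ (-γ) * (t1 ^ (lam-γ+1) / (γ-lam-1))
          ≤ ((2:ℝ) ^ (lam+1) * (1/(γ-lam-1))) * (A ^ (-(lam+1)) * (A-B) ^ (-(γ-lam-1))) := by
        have e1 : t1 ^ (lam-γ+1) = (A-B) ^ (lam-γ+1) * B ^ (-(lam-γ+1)) := by
          rw [ht1def]; exact div_rpow_neg (A-B) B (lam-γ+1) hP.le hBpos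
        have e2 : B ^ (-γ) * B ^ (-(lam-γ+1)) = B ^ (-(lam+1)) := by
          rw [← Real.rpow_add hBpos]; congr 1; ring
        have e3 : (A-B) ^ (lam-γ+1) = (A-B) ^ (-(γ-lam-1)) := by
          congr 1; ring
        calc B ^ (-γ) * (t1 ^ (lam-γ+1) / (γ-lam-1))
            = (B ^ (-γ) * B ^ (-(lam-γ+1))) * (A-B) ^ (-(γ-lam-1)) * (1/(γ-lam-1)) := by
              rw [e1, e3]; ring
          _ = B ^ (-(lam+1)) * (A-B) ^ (-(γ-lam-1)) * (1/(γ-lam-1)) := by rw [e2]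
          _ ≤ ((2:ℝ) ^ (lam+1) * A ^ (-(lam+1))) * (A-B) ^ (-(γ-lam-1)) * (1/(γ-lam-1)) := by
              apply mul_le_mul_of_nonneg_right _ (by positivity)
              exact mul_le_mul_of_nonneg_right hBlow (Real.rpow_nonneg hP.le _)
          _ = ((2:ℝ) ^ (lam+1) * (1/(γ-lam-1))) * (A ^ (-(lam+1)) * (A-B) ^ (-(γ-lam-1))) := by
              ring
      exact le_trans hmono (le_trans hval halg)
    -- piece b
    have Jb : (∫ s in Ioc (1-t1) 1, ((A-B) + B*(1-s)) ^ (-γ) * (1-s) ^ lam)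
        ≤ ((2:ℝ) ^ (lam+1) * (1/(lam+1))) * (A ^ (-(lam+1)) * (A-B) ^ (-(γ-lam-1))) := by
      have hmono : (∫ s in Ioc (1-t1) 1, ((A-B) + B*(1-s)) ^ (-γ) * (1-s) ^ lam)
          ≤ ∫ s in Ioc (1-t1) 1, (A-B) ^ (-γ) * (1-s) ^ lam := by
        apply setIntegral_mono_on (hHint.mono_set hsubb)
          (((intervalIntegrable_iff_integrableOn_Ioc_of_le (by linarith : 1-t1 ≤ 1)).mp
            (ii_one_sub lam (1-t1) hlam)).const_mul _) measurableSet_Ioc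
        intro s hs
        obtain ⟨h1, h2⟩ := hs
        have h1s : (0:ℝ) ≤ 1 - s := by linarith
        exact mul_le_mul_of_nonneg_right
          (rpow_anti hP (by nlinarith) hγ0) (Real.rpow_nonneg h1s _)
      have hval : (∫ s in Ioc (1-t1) 1, (A-B) ^ (-γ) * (1-s) ^ lam)
          = (A-B) ^ (-γ) * (t1 ^ (lam+1) / (lam+1)) := by
        rw [MeasureTheory.integral_const_mul, int_one_sub lam (1-t1) hlam (by linarith),
          show (1:ℝ) - (1-t1) = t1 by ring]
      have halg : (A-B) ^ (-γ) * (t1 ^ (lam+1) / (lam+1))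
          ≤ ((2:ℝ) ^ (lam+1) * (1/(lam+1))) * (A ^ (-(lam+1)) * (A-B) ^ (-(γ-lam-1))) := by
        have e1 : t1 ^ (lam+1) = (A-B) ^ (lam+1) * B ^ (-(lam+1)) := by
          rw [ht1def]; exact div_rpow_neg (A-B) B (lam+1) hP.le hBpos
        have e2 : (A-B) ^ (-γ) * (A-B) ^ (lam+1) = (A-B) ^ (-(γ-lam-1)) := by
          rw [← Real.rpow_add hP]; congr 1; ring
        calc (A-B) ^ (-γ) * (t1 ^ (lam+1) / (lam+1))
            = ((A-B) ^ (-γ) * (A-B) ^ (lam+1)) * B ^ (-(lam+1)) * (1/(lam+1)) := by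
              rw [e1]; ring
          _ = (A-B) ^ (-(γ-lam-1)) * B ^ (-(lam+1)) * (1/(lam+1)) := by rw [e2]
          _ ≤ (A-B) ^ (-(γ-lam-1)) * ((2:ℝ) ^ (lam+1) * A ^ (-(lam+1))) * (1/(lam+1)) := by
              apply mul_le_mul_of_nonneg_right _ (by positivity)
              exact mul_le_mul_of_nonneg_left hBlow (Real.rpow_nonneg hP.le _)
          _ = ((2:ℝ) ^ (lam+1) * (1/(lam+1))) * (A ^ (-(lam+1)) * (A-B) ^ (-(γ-lam-1))) := by
              ring
      exact le_trans hmono (le_trans (le_of_eq hval) halg)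
    calc (∫ s in Ioc (0:ℝ) 1, ((A-B) + B*(1-s)) ^ (-γ) * (1-s) ^ lam)
        = _ + _ := hsplit
      _ ≤ ((2:ℝ) ^ (lam+1) * (1/(γ-lam-1))) * (A ^ (-(lam+1)) * (A-B) ^ (-(γ-lam-1)))
          + ((2:ℝ) ^ (lam+1) * (1/(lam+1))) * (A ^ (-(lam+1)) * (A-B) ^ (-(γ-lam-1))) :=
          add_le_add Ja Jb
      _ = ((2:ℝ) ^ (lam+1) * (1/(lam+1) + 1/(γ-lam-1)))
            * (A ^ (-(lam+1)) * (A-B) ^ (-(γ-lam-1))) := by ring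

set_option maxHeartbeats 1000000 in
lemma upper_est (κ γ lam c0 : ℝ) (hκ : 0 ≤ κ) (hlam : -1 < lam) (hγ : lam + 1 < γ)
    (hc0 : 0 < c0) :
    ∃ C : ℝ, 0 < C ∧ ∀ A B D : ℝ, 0 ≤ B → B < A → A ≤ D →
      (∫ s in Icc (-1:ℝ) 1, ((D - B*s) ^ (-κ) * (A - B*s) ^ (-γ)) * (c0 * (1 - s^2) ^ lam))
        ≤ C * ((D-B) ^ (-κ) * A ^ (-(lam+1)) * (A-B) ^ (-(γ-lam-1))) := by
  have hγ0 : 0 ≤ γ := by linarith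
  have hl1 : (0:ℝ) < lam + 1 := by linarith
  have hgl : (0:ℝ) < γ - lam - 1 := by linarith
  set K : ℝ := ∫ s in Icc (-1:ℝ) 1, (1 - s^2) ^ lam with hKdef
  have hK : 0 ≤ K := setIntegral_nonneg measurableSet_Icc
    (fun s hs => Real.rpow_nonneg (by obtain ⟨h1, h2⟩ := hs; nlinarith) _)
  set m : ℝ := max ((2:ℝ) ^ lam) 1 with hmdef
  have hm : 0 < m := lt_of_lt_of_le one_pos (le_max_right _ _)
  set R0 : ℝ := (2:ℝ) ^ (lam+1) * (1/(lam+1) + 1/(γ-lam-1)) with hR0def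
  have hR0 : 0 < R0 := by positivity
  refine ⟨c0 * (K + m * R0), by positivity, fun A B D hB hBA hAD => ?_⟩
  have hP : 0 < A - B := by linarith
  have hA : 0 < A := by linarith
  have hQ : 0 < D - B := by linarith
  set X : ℝ := (D-B) ^ (-κ) * A ^ (-(lam+1)) * (A-B) ^ (-(γ-lam-1)) with hXdef
  have hX : 0 ≤ X := by positivity
  have hFint := F_integrable κ γ lam c0 A B D hκ hγ0 hc0 hlam hB hBA hAD
  have hsub1 : Icc (-1:ℝ) 0 ⊆ Icc (-1:ℝ) 1 := Icc_subset_Icc le_rfl (by norm_num)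
  have hsub2 : Ioc (0:ℝ) 1 ⊆ Icc (-1:ℝ) 1 := fun s hs => ⟨by linarith [hs.1], hs.2⟩
  have hdisj : Disjoint (Icc (-1:ℝ) 0) (Ioc (0:ℝ) 1) := by
    rw [Set.disjoint_left]; rintro x ⟨_, h2⟩ ⟨h3, _⟩; linarith
  have hsplit : (∫ s in Icc (-1:ℝ) 1,
        ((D - B*s) ^ (-κ) * (A - B*s) ^ (-γ)) * (c0 * (1 - s^2) ^ lam))
      = (∫ s in Icc (-1:ℝ) 0,
        ((D - B*s) ^ (-κ) * (A - B*s) ^ (-γ)) * (c0 * (1 - s^2) ^ lam))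
      + ∫ s in Ioc (0:ℝ) 1,
        ((D - B*s) ^ (-κ) * (A - B*s) ^ (-γ)) * (c0 * (1 - s^2) ^ lam) := by
    rw [← MeasureTheory.setIntegral_union hdisj measurableSet_Ioc (hFint.mono_set hsub1)
      (hFint.mono_set hsub2), Icc_union_Ioc_eq_Icc (by norm_num) (by norm_num)]
  -- Piece 1
  have piece1 : (∫ s in Icc (-1:ℝ) 0,
        ((D - B*s) ^ (-κ) * (A - B*s) ^ (-γ)) * (c0 * (1 - s^2) ^ lam))
      ≤ c0 * K * X := by
    have hmono : (∫ s in Icc (-1:ℝ) 0,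
          ((D - B*s) ^ (-κ) * (A - B*s) ^ (-γ)) * (c0 * (1 - s^2) ^ lam))
        ≤ ∫ s in Icc (-1:ℝ) 0, ((D-B) ^ (-κ) * A ^ (-γ) * c0) * (1 - s^2) ^ lam := by
      apply setIntegral_mono_on (hFint.mono_set hsub1)
        (((base_int lam hlam).mono_set hsub1).const_mul _) measurableSet_Icc
      intro s hs
      obtain ⟨h1, h2⟩ := hs
      have hBs : B * s ≤ 0 := mul_nonpos_of_nonneg_of_nonpos hB h2
      have hbase : (0:ℝ) ≤ 1 - s^2 := by nlinarith
      calc ((D - B*s) ^ (-κ) * (A - B*s) ^ (-γ)) * (c0 * (1 - s^2) ^ lam)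
          ≤ ((D-B) ^ (-κ) * A ^ (-γ)) * (c0 * (1 - s^2) ^ lam) := by
            apply mul_le_mul_of_nonneg_right _ (by positivity)
            exact mul_le_mul (rpow_anti hQ (by nlinarith) hκ) (rpow_anti hA (by linarith) hγ0)
              (Real.rpow_nonneg (by nlinarith) _) (Real.rpow_nonneg hQ.le _)
        _ = ((D-B) ^ (-κ) * A ^ (-γ) * c0) * (1 - s^2) ^ lam := by ring
    have hmono2 : (∫ s in Icc (-1:ℝ) 0, ((D-B) ^ (-κ) * A ^ (-γ) * c0) * (1 - s^2) ^ lam)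
        ≤ ∫ s in Icc (-1:ℝ) 1, ((D-B) ^ (-κ) * A ^ (-γ) * c0) * (1 - s^2) ^ lam := by
      apply setIntegral_mono_set ((base_int lam hlam).const_mul _)
      · filter_upwards [ae_restrict_mem measurableSet_Icc] with s hs
        obtain ⟨h1, h2⟩ := hs
        have hbase : (0:ℝ) ≤ 1 - s^2 := by nlinarith
        positivity
      · exact HasSubset.Subset.eventuallyLE hsub1
    have hval : (∫ s in Icc (-1:ℝ) 1, ((D-B) ^ (-κ) * A ^ (-γ) * c0) * (1 - s^2) ^ lam)
        = ((D-B) ^ (-κ) * A ^ (-γ) * c0) * K := by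
      rw [MeasureTheory.integral_const_mul]
    have halg : ((D-B) ^ (-κ) * A ^ (-γ) * c0) * K ≤ c0 * K * X := by
      have e1 : A ^ (-γ) = A ^ (-(lam+1)) * A ^ (-(γ-lam-1)) := by
        rw [← Real.rpow_add hA]; congr 1; ring
      have e2 : A ^ (-(γ-lam-1)) ≤ (A-B) ^ (-(γ-lam-1)) :=
        rpow_anti hP (by linarith) hgl.le
      rw [hXdef, e1]
      calc (D-B) ^ (-κ) * (A ^ (-(lam+1)) * A ^ (-(γ-lam-1))) * c0 * K
          ≤ (D-B) ^ (-κ) * (A ^ (-(lam+1)) * (A-B) ^ (-(γ-lam-1))) * c0 * K := by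
            apply mul_le_mul_of_nonneg_right _ hK
            apply mul_le_mul_of_nonneg_right _ hc0.le
            apply mul_le_mul_of_nonneg_left _ (Real.rpow_nonneg hQ.le _)
            exact mul_le_mul_of_nonneg_left e2 (Real.rpow_nonneg hA.le _)
        _ = c0 * K * ((D-B) ^ (-κ) * A ^ (-(lam+1)) * (A-B) ^ (-(γ-lam-1))) := by ring
    exact le_trans hmono (le_trans hmono2 (le_of_eq hval |>.trans halg))
  -- Piece 2
  have piece2 : (∫ s in Ioc (0:ℝ) 1,
        ((D - B*s) ^ (-κ) * (A - B*s) ^ (-γ)) * (c0 * (1 - s^2) ^ lam))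
      ≤ c0 * (m * R0) * X := by
    have hHint := H_int γ lam A B hlam hγ0 hB hBA
    have hstep : (∫ s in Ioc (0:ℝ) 1,
          ((D - B*s) ^ (-κ) * (A - B*s) ^ (-γ)) * (c0 * (1 - s^2) ^ lam))
        ≤ ∫ s in Ioc (0:ℝ) 1,
          ((D-B) ^ (-κ) * c0 * m) * (((A-B) + B*(1-s)) ^ (-γ) * (1-s) ^ lam) := by
      apply setIntegral_mono_on (hFint.mono_set hsub2) (hHint.const_mul _) measurableSet_Ioc
      intro s hs
      obtain ⟨h1, h2⟩ := hs
      have h1s : (0:ℝ) ≤ 1 - s := by linarith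
      have h0s : (0:ℝ) ≤ s := h1.le
      have hQs : 0 < D - B * s := by nlinarith
      have hABs : A - B * s = (A-B) + B*(1-s) := by ring
      have hPs : 0 < (A-B) + B*(1-s) := by nlinarith
      calc ((D - B*s) ^ (-κ) * (A - B*s) ^ (-γ)) * (c0 * (1 - s^2) ^ lam)
          = ((D - B*s) ^ (-κ) * (1+s) ^ lam)
              * (c0 * (((A-B) + B*(1-s)) ^ (-γ) * (1-s) ^ lam)) := by
            rw [base_split lam s (by linarith) h2, hABs]; ring
        _ ≤ ((D-B) ^ (-κ) * m)
              * (c0 * (((A-B) + B*(1-s)) ^ (-γ) * (1-s) ^ lam)) := by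
            apply mul_le_mul_of_nonneg_right
            · exact mul_le_mul (rpow_anti hQ (by nlinarith) hκ) (one_add_ub lam s h0s h2)
                (Real.rpow_nonneg (by linarith) _) (Real.rpow_nonneg hQ.le _)
            · exact mul_nonneg hc0.le
                (mul_nonneg (Real.rpow_nonneg hPs.le _) (Real.rpow_nonneg h1s _))
        _ = ((D-B) ^ (-κ) * c0 * m) * (((A-B) + B*(1-s)) ^ (-γ) * (1-s) ^ lam) := by ring
    have hfac : (∫ s in Ioc (0:ℝ) 1,
          ((D-B) ^ (-κ) * c0 * m) * (((A-B) + B*(1-s)) ^ (-γ) * (1-s) ^ lam))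
        = ((D-B) ^ (-κ) * c0 * m)
          * ∫ s in Ioc (0:ℝ) 1, ((A-B) + B*(1-s)) ^ (-γ) * (1-s) ^ lam :=
      MeasureTheory.integral_const_mul _ _
    have hJH := JH_est γ lam A B hlam hγ hB hBA
    calc (∫ s in Ioc (0:ℝ) 1,
          ((D - B*s) ^ (-κ) * (A - B*s) ^ (-γ)) * (c0 * (1 - s^2) ^ lam))
        ≤ ((D-B) ^ (-κ) * c0 * m)
            * ∫ s in Ioc (0:ℝ) 1, ((A-B) + B*(1-s)) ^ (-γ) * (1-s) ^ lam := by
          rw [← hfac]; exact hstep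
      _ ≤ ((D-B) ^ (-κ) * c0 * m)
            * (R0 * (A ^ (-(lam+1)) * (A-B) ^ (-(γ-lam-1)))) := by
          apply mul_le_mul_of_nonneg_left _ (by positivity)
          rw [hR0def]; exact hJH
      _ = c0 * (m * R0) * X := by rw [hXdef]; ring
  calc _ = _ := hsplit
    _ ≤ c0 * K * X + c0 * (m * R0) * X := add_le_add piece1 piece2
    _ = c0 * (K + m * R0) * X := by ring

lemma density_both (κ γ lam c0 : ℝ) (hκ : 0 ≤ κ) (hlam : -1 < lam) (hγ : lam + 1 < γ)
    (hc0 : 0 < c0) :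
    ∃ c C : ℝ, 0 < c ∧ c ≤ C ∧ ∀ A B D : ℝ, 0 ≤ B → B < A → A ≤ D →
      c * ((D-B) ^ (-κ) * A ^ (-(lam+1)) * (A-B) ^ (-(γ-lam-1)))
        ≤ (∫ s in Icc (-1:ℝ) 1, ((D - B*s) ^ (-κ) * (A - B*s) ^ (-γ)) * (c0 * (1 - s^2) ^ lam)) ∧
      (∫ s in Icc (-1:ℝ) 1, ((D - B*s) ^ (-κ) * (A - B*s) ^ (-γ)) * (c0 * (1 - s^2) ^ lam))
        ≤ C * ((D-B) ^ (-κ) * A ^ (-(lam+1)) * (A-B) ^ (-(γ-lam-1))) := by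
  obtain ⟨c, hc, hlow⟩ := lower_est κ γ lam c0 hκ hlam hγ hc0
  obtain ⟨C, hC, hup⟩ := upper_est κ γ lam c0 hκ hlam hγ hc0
  refine ⟨min c C, max c C, lt_min hc hC, (min_le_left _ _).trans (le_max_left _ _),
    fun A B D h1 h2 h3 => ?_⟩
  have hX : 0 ≤ (D-B) ^ (-κ) * A ^ (-(lam+1)) * (A-B) ^ (-(γ-lam-1)) :=
    mul_nonneg (mul_nonneg (Real.rpow_nonneg (by linarith) _)
      (Real.rpow_nonneg (by linarith) _)) (Real.rpow_nonneg (by linarith) _)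
  exact ⟨le_trans (mul_le_mul_of_nonneg_right (min_le_left _ _) hX) (hlow A B D h1 h2 h3),
    le_trans (hup A B D h1 h2 h3) (mul_le_mul_of_nonneg_right (le_max_right _ _) hX)⟩

lemma PiMeas_integral (ν : ℝ) (hne : ¬ ν = -(1/2))
    (hc0 : 0 ≤ Real.Gamma (ν + 1) / (Real.sqrt π * Real.Gamma (ν + 1/2))) (f : ℝ → ℝ) :
    (∫ s, f s ∂(PiMeas ν)) = ∫ s in Icc (-1:ℝ) 1,
      f s * (Real.Gamma (ν + 1) / (Real.sqrt π * Real.Gamma (ν + 1/2))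
        * (1 - s^2) ^ (ν - 1/2)) := by
  rw [PiMeas, if_neg hne]
  have hcast : (fun u : ℝ => ENNReal.ofReal
      (Real.Gamma (ν + 1) / (Real.sqrt π * Real.Gamma (ν + 1/2)) * (1 - u^2) ^ (ν - 1/2)))
      = fun u : ℝ => ((Real.Gamma (ν + 1) / (Real.sqrt π * Real.Gamma (ν + 1/2))
          * (1 - u^2) ^ (ν - 1/2)).toNNReal : ℝ≥0∞) := rfl
  have hgm : Measurable fun u : ℝ => (Real.Gamma (ν + 1) / (Real.sqrt π * Real.Gamma (ν + 1/2))
      * (1 - u^2) ^ (ν - 1/2)).toNNReal := by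
    apply Measurable.real_toNNReal; fun_prop
  rw [hcast, integral_withDensity_eq_integral_smul hgm f]
  apply setIntegral_congr_fun measurableSet_Icc
  intro u hu
  obtain ⟨h1, h2⟩ := hu
  have hnn : 0 ≤ Real.Gamma (ν + 1) / (Real.sqrt π * Real.Gamma (ν + 1/2))
      * (1 - u^2) ^ (ν - 1/2) :=
    mul_nonneg hc0 (Real.rpow_nonneg (by nlinarith) _)
  simp only [NNReal.smul_def, Real.coe_toNNReal _ hnn, smul_eq_mul]
  ring

theorem intest_two_sided (κ γ ν : ℝ) (hκ : 0 ≤ κ) (hν : 0 ≤ ν + 1/2) (hγ : ν + 1/2 < γ) :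
    ∃ c C : ℝ, 0 < c ∧ c ≤ C ∧ ∀ A B D : ℝ, 0 ≤ B → B < A → A ≤ D →
      c * ((D - B) ^ (-κ) * A ^ (-(ν + 1/2)) * (A - B) ^ (-(γ - ν - 1/2)))
        ≤ ∫ s, (D - B * s) ^ (-κ) * (A - B * s) ^ (-γ) ∂(PiMeas ν) ∧
      (∫ s, (D - B * s) ^ (-κ) * (A - B * s) ^ (-γ) ∂(PiMeas ν))
        ≤ C * ((D - B) ^ (-κ) * A ^ (-(ν + 1/2)) * (A - B) ^ (-(γ - ν - 1/2))) := by
  by_cases hne : ν = -(1/2)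
  · -- Dirac case
    subst hne
    have hγ0 : 0 ≤ γ := by
      have : -(1/2) + 1/2 < γ := hγ
      linarith
    refine ⟨1/2, 1, by norm_num, by norm_num, fun A B D h1 h2 h3 => ?_⟩
    have hP : 0 < A - B := by linarith
    have hQ : 0 < D - B := by linarith
    have hPi : PiMeas (-(1/2)) = (2⁻¹ : ℝ≥0∞) • (Measure.dirac (-1) + Measure.dirac 1) := by
      rw [PiMeas, if_pos rfl]
    have hf : Measurable fun s : ℝ => (D - B * s) ^ (-κ) * (A - B * s) ^ (-γ) := by fun_prop
    have hint : ∀ a : ℝ, Integrable (fun s : ℝ => (D - B * s) ^ (-κ) * (A - B * s) ^ (-γ))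
        (Measure.dirac a) := fun a => by
      refine ⟨hf.aestronglyMeasurable, ?_⟩
      rw [HasFiniteIntegral, lintegral_dirac]
      exact ENNReal.coe_lt_top
    have hval : (∫ s, (D - B * s) ^ (-κ) * (A - B * s) ^ (-γ) ∂(PiMeas (-(1/2))))
        = 2⁻¹ * ((D - B * (-1)) ^ (-κ) * (A - B * (-1)) ^ (-γ)
            + (D - B * 1) ^ (-κ) * (A - B * 1) ^ (-γ)) := by
      rw [hPi, integral_smul_measure, integral_add_measure (hint _) (hint _),
        integral_dirac, integral_dirac]
      norm_num
    have hf1 : (D - B * 1) ^ (-κ) * (A - B * 1) ^ (-γ) = (D - B) ^ (-κ) * (A - B) ^ (-γ) := by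
      norm_num
    have hfm : 0 ≤ (D - B * (-1)) ^ (-κ) * (A - B * (-1)) ^ (-γ) :=
      mul_nonneg (Real.rpow_nonneg (by linarith) _) (Real.rpow_nonneg (by linarith) _)
    have hfm2 : (D - B * (-1)) ^ (-κ) * (A - B * (-1)) ^ (-γ)
        ≤ (D - B) ^ (-κ) * (A - B) ^ (-γ) := by
      apply mul_le_mul (rpow_anti hQ (by linarith) hκ) (rpow_anti hP (by linarith) hγ0)
        (Real.rpow_nonneg (by linarith) _) (Real.rpow_nonneg hQ.le _)
    have hexp1 : -(-(1/2) + 1/2) = (0:ℝ) := by norm_num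
    have hexp2 : γ - -(1/2) - 1/2 = γ := by ring
    rw [hval, hexp1, hexp2, Real.rpow_zero]
    have hXnn : 0 ≤ (D - B) ^ (-κ) * (A - B) ^ (-γ) :=
      mul_nonneg (Real.rpow_nonneg hQ.le _) (Real.rpow_nonneg hP.le _)
    constructor
    · rw [hf1]; nlinarith
    · rw [hf1]; nlinarith
  · -- density case
    have hν' : 0 < ν + 1/2 := by
      rcases lt_or_eq_of_le hν with h | h
      · exact h
      · exact absurd (by linarith : ν = -(1/2)) hne
    have hc0 : 0 < Real.Gamma (ν + 1) / (Real.sqrt π * Real.Gamma (ν + 1/2)) :=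
      div_pos (Real.Gamma_pos_of_pos (by linarith))
        (mul_pos (Real.sqrt_pos.2 Real.pi_pos) (Real.Gamma_pos_of_pos (by linarith)))
    obtain ⟨c, C, hc, hcC, h⟩ := density_both κ γ (ν - 1/2)
      (Real.Gamma (ν + 1) / (Real.sqrt π * Real.Gamma (ν + 1/2))) hκ
      (by linarith) (by linarith) hc0
    refine ⟨c, C, hc, hcC, fun A B D h1 h2 h3 => ?_⟩
    obtain ⟨L, U⟩ := h A B D h1 h2 h3
    rw [PiMeas_integral ν hne hc0.le (fun s => (D - B * s) ^ (-κ) * (A - B * s) ^ (-γ)),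
      show -(ν + 1/2) = -(ν - 1/2 + 1) by ring,
      show γ - ν - 1/2 = γ - (ν - 1/2) - 1 by ring]
    exact ⟨L, U⟩
end

section
/- Let κ ≥ 0 and let γ, ν satisfy γ > ν + 1/2 ≥ 0. Then there exists a constant C (depending only on κ, γ, ν) such that for all 0 ≤ B < A: ∫_{[-1,1]} (A−Bs)^{-γ} dΠ_{ν+κ}(s) ≤ C · A^{-(ν+1/2)} (A−B)^{-(γ−ν−1/2)}. -/
open MeasureTheory Real Set
open scoped ENNReal Classical

lemma lint_pow_Ioo {s t₀ : ℝ} (hs : -1 < s) (ht : 0 < t₀) :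
    ∫⁻ x in Ioo (0:ℝ) t₀, ENNReal.ofReal (x ^ s) ≤ ENNReal.ofReal (t₀ ^ (s+1) / (s+1)) := by
  have hint : IntegrableOn (fun x : ℝ => x ^ s) (Ioo 0 t₀) := by
    have h := (intervalIntegral.intervalIntegrable_rpow' (a := 0) (b := t₀) hs)
    rw [intervalIntegrable_iff_integrableOn_Ioc_of_le ht.le] at h
    exact h.mono_set Ioo_subset_Ioc_self
  have hnn : 0 ≤ᵐ[volume.restrict (Ioo (0:ℝ) t₀)] fun x : ℝ => x ^ s := by
    filter_upwards [ae_restrict_mem measurableSet_Ioo] with x hx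
    exact Real.rpow_nonneg hx.1.le s
  rw [← ofReal_integral_eq_lintegral_ofReal hint hnn]
  apply ENNReal.ofReal_le_ofReal
  have hval : ∫ x in Ioo (0:ℝ) t₀, x ^ s = (t₀ ^ (s+1) - 0 ^ (s+1)) / (s+1) := by
    rw [← integral_Ioc_eq_integral_Ioo, ← intervalIntegral.integral_of_le ht.le]
    exact integral_rpow (Or.inl hs)
  rw [hval, Real.zero_rpow (by linarith : s + 1 ≠ 0)]
  simp

lemma lint_pow_Ioi {r t₀ : ℝ} (hr : r < -1) (ht : 0 < t₀) :
    ∫⁻ x in Ioi t₀, ENNReal.ofReal (x ^ r) ≤ ENNReal.ofReal (t₀ ^ (r+1) / (-(r+1))) := by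
  have hint := integrableOn_Ioi_rpow_of_lt hr ht
  have hnn : 0 ≤ᵐ[volume.restrict (Ioi t₀)] fun x : ℝ => x ^ r := by
    filter_upwards [ae_restrict_mem measurableSet_Ioi] with x hx
    exact Real.rpow_nonneg (ht.trans hx).le r
  rw [← ofReal_integral_eq_lintegral_ofReal hint hnn]
  apply ENNReal.ofReal_le_ofReal
  rw [integral_Ioi_rpow_of_lt hr ht]
  rw [div_neg, neg_div]

lemma lint_comp_one_sub (g : ℝ → ℝ≥0∞) (S : Set ℝ) :
    ∫⁻ u in (fun x : ℝ => 1 - x) ⁻¹' S, g (1 - u) = ∫⁻ x in S, g x := by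
  have hemb : MeasurableEmbedding (fun x : ℝ => 1 - x) :=
    (MeasurableEquiv.subLeft (1:ℝ)).measurableEmbedding
  exact (Measure.measurePreserving_sub_left volume 1).setLIntegral_comp_preimage_emb hemb g S

lemma lint_comp_add_one (g : ℝ → ℝ≥0∞) (S : Set ℝ) :
    ∫⁻ u in (fun x : ℝ => x + 1) ⁻¹' S, g (u + 1) = ∫⁻ x in S, g x := by
  have hemb : MeasurableEmbedding (fun x : ℝ => x + 1) :=
    (MeasurableEquiv.addRight (1:ℝ)).measurableEmbedding
  exact (measurePreserving_add_right volume 1).setLIntegral_comp_preimage_emb hemb g S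
open MeasureTheory Real Set
open scoped ENNReal Classical

set_option maxHeartbeats 2000000 in
theorem intest_upper (κ γ ν : ℝ) (hκ : 0 ≤ κ) (hν : 0 ≤ ν + 1/2) (hγ : ν + 1/2 < γ) :
    ∃ C : ℝ, 0 < C ∧ ∀ A B : ℝ, 0 ≤ B → B < A →
      (∫ s, (A - B * s) ^ (-γ) ∂(PiMeas (ν + κ)))
        ≤ C * (A ^ (-(ν + 1/2)) * (A - B) ^ (-(γ - ν - 1/2))) := by
  have hγ0 : 0 < γ := by linarith
  rw [show γ - ν - 1/2 = γ - (ν + 1/2) from by ring]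
  by_cases hD : ν + κ = -(1/2)
  · -- Dirac case: ν = -1/2, κ = 0
    have hν0 : ν + 1/2 = 0 := le_antisymm (by linarith) hν
    refine ⟨1, one_pos, fun A B hB hAB => ?_⟩
    have hA : 0 < A := hB.trans_lt hAB
    have hε : 0 < A - B := by linarith
    have hfm : Measurable fun u : ℝ => (A - B * u) ^ (-γ) :=
      (measurable_const.sub (measurable_id.const_mul B)).pow measurable_const
    have hint : ∀ a : ℝ, Integrable (fun u : ℝ => (A - B * u) ^ (-γ)) (Measure.dirac a) := by
      intro a
      refine ⟨hfm.aestronglyMeasurable, ?_⟩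
      simp [HasFiniteIntegral, lintegral_dirac]
    unfold PiMeas
    rw [if_pos hD, integral_smul_measure, integral_add_measure (hint _) (hint _),
        integral_dirac, integral_dirac]
    have h1 : (A - B * (-1)) ^ (-γ) ≤ (A - B) ^ (-γ) :=
      Real.rpow_le_rpow_of_nonpos hε (by linarith) (by linarith)
    have h2 : (A - B * 1) ^ (-γ) = (A - B) ^ (-γ) := by norm_num
    have hRHS : A ^ (-(ν + 1/2)) * (A - B) ^ (-(γ - (ν + 1/2))) = (A - B) ^ (-γ) := by
      rw [hν0, neg_zero, Real.rpow_zero, one_mul, sub_zero]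
    rw [one_mul, hRHS, h2]
    have hpos : 0 ≤ (A - B) ^ (-γ) := Real.rpow_nonneg hε.le _
    simp only [smul_eq_mul, ENNReal.toReal_inv, ENNReal.toReal_ofNat]
    linarith
  · -- continuous case
    set ρ := ν + 1/2 with hρ_def
    clear_value ρ
    have hμ : -(1/2) < ν + κ := lt_of_le_of_ne (by linarith) (Ne.symm hD)
    set q := ν + κ - 1/2 with hq_def
    clear_value q
    have hq : -1 < q := by rw [hq_def]; linarith
    set σ := min q ((ρ + γ)/2 - 1) with hσ_def
    clear_value σ
    have hσ1 : -1 < σ := by rw [hσ_def]; exact lt_min hq (by linarith)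
    have hσ2 : σ ≤ q := by rw [hσ_def]; exact min_le_left _ _
    have hσ3 : ρ ≤ σ + 1 := by
      have h1 : ρ ≤ q + 1 := by rw [hq_def, hρ_def]; linarith
      rcases min_cases q ((ρ + γ)/2 - 1) with ⟨h, _⟩ | ⟨h, _⟩ <;> rw [hσ_def, h] <;> linarith
    have hσ4 : σ + 1 < γ := by
      have h2 : σ ≤ (ρ + γ)/2 - 1 := by rw [hσ_def]; exact min_le_right _ _
      linarith
    set σ' := min q 0 with hσ'_def
    clear_value σ'
    have hσ'1 : -1 < σ' := by rw [hσ'_def]; exact lt_min hq (by norm_num)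
    have hσ'2 : σ' ≤ q := by rw [hσ'_def]; exact min_le_left _ _
    have hσ'3 : σ' ≤ 0 := by rw [hσ'_def]; exact min_le_right _ _
    set c := Real.Gamma (ν + κ + 1) / (Real.sqrt π * Real.Gamma (ν + κ + 1/2)) with hc_def
    clear_value c
    have hc : 0 < c := by
      rw [hc_def]
      apply div_pos (Real.Gamma_pos_of_pos (by linarith))
      exact mul_pos (Real.sqrt_pos.2 Real.pi_pos) (Real.Gamma_pos_of_pos (by linarith))
    set Kq := max 1 ((2:ℝ) ^ q) with hKq_def
    clear_value Kq
    have hKq : 0 < Kq := by rw [hKq_def]; exact lt_of_lt_of_le one_pos (le_max_left _ _)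
    have hKx : ∀ x : ℝ, 1 ≤ x → x ≤ 2 → x ^ q ≤ Kq := by
      intro x hx1 hx2
      rw [hKq_def]
      rcases le_or_gt 0 q with h | h
      · exact le_trans (Real.rpow_le_rpow (by linarith) hx2 h) (le_max_right _ _)
      · exact le_trans (Real.rpow_le_one_of_one_le_of_nonpos hx1 h.le) (le_max_left _ _)
    set K2 := c * Kq * (2:ℝ) ^ γ with hK2_def
    clear_value K2
    have hK2 : 0 < K2 := by
      rw [hK2_def]
      exact mul_pos (mul_pos hc hKq) (Real.rpow_pos_of_pos two_pos γ)
    set C1 := c * Kq * ((2:ℝ) ^ (σ' + 1) / (σ' + 1)) with hC1_def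
    clear_value C1
    have hC1 : 0 < C1 := by
      rw [hC1_def]
      apply mul_pos (mul_pos hc hKq)
      exact div_pos (Real.rpow_pos_of_pos two_pos _) (by linarith)
    set C2 := K2 * (2:ℝ) ^ (σ + 1) * (1/(σ + 1) + 1/(γ - σ - 1)) with hC2_def
    clear_value C2
    have hC2 : 0 < C2 := by
      rw [hC2_def]
      apply mul_pos (mul_pos hK2 (Real.rpow_pos_of_pos two_pos _))
      have h1 : 0 < 1/(σ + 1) := by apply div_pos one_pos; linarith
      have h2 : 0 < 1/(γ - σ - 1) := by
        apply div_pos one_pos; linarith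
      linarith
    refine ⟨C1 + C2 + 1, by linarith, fun A B hB hAB => ?_⟩
    have hA : 0 < A := hB.trans_lt hAB
    set ε := A - B with hε_def
    clear_value ε
    have hε : 0 < ε := by rw [hε_def]; linarith
    have hεA : ε ≤ A := by rw [hε_def]; linarith
    set R := A ^ (-ρ) * ε ^ (-(γ - ρ)) with hR_def
    clear_value R
    have hRpos : 0 < R := by
      rw [hR_def]
      exact mul_pos (Real.rpow_pos_of_pos hA _) (Real.rpow_pos_of_pos hε _)
    have hfm : Measurable fun u : ℝ => (A - B * u) ^ (-γ) :=
      (measurable_const.sub (measurable_id.const_mul B)).pow measurable_const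
    have hdm : Measurable fun u : ℝ => ENNReal.ofReal (c * (1 - u ^ 2) ^ q) := by
      apply Measurable.ennreal_ofReal
      exact ((measurable_const.sub (measurable_id.pow measurable_const)).pow
        measurable_const).const_mul c
    -- compare with lintegral
    have hPi_compl : (PiMeas (ν + κ)) (Icc (-1:ℝ) 1)ᶜ = 0 := by
      unfold PiMeas
      rw [if_neg hD, withDensity_apply _ measurableSet_Icc.compl]
      apply setLIntegral_measure_zero
      rw [Measure.restrict_apply measurableSet_Icc.compl, compl_inter_self, measure_empty]
    have hae : ∀ᵐ u ∂(PiMeas (ν + κ)), u ∈ Icc (-1:ℝ) 1 := mem_ae_iff.mpr hPi_compl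
    have hfnn : 0 ≤ᵐ[PiMeas (ν + κ)] fun u : ℝ => (A - B * u) ^ (-γ) := by
      filter_upwards [hae] with u hu
      have : 0 ≤ A - B * u := by nlinarith [hu.1, hu.2]
      exact Real.rpow_nonneg this _
    rw [integral_eq_lintegral_of_nonneg_ae hfnn hfm.aestronglyMeasurable]
    apply ENNReal.toReal_le_of_le_ofReal (by positivity)
    show (∫⁻ u, ENNReal.ofReal ((A - B * u) ^ (-γ)) ∂(PiMeas (ν + κ))) ≤ _
    unfold PiMeas
    rw [if_neg hD, ← hc_def, ← hq_def,
        lintegral_withDensity_eq_lintegral_mul _ hdm hfm.ennreal_ofReal]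
    simp only [Pi.mul_apply]
    have hγρ : 0 ≤ γ - ρ := by linarith
    have hAR : A ^ (-γ) ≤ R := by
      have h1 : A ^ (-γ) = A ^ (-ρ) * A ^ (-(γ - ρ)) := by
        rw [← Real.rpow_add hA]; congr 1; ring
      rw [h1, hR_def]
      refine mul_le_mul_of_nonneg_left ?_ (Real.rpow_nonneg hA.le _)
      exact Real.rpow_le_rpow_of_nonpos hε hεA (by linarith)
    -- Term 1 : integral over Ioc (-1) 0
    have hT1 : (∫⁻ u in Ioc (-1:ℝ) 0,
        ENNReal.ofReal (c * (1 - u ^ 2) ^ q) * ENNReal.ofReal ((A - B * u) ^ (-γ)) ∂volume)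
        ≤ ENNReal.ofReal (C1 * R) := by
      have hptw : ∀ u ∈ Ioc (-1:ℝ) 0,
          ENNReal.ofReal (c * (1 - u ^ 2) ^ q) * ENNReal.ofReal ((A - B * u) ^ (-γ))
          ≤ ENNReal.ofReal (c * Kq * A ^ (-γ)) * ENNReal.ofReal ((u + 1) ^ σ') := by
        intro u hu
        obtain ⟨hu1, hu2⟩ := hu
        have h1u : (0:ℝ) < u + 1 := by linarith
        have hfb : (A - B * u) ^ (-γ) ≤ A ^ (-γ) := by
          apply Real.rpow_le_rpow_of_nonpos hA _ (by linarith : -γ ≤ 0)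
          nlinarith [mul_nonneg hB (neg_nonneg.2 hu2)]
        have hwb : c * (1 - u ^ 2) ^ q ≤ c * Kq * (u + 1) ^ σ' := by
          rw [show (1 - u ^ 2 : ℝ) = (1 - u) * (u + 1) from by ring,
              Real.mul_rpow (by linarith) h1u.le]
          have e1 : (1 - u) ^ q ≤ Kq := hKx _ (by linarith) (by linarith)
          have e2 : (u + 1) ^ q ≤ (u + 1) ^ σ' :=
            Real.rpow_le_rpow_of_exponent_ge h1u (by linarith) hσ'2
          calc c * ((1 - u) ^ q * (u + 1) ^ q)
              ≤ c * (Kq * (u + 1) ^ σ') := by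
                refine mul_le_mul_of_nonneg_left ?_ hc.le
                exact mul_le_mul e1 e2 (Real.rpow_nonneg h1u.le _) hKq.le
            _ = c * Kq * (u + 1) ^ σ' := by ring
        calc ENNReal.ofReal (c * (1 - u ^ 2) ^ q) * ENNReal.ofReal ((A - B * u) ^ (-γ))
            ≤ ENNReal.ofReal (c * Kq * (u + 1) ^ σ') * ENNReal.ofReal (A ^ (-γ)) :=
              mul_le_mul' (ENNReal.ofReal_le_ofReal hwb) (ENNReal.ofReal_le_ofReal hfb)
          _ = ENNReal.ofReal (c * Kq * A ^ (-γ)) * ENNReal.ofReal ((u + 1) ^ σ') := by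
              rw [← ENNReal.ofReal_mul
                    (mul_nonneg (mul_nonneg hc.le hKq.le) (Real.rpow_nonneg h1u.le _)),
                  ← ENNReal.ofReal_mul
                    (mul_nonneg (mul_nonneg hc.le hKq.le) (Real.rpow_nonneg hA.le _))]
              congr 1
              ring
      have hIoc : (∫⁻ u in Ioc (-1:ℝ) 0, ENNReal.ofReal ((u + 1) ^ σ') ∂volume)
          ≤ ENNReal.ofReal ((2:ℝ) ^ (σ' + 1) / (σ' + 1)) := by
        have hpre : (fun u : ℝ => u + 1) ⁻¹' (Ioc (0:ℝ) 1) = Ioc (-1:ℝ) 0 := by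
          ext u
          simp only [mem_preimage, mem_Ioc]
          constructor <;> intro h <;> exact ⟨by linarith [h.1], by linarith [h.2]⟩
        have hsub : (∫⁻ u in Ioc (-1:ℝ) 0, ENNReal.ofReal ((u + 1) ^ σ') ∂volume)
            = ∫⁻ x in Ioc (0:ℝ) 1, ENNReal.ofReal (x ^ σ') ∂volume := by
          conv_lhs => rw [← hpre]
          exact lint_comp_add_one (fun x => ENNReal.ofReal (x ^ σ')) (Ioc (0:ℝ) 1)
        rw [hsub]
        calc (∫⁻ x in Ioc (0:ℝ) 1, ENNReal.ofReal (x ^ σ') ∂volume)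
            ≤ ∫⁻ x in Ioo (0:ℝ) 2, ENNReal.ofReal (x ^ σ') ∂volume :=
              lintegral_mono_set (fun x hx => ⟨hx.1, by linarith [hx.2]⟩)
          _ ≤ ENNReal.ofReal ((2:ℝ) ^ (σ' + 1) / (σ' + 1)) := lint_pow_Ioo hσ'1 two_pos
      calc (∫⁻ u in Ioc (-1:ℝ) 0,
            ENNReal.ofReal (c * (1 - u ^ 2) ^ q) * ENNReal.ofReal ((A - B * u) ^ (-γ)) ∂volume)
          ≤ ∫⁻ u in Ioc (-1:ℝ) 0,
              ENNReal.ofReal (c * Kq * A ^ (-γ)) * ENNReal.ofReal ((u + 1) ^ σ') ∂volume :=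
            setLIntegral_mono' measurableSet_Ioc hptw
        _ = ENNReal.ofReal (c * Kq * A ^ (-γ))
              * ∫⁻ u in Ioc (-1:ℝ) 0, ENNReal.ofReal ((u + 1) ^ σ') ∂volume :=
            lintegral_const_mul' _ _ ENNReal.ofReal_ne_top
        _ ≤ ENNReal.ofReal (c * Kq * A ^ (-γ)) * ENNReal.ofReal ((2:ℝ) ^ (σ' + 1) / (σ' + 1)) :=
            mul_le_mul_right hIoc _
        _ ≤ ENNReal.ofReal (C1 * R) := by
            rw [← ENNReal.ofReal_mul
                  (mul_nonneg (mul_nonneg hc.le hKq.le) (Real.rpow_nonneg hA.le _))]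
            apply ENNReal.ofReal_le_ofReal
            calc c * Kq * A ^ (-γ) * ((2:ℝ) ^ (σ' + 1) / (σ' + 1))
                = C1 * A ^ (-γ) := by rw [hC1_def]; ring
              _ ≤ C1 * R := mul_le_mul_of_nonneg_left hAR hC1.le
    -- Term 2 : integral over Ioo 0 1
    have hT2 : (∫⁻ u in Ioo (0:ℝ) 1,
        ENNReal.ofReal (c * (1 - u ^ 2) ^ q) * ENNReal.ofReal ((A - B * u) ^ (-γ)) ∂volume)
        ≤ ENNReal.ofReal (C2 * R) := by
      set b := A / 2 with hb_def
      clear_value b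
      have hbp : 0 < b := by rw [hb_def]; linarith
      set t₀ := ε / b with ht₀_def
      clear_value t₀
      have ht₀ : 0 < t₀ := by rw [ht₀_def]; exact div_pos hε hbp
      obtain ⟨G, hG⟩ : ∃ G : ℝ → ℝ≥0∞,
          ∀ x, G x = ENNReal.ofReal (K2 * ((ε + b * x) ^ (-γ) * x ^ σ)) := ⟨_, fun _ => rfl⟩
      have hGm : Measurable G := by
        have : G = fun x => ENNReal.ofReal (K2 * ((ε + b * x) ^ (-γ) * x ^ σ)) := funext hG
        rw [this]
        apply Measurable.ennreal_ofReal
        exact (((measurable_const.add (measurable_id.const_mul b)).pow measurable_const).mul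
          (measurable_id.pow measurable_const)).const_mul K2
      have hptw : ∀ u ∈ Ioo (0:ℝ) 1,
          ENNReal.ofReal (c * (1 - u ^ 2) ^ q) * ENNReal.ofReal ((A - B * u) ^ (-γ))
          ≤ G (1 - u) := by
        intro u hu
        obtain ⟨hu0, hu1⟩ := hu
        have h1u : (0:ℝ) < 1 - u := by linarith
        have hwb : c * (1 - u ^ 2) ^ q ≤ c * Kq * (1 - u) ^ σ := by
          rw [show (1 - u ^ 2 : ℝ) = (1 - u) * (1 + u) from by ring,
              Real.mul_rpow h1u.le (by linarith)]
          have e1 : (1 + u) ^ q ≤ Kq := hKx _ (by linarith) (by linarith)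
          have e2 : (1 - u) ^ q ≤ (1 - u) ^ σ :=
            Real.rpow_le_rpow_of_exponent_ge h1u (by linarith) hσ2
          calc c * ((1 - u) ^ q * (1 + u) ^ q)
              ≤ c * ((1 - u) ^ σ * Kq) := by
                refine mul_le_mul_of_nonneg_left ?_ hc.le
                exact mul_le_mul e2 e1 (Real.rpow_nonneg (by linarith) _)
                  (Real.rpow_nonneg h1u.le _)
            _ = c * Kq * (1 - u) ^ σ := by ring
        have hpos : 0 < ε + b * (1 - u) := by
          have h := mul_nonneg hbp.le h1u.le
          linarith
        have hmax : (ε + b * (1 - u)) / 2 ≤ A - B * u := by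
          rw [hε_def, hb_def]
          nlinarith [mul_nonneg (by linarith : (0:ℝ) ≤ 1 - u) (by linarith : (0:ℝ) ≤ A + 2 * B),
                     mul_nonneg hu0.le (by linarith : (0:ℝ) ≤ 2 * A - 2 * B)]
        have hfb : (A - B * u) ^ (-γ) ≤ (2:ℝ) ^ γ * (ε + b * (1 - u)) ^ (-γ) := by
          have h1 : (A - B * u) ^ (-γ) ≤ ((ε + b * (1 - u)) / 2) ^ (-γ) :=
            Real.rpow_le_rpow_of_nonpos (by linarith) hmax (by linarith)
          rw [Real.div_rpow hpos.le (by norm_num : (0:ℝ) ≤ 2),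
              Real.rpow_neg (by norm_num : (0:ℝ) ≤ 2) γ, div_inv_eq_mul] at h1
          calc (A - B * u) ^ (-γ) ≤ (ε + b * (1 - u)) ^ (-γ) * 2 ^ γ := h1
            _ = 2 ^ γ * (ε + b * (1 - u)) ^ (-γ) := mul_comm _ _
        have hABu : (0:ℝ) ≤ A - B * u := by nlinarith
        rw [hG, ← ENNReal.ofReal_mul
              (mul_nonneg hc.le (Real.rpow_nonneg (by nlinarith : (0:ℝ) ≤ 1 - u ^ 2) _))]
        apply ENNReal.ofReal_le_ofReal
        calc c * (1 - u ^ 2) ^ q * (A - B * u) ^ (-γ)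
            ≤ (c * Kq * (1 - u) ^ σ) * ((2:ℝ) ^ γ * (ε + b * (1 - u)) ^ (-γ)) :=
              mul_le_mul hwb hfb (Real.rpow_nonneg hABu _)
                (mul_nonneg (mul_nonneg hc.le hKq.le) (Real.rpow_nonneg h1u.le _))
          _ = K2 * ((ε + b * (1 - u)) ^ (-γ) * (1 - u) ^ σ) := by rw [hK2_def]; ring
      have hpre1 : (fun x : ℝ => 1 - x) ⁻¹' (Ioo (0:ℝ) 1) = Ioo (0:ℝ) 1 := by
        ext x
        simp only [mem_preimage, mem_Ioo]
        constructor <;> intro h <;> exact ⟨by linarith [h.1, h.2], by linarith [h.1, h.2]⟩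
      have hP1 : (∫⁻ x in Ioo (0:ℝ) t₀, G x ∂volume)
          ≤ ENNReal.ofReal (K2 * ε ^ (-γ)) * ENNReal.ofReal (t₀ ^ (σ + 1) / (σ + 1)) := by
        have hptw1 : ∀ x ∈ Ioo (0:ℝ) t₀,
            G x ≤ ENNReal.ofReal (K2 * ε ^ (-γ)) * ENNReal.ofReal (x ^ σ) := by
          intro x hx
          have hx0 := hx.1
          have h2 : (ε + b * x) ^ (-γ) ≤ ε ^ (-γ) :=
            Real.rpow_le_rpow_of_nonpos hε
              (by nlinarith [mul_nonneg hbp.le hx0.le]) (by linarith)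
          rw [hG, ← ENNReal.ofReal_mul (mul_nonneg hK2.le (Real.rpow_nonneg hε.le _))]
          apply ENNReal.ofReal_le_ofReal
          calc K2 * ((ε + b * x) ^ (-γ) * x ^ σ) ≤ K2 * (ε ^ (-γ) * x ^ σ) := by
                refine mul_le_mul_of_nonneg_left ?_ hK2.le
                exact mul_le_mul_of_nonneg_right h2 (Real.rpow_nonneg hx0.le _)
            _ = K2 * ε ^ (-γ) * x ^ σ := by ring
        calc (∫⁻ x in Ioo (0:ℝ) t₀, G x ∂volume)
            ≤ ∫⁻ x in Ioo (0:ℝ) t₀,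
                ENNReal.ofReal (K2 * ε ^ (-γ)) * ENNReal.ofReal (x ^ σ) ∂volume :=
              setLIntegral_mono' measurableSet_Ioo hptw1
          _ = ENNReal.ofReal (K2 * ε ^ (-γ))
                * ∫⁻ x in Ioo (0:ℝ) t₀, ENNReal.ofReal (x ^ σ) ∂volume :=
              lintegral_const_mul' _ _ ENNReal.ofReal_ne_top
          _ ≤ _ := mul_le_mul_right (lint_pow_Ioo hσ1 ht₀) _
      have hP2 : (∫⁻ x in Ici t₀, G x ∂volume)
          ≤ ENNReal.ofReal (K2 * b ^ (-γ))
              * ENNReal.ofReal (t₀ ^ (σ - γ + 1) / (-(σ - γ + 1))) := by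
        have heq : (∫⁻ x in Ici t₀, G x ∂volume) = ∫⁻ x in Ioi t₀, G x ∂volume :=
          (setLIntegral_congr Ioi_ae_eq_Ici).symm
        rw [heq]
        have hptw2 : ∀ x ∈ Ioi t₀,
            G x ≤ ENNReal.ofReal (K2 * b ^ (-γ)) * ENNReal.ofReal (x ^ (σ - γ)) := by
          intro x hx
          have hx0 : 0 < x := ht₀.trans hx
          have h2 : (ε + b * x) ^ (-γ) ≤ (b * x) ^ (-γ) :=
            Real.rpow_le_rpow_of_nonpos (mul_pos hbp hx0) (by linarith) (by linarith)
          rw [hG, ← ENNReal.ofReal_mul (mul_nonneg hK2.le (Real.rpow_nonneg hbp.le _))]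
          apply ENNReal.ofReal_le_ofReal
          calc K2 * ((ε + b * x) ^ (-γ) * x ^ σ)
              ≤ K2 * ((b * x) ^ (-γ) * x ^ σ) := by
                refine mul_le_mul_of_nonneg_left ?_ hK2.le
                exact mul_le_mul_of_nonneg_right h2 (Real.rpow_nonneg hx0.le _)
            _ = K2 * b ^ (-γ) * x ^ (σ - γ) := by
                rw [Real.mul_rpow hbp.le hx0.le, mul_assoc, mul_assoc, mul_comm (x ^ (-γ)),
                    ← Real.rpow_add hx0, show σ + -γ = σ - γ from by ring]
          -- end calc
        calc (∫⁻ x in Ioi t₀, G x ∂volume)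
            ≤ ∫⁻ x in Ioi t₀,
                ENNReal.ofReal (K2 * b ^ (-γ)) * ENNReal.ofReal (x ^ (σ - γ)) ∂volume :=
              setLIntegral_mono' measurableSet_Ioi hptw2
          _ = ENNReal.ofReal (K2 * b ^ (-γ))
                * ∫⁻ x in Ioi t₀, ENNReal.ofReal (x ^ (σ - γ)) ∂volume :=
              lintegral_const_mul' _ _ ENNReal.ofReal_ne_top
          _ ≤ _ := mul_le_mul_right (lint_pow_Ioi (by linarith) ht₀) _
      -- real arithmetic to assemble
      have hYeq : t₀ ^ (σ + 1) = ε ^ (σ + 1) * b ^ (-(σ + 1)) := by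
        rw [ht₀_def, Real.div_rpow hε.le hbp.le, Real.rpow_neg hbp.le, div_eq_mul_inv]
      have hYeq2 : t₀ ^ (σ - γ + 1) = ε ^ (σ - γ + 1) * b ^ (-(σ - γ + 1)) := by
        rw [ht₀_def, Real.div_rpow hε.le hbp.le, Real.rpow_neg hbp.le, div_eq_mul_inv]
      have he1 : ε ^ (-γ) * ε ^ (σ + 1) = ε ^ (σ + 1 - γ) := by
        rw [← Real.rpow_add hε]; congr 1; ring
      have he2 : b ^ (-γ) * b ^ (-(σ - γ + 1)) = b ^ (-(σ + 1)) := by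
        rw [← Real.rpow_add hbp]; congr 1; ring
      have he3 : ε ^ (σ - γ + 1) = ε ^ (σ + 1 - γ) := by congr 1; ring
      have hbb : b ^ (-(σ + 1)) = 2 ^ (σ + 1) * A ^ (-(σ + 1)) := by
        rw [hb_def, Real.div_rpow hA.le (by norm_num : (0:ℝ) ≤ 2),
            Real.rpow_neg (by norm_num : (0:ℝ) ≤ 2) (σ + 1), div_inv_eq_mul, mul_comm]
      have hZ : ε ^ (σ + 1 - γ) * A ^ (-(σ + 1)) ≤ R := by
        have hsplit : (ε ^ (σ + 1 - ρ) * A ^ (-(σ + 1 - ρ))) * (ε ^ (-(γ - ρ)) * A ^ (-ρ))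
            = ε ^ (σ + 1 - γ) * A ^ (-(σ + 1)) := by
          rw [mul_mul_mul_comm, ← Real.rpow_add hε, ← Real.rpow_add hA,
              show σ + 1 - ρ + -(γ - ρ) = σ + 1 - γ from by ring,
              show -(σ + 1 - ρ) + -ρ = -(σ + 1) from by ring]
        have h1 : ε ^ (σ + 1 - ρ) * A ^ (-(σ + 1 - ρ)) ≤ 1 := by
          rw [Real.rpow_neg hA.le, ← div_eq_mul_inv,
              div_le_one (Real.rpow_pos_of_pos hA _)]
          exact Real.rpow_le_rpow hε.le hεA (by linarith)
        calc ε ^ (σ + 1 - γ) * A ^ (-(σ + 1))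
            = (ε ^ (σ + 1 - ρ) * A ^ (-(σ + 1 - ρ))) * (ε ^ (-(γ - ρ)) * A ^ (-ρ)) := hsplit.symm
          _ ≤ 1 * (ε ^ (-(γ - ρ)) * A ^ (-ρ)) :=
              mul_le_mul_of_nonneg_right h1
                (mul_nonneg (Real.rpow_nonneg hε.le _) (Real.rpow_nonneg hA.le _))
          _ = R := by rw [one_mul, hR_def]; ring
      have hx1 : K2 * ε ^ (-γ) * (t₀ ^ (σ + 1) / (σ + 1))
          = K2 * (1/(σ + 1)) * (ε ^ (σ + 1 - γ) * b ^ (-(σ + 1))) := by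
        rw [hYeq, ← he1]; ring
      have hx2 : K2 * b ^ (-γ) * (t₀ ^ (σ - γ + 1) / (-(σ - γ + 1)))
          = K2 * (1/(γ - σ - 1)) * (ε ^ (σ + 1 - γ) * b ^ (-(σ + 1))) := by
        rw [hYeq2, he3, ← he2]; ring
      have harith : K2 * ε ^ (-γ) * (t₀ ^ (σ + 1) / (σ + 1))
          + K2 * b ^ (-γ) * (t₀ ^ (σ - γ + 1) / (-(σ - γ + 1))) ≤ C2 * R := by
        rw [hx1, hx2]
        calc K2 * (1/(σ + 1)) * (ε ^ (σ + 1 - γ) * b ^ (-(σ + 1)))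
            + K2 * (1/(γ - σ - 1)) * (ε ^ (σ + 1 - γ) * b ^ (-(σ + 1)))
            = C2 * (ε ^ (σ + 1 - γ) * A ^ (-(σ + 1))) := by
              rw [hbb, hC2_def]; ring
          _ ≤ C2 * R := mul_le_mul_of_nonneg_left hZ hC2.le
      have hnn1 : (0:ℝ) ≤ K2 * ε ^ (-γ) * (t₀ ^ (σ + 1) / (σ + 1)) := by
        apply mul_nonneg (mul_nonneg hK2.le (Real.rpow_nonneg hε.le _))
        apply div_nonneg (Real.rpow_nonneg ht₀.le _) (by linarith)
      have hnn2 : (0:ℝ) ≤ K2 * b ^ (-γ) * (t₀ ^ (σ - γ + 1) / (-(σ - γ + 1))) := by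
        apply mul_nonneg (mul_nonneg hK2.le (Real.rpow_nonneg hbp.le _))
        apply div_nonneg (Real.rpow_nonneg ht₀.le _) (by linarith)
      calc (∫⁻ u in Ioo (0:ℝ) 1,
            ENNReal.ofReal (c * (1 - u ^ 2) ^ q) * ENNReal.ofReal ((A - B * u) ^ (-γ)) ∂volume)
          ≤ ∫⁻ u in Ioo (0:ℝ) 1, G (1 - u) ∂volume :=
            setLIntegral_mono' measurableSet_Ioo hptw
        _ = ∫⁻ x in Ioo (0:ℝ) 1, G x ∂volume := by
            conv_lhs => rw [← hpre1]
            exact lint_comp_one_sub G _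
        _ ≤ ∫⁻ x in Ioo (0:ℝ) t₀ ∪ Ici t₀, G x ∂volume := by
            apply lintegral_mono_set
            intro x hx
            rcases lt_or_ge x t₀ with h | h
            · exact Or.inl ⟨hx.1, h⟩
            · exact Or.inr h
        _ ≤ (∫⁻ x in Ioo (0:ℝ) t₀, G x ∂volume) + ∫⁻ x in Ici t₀, G x ∂volume :=
            lintegral_union_le _ _ _
        _ ≤ ENNReal.ofReal (K2 * ε ^ (-γ)) * ENNReal.ofReal (t₀ ^ (σ + 1) / (σ + 1))
            + ENNReal.ofReal (K2 * b ^ (-γ))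
                * ENNReal.ofReal (t₀ ^ (σ - γ + 1) / (-(σ - γ + 1))) := add_le_add hP1 hP2
        _ ≤ ENNReal.ofReal (C2 * R) := by
            rw [← ENNReal.ofReal_mul (mul_nonneg hK2.le (Real.rpow_nonneg hε.le _)),
                ← ENNReal.ofReal_mul (mul_nonneg hK2.le (Real.rpow_nonneg hbp.le _)),
                ← ENNReal.ofReal_add hnn1 hnn2]
            exact ENNReal.ofReal_le_ofReal harith
    -- assemble
    calc (∫⁻ u in Icc (-1:ℝ) 1,
          ENNReal.ofReal (c * (1 - u ^ 2) ^ q) * ENNReal.ofReal ((A - B * u) ^ (-γ)) ∂volume)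
        = ∫⁻ u in Ioo (-1:ℝ) 1,
            ENNReal.ofReal (c * (1 - u ^ 2) ^ q) * ENNReal.ofReal ((A - B * u) ^ (-γ)) ∂volume :=
          (setLIntegral_congr Ioo_ae_eq_Icc).symm
      _ ≤ ∫⁻ u in Ioc (-1:ℝ) 0 ∪ Ioo (0:ℝ) 1,
            ENNReal.ofReal (c * (1 - u ^ 2) ^ q) * ENNReal.ofReal ((A - B * u) ^ (-γ)) ∂volume := by
          apply lintegral_mono_set
          intro u hu
          rcases le_or_gt u 0 with h | h
          · exact Or.inl ⟨hu.1, h⟩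
          · exact Or.inr ⟨h, hu.2⟩
      _ ≤ (∫⁻ u in Ioc (-1:ℝ) 0,
            ENNReal.ofReal (c * (1 - u ^ 2) ^ q) * ENNReal.ofReal ((A - B * u) ^ (-γ)) ∂volume)
          + ∫⁻ u in Ioo (0:ℝ) 1,
            ENNReal.ofReal (c * (1 - u ^ 2) ^ q) * ENNReal.ofReal ((A - B * u) ^ (-γ)) ∂volume :=
          lintegral_union_le _ _ _
      _ ≤ ENNReal.ofReal (C1 * R) + ENNReal.ofReal (C2 * R) := add_le_add hT1 hT2
      _ = ENNReal.ofReal (C1 * R + C2 * R) :=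
          (ENNReal.ofReal_add (mul_nonneg hC1.le hRpos.le) (mul_nonneg hC2.le hRpos.le)).symm
      _ ≤ ENNReal.ofReal ((C1 + C2 + 1) * R) := ENNReal.ofReal_le_ofReal (by nlinarith [hRpos.le])
end

section
/- Let λ ∈ ℝ, M, N ∈ ℕ and K, R, L ∈ {0,1} be fixed. Then there exists a constant C (depending only on λ, M, N, K, R, L) such that for all t ∈ (0,1], θ, φ ∈ [0,π] and u, v ∈ [-1,1]: |∂_u^K ∂_v^R ∂_φ^L ∂_θ^N ∂_t^M Ψ^λ(t,θ,φ,u,v)| ≤ C Σ_{k=0}^{2} Σ_{r=0}^{2} (sin(θ/2)+sin(φ/2))^{Kk} (cos(θ/2)+cos(φ/2))^{Rr} (t² + q(θ,φ,u,v))^{-(λ + (L+N+M−1+Kk+Rr)/2)}. -/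
open MeasureTheory Real Set
open scoped ENNReal Classical

noncomputable def Psil (l t θ φ u v : ℝ) : ℝ :=
  Real.sinh (t / 2) / (Real.cosh (t / 2) - 1 + qf θ φ u v) ^ l

/-- The mixed partial derivative `∂_u^K ∂_v^R ∂_φ^L ∂_θ^N ∂_t^M Ψ^λ`. -/
noncomputable def PsilD (l : ℝ) (K R L N M : ℕ) (t θ φ u v : ℝ) : ℝ :=
  iteratedDeriv K (fun u' =>
    iteratedDeriv R (fun v' =>
      iteratedDeriv L (fun φ' =>
        iteratedDeriv N (fun θ' =>
          iteratedDeriv M (fun t' => Psil l t' θ' φ' u' v') t) θ) φ) v) u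

/-!
Write `Q = cosh (t/2) - 1 + q`, so that `Ψ^λ = sinh (t/2) Q^(-λ)`, and `X = t² + q`. On the
domain `Q ≍ X`, since `t²/8 ≤ cosh (t/2) - 1 ≤ t²`, and the first-order quantities `sinh (t/2)`,
`∂_θ q`, `∂_φ q` are `O(√X)`, the latter because `(2 ∂_θ q)² ≤ 1 - (1 - q)² ≤ 2 q`.

Call `f` a symbol of weight `(kc, rc, s)` if, together with all its partial derivatives, it is
controlled by `∑_{k ≤ kc, r ≤ rc} S^k C^r X^((s - k - r)/2)`, where `S = sin (θ/2) + sin (φ/2)`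
and `C = cos (θ/2) + cos (φ/2)`. Symbols are closed under sums and products, and a derivative in
`t`, `θ` or `φ` lowers `s` by one, while one in `u` (resp. `v`) raises `kc` (resp. `rc`) by two
and keeps `s`, because `∂_u q = -sin (θ/2) sin (φ/2)` is bounded by `S²` rather than by `√X`.
As `Ψ^λ` has weight `(0, 0, 1 - 2λ)`, the mixed derivative has weight
`(2K, 2R, 1 - 2λ - M - N - L)`, which is the bound.
-/

namespace PsilEstimate

open Function Filter Topology

theorem cosh_eq_one_add_two_mul_sinh_half_sq (y : ℝ) : cosh y = 1 + 2 * sinh (y / 2) ^ 2 := by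
  have h := cosh_two_mul (y / 2)
  rw [mul_div_cancel₀ y two_ne_zero, cosh_sq] at h
  linarith

theorem one_add_sq_div_two_le_cosh (y : ℝ) : 1 + y ^ 2 / 2 ≤ cosh y := by
  rw [cosh_eq_one_add_two_mul_sinh_half_sq]
  have h : |y / 2| ≤ |sinh (y / 2)| := by
    rw [abs_sinh]; exact self_le_sinh_iff.2 (abs_nonneg _)
  nlinarith [sq_le_sq.2 h]

theorem cosh_sub_one_le_sq {y : ℝ} (hy : |y| ≤ 1) : cosh y - 1 ≤ y ^ 2 := by
  have hy2 : y ^ 2 ≤ 1 := by nlinarith [sq_abs y, abs_nonneg y]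
  have hexp := abs_exp_sub_one_sub_id_le (x := y ^ 2 / 2)
    (by rw [abs_of_nonneg (by positivity)]; linarith)
  nlinarith [abs_le.1 hexp, cosh_le_exp_half_sq y, sq_nonneg y]

theorem rpow_le_mul_rpow {x y c : ℝ} (hx : 0 < x) (hxy : x ≤ y) (hyx : y ≤ c * x) (e : ℝ) :
    x ^ e ≤ c ^ |e| * y ^ e := by
  have hc : 1 ≤ c := by nlinarith
  rcases le_total 0 e with he | he
  · calc x ^ e ≤ 1 * y ^ e := by rw [one_mul]; exact rpow_le_rpow hx.le hxy he
      _ ≤ c ^ |e| * y ^ e :=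
        mul_le_mul_of_nonneg_right (one_le_rpow hc (abs_nonneg e)) (rpow_nonneg (by linarith) e)
  · have hyc : 0 < y / c := div_pos (by linarith) (by linarith)
    calc x ^ e ≤ (y / c) ^ e :=
          rpow_le_rpow_of_nonpos hyc ((div_le_iff₀ (by linarith)).2 (by linarith)) he
      _ = c ^ |e| * y ^ e := by
        rw [div_rpow (by linarith) (by linarith), abs_of_nonpos he, rpow_neg (by linarith),
          div_eq_mul_inv, mul_comm]

theorem sum_range_le_sum_range_three {K : ℕ} (hK : K ≤ 1) {g : ℕ → ℝ} (hg : ∀ k, 0 ≤ g k) :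
    ∑ k ∈ Finset.range (2 * K + 1), g k ≤ ∑ k ∈ Finset.range 3, g (K * k) := by
  interval_cases K
  · simp; linarith [hg 0]
  · simp [Finset.sum_range_succ]

theorem sq_add_sq_le_one {a b a' b' u v : ℝ} (h : a ^ 2 + b ^ 2 = 1) (h' : a' ^ 2 + b' ^ 2 = 1)
    (hu : |u| ≤ 1) (hv : |v| ≤ 1) :
    (u * a * a' + v * b * b') ^ 2 + (v * a * b' - u * b * a') ^ 2 ≤ 1 := by
  have hu2 : u ^ 2 ≤ 1 := by nlinarith [sq_abs u, abs_nonneg u]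
  have hv2 : v ^ 2 ≤ 1 := by nlinarith [sq_abs v, abs_nonneg v]
  have hid : (u * a * a' + v * b * b') ^ 2 + (v * a * b' - u * b * a') ^ 2
      = (u ^ 2 * a' ^ 2 + v ^ 2 * b' ^ 2) * (a ^ 2 + b ^ 2) := by ring
  rw [hid, h, mul_one]
  nlinarith [mul_le_mul_of_nonneg_right hu2 (sq_nonneg a'),
    mul_le_mul_of_nonneg_right hv2 (sq_nonneg b')]

theorem qf_eq_one_sub (θ φ u v : ℝ) : qf θ φ u v =
    1 - (u * sin (θ / 2) * sin (φ / 2) + v * cos (θ / 2) * cos (φ / 2)) := by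
  unfold qf; ring

theorem qf_mem_Icc (θ φ : ℝ) {u v : ℝ} (hu : |u| ≤ 1) (hv : |v| ≤ 1) :
    qf θ φ u v ∈ Icc 0 2 := by
  have h := sq_add_sq_le_one (sin_sq_add_cos_sq (θ / 2)) (sin_sq_add_cos_sq (φ / 2)) hu hv
  rw [qf_eq_one_sub]
  constructor <;>
    nlinarith [sq_nonneg (v * sin (θ / 2) * cos (φ / 2) - u * cos (θ / 2) * sin (φ / 2))]

/-- A point `(t, θ, φ, u, v)`. -/
abbrev Point := Fin 5 → ℝ

def domain : Set Point :=
  {p | p 0 ∈ Ioc 0 1 ∧ p 1 ∈ Icc 0 π ∧ p 2 ∈ Icc 0 π ∧ p 3 ∈ Icc (-1) 1 ∧ p 4 ∈ Icc (-1) 1}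

noncomputable def Q (p : Point) : ℝ := cosh (p 0 / 2) - 1 + qf (p 1) (p 2) (p 3) (p 4)

noncomputable def X (p : Point) : ℝ := p 0 ^ 2 + qf (p 1) (p 2) (p 3) (p 4)

noncomputable def dqθ (p : Point) : ℝ :=
  (p 4 * sin (p 1 / 2) * cos (p 2 / 2) - p 3 * cos (p 1 / 2) * sin (p 2 / 2)) / 2

noncomputable def dqφ (p : Point) : ℝ :=
  (p 4 * cos (p 1 / 2) * sin (p 2 / 2) - p 3 * sin (p 1 / 2) * cos (p 2 / 2)) / 2

noncomputable def sinSum (p : Point) : ℝ := sin (p 1 / 2) + sin (p 2 / 2)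

noncomputable def cosSum (p : Point) : ℝ := cos (p 1 / 2) + cos (p 2 / 2)

namespace domain

variable {p : Point} (hp : p ∈ domain)
include hp

theorem abs_u_le_one : |p 3| ≤ 1 := abs_le.2 hp.2.2.2.1

theorem abs_v_le_one : |p 4| ≤ 1 := abs_le.2 hp.2.2.2.2

theorem qf_mem_Icc : qf (p 1) (p 2) (p 3) (p 4) ∈ Icc 0 2 :=
  PsilEstimate.qf_mem_Icc _ _ (abs_u_le_one hp) (abs_v_le_one hp)

theorem half_angle_trig_nonneg {j : Fin 5} (hj : j = 1 ∨ j = 2) :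
    0 ≤ sin (p j / 2) ∧ 0 ≤ cos (p j / 2) := by
  have hj' : p j ∈ Icc 0 π := by rcases hj with rfl | rfl; exacts [hp.2.1, hp.2.2.1]
  obtain ⟨h0, hπ⟩ := hj'
  exact ⟨sin_nonneg_of_nonneg_of_le_pi (by linarith) (by linarith [pi_pos]),
    cos_nonneg_of_mem_Icc ⟨by linarith [pi_pos], by linarith⟩⟩

theorem abs_apply_le_four (j : Fin 5) : |p j| ≤ 4 := by
  obtain ⟨⟨h0, h0'⟩, ⟨h1, h1'⟩, ⟨h2, h2'⟩, ⟨h3, h3'⟩, ⟨h4, h4'⟩⟩ := hp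
  have := pi_le_four
  rw [abs_le]
  match j with
  | 0 | 1 | 2 | 3 | 4 => exact ⟨by linarith, by linarith⟩

theorem sinSum_nonneg : 0 ≤ sinSum p :=
  add_nonneg (half_angle_trig_nonneg hp (.inl rfl)).1 (half_angle_trig_nonneg hp (.inr rfl)).1

theorem cosSum_nonneg : 0 ≤ cosSum p :=
  add_nonneg (half_angle_trig_nonneg hp (.inl rfl)).2 (half_angle_trig_nonneg hp (.inr rfl)).2

theorem X_pos : 0 < X p := by
  have := (qf_mem_Icc hp).1
  have := hp.1.1
  unfold X; positivity

theorem X_le_three : X p ≤ 3 := by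
  have := (qf_mem_Icc hp).2
  have := hp.1.2
  unfold X; nlinarith [hp.1.1]

theorem Q_le_X : Q p ≤ X p := by
  have h := cosh_sub_one_le_sq (y := p 0 / 2) (by
    rw [abs_of_pos (by linarith [hp.1.1])]; linarith [hp.1.2])
  unfold Q X; nlinarith [hp.1.1]

theorem X_le_eight_mul_Q : X p ≤ 8 * Q p := by
  have h := one_add_sq_div_two_le_cosh (p 0 / 2)
  have := (qf_mem_Icc hp).1
  unfold Q X; nlinarith

theorem Q_pos : 0 < Q p := by linarith [X_pos hp, X_le_eight_mul_Q hp]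

theorem sinh_sq_le : sinh (p 0 / 2) ^ 2 ≤ 3 * X p := by
  have h := cosh_sub_one_le_sq (y := p 0 / 2) (by
    rw [abs_of_pos (by linarith [hp.1.1])]; linarith [hp.1.2])
  have := (qf_mem_Icc hp).1
  have := hp.1.2
  have hc : cosh (p 0 / 2) + 1 ≤ 3 := by nlinarith [hp.1.1]
  have hc1 : 0 ≤ cosh (p 0 / 2) - 1 := by linarith [one_le_cosh (p 0 / 2)]
  rw [sinh_sq]; unfold X
  nlinarith [mul_le_mul h hc (by linarith) (by positivity)]

theorem dqθ_sq_le : dqθ p ^ 2 ≤ X p := by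
  have h := sq_add_sq_le_one (sin_sq_add_cos_sq (p 1 / 2)) (sin_sq_add_cos_sq (p 2 / 2))
    (abs_u_le_one hp) (abs_v_le_one hp)
  have := (qf_mem_Icc hp).2
  unfold dqθ X; rw [qf_eq_one_sub] at *; nlinarith [sq_nonneg (p 0)]

theorem dqφ_sq_le : dqφ p ^ 2 ≤ X p := by
  have h := sq_add_sq_le_one (sin_sq_add_cos_sq (p 2 / 2)) (sin_sq_add_cos_sq (p 1 / 2))
    (abs_u_le_one hp) (abs_v_le_one hp)
  have := (qf_mem_Icc hp).2
  unfold dqφ X; rw [qf_eq_one_sub] at *; nlinarith [sq_nonneg (p 0)]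

end domain

noncomputable def weightTerm (s : ℝ) (k r : ℕ) (p : Point) : ℝ :=
  sinSum p ^ k * cosSum p ^ r * X p ^ ((s - k - r) / 2)

noncomputable def weightBound (kc rc : ℕ) (s : ℝ) (p : Point) : ℝ :=
  ∑ kr ∈ Finset.range (kc + 1) ×ˢ Finset.range (rc + 1), weightTerm s kr.1 kr.2 p

theorem weightBound_zero_zero (s : ℝ) (p : Point) : weightBound 0 0 s p = X p ^ (s / 2) := by
  simp [weightBound, weightTerm]

namespace domain

variable {p : Point} (hp : p ∈ domain)
include hp

theorem weightTerm_nonneg (s : ℝ) (k r : ℕ) : 0 ≤ weightTerm s k r p :=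
  mul_nonneg (mul_nonneg (pow_nonneg (sinSum_nonneg hp) _) (pow_nonneg (cosSum_nonneg hp) _))
    (rpow_nonneg (X_pos hp).le _)

theorem weightTerm_mul (s₁ s₂ : ℝ) (k₁ r₁ k₂ r₂ : ℕ) :
    weightTerm s₁ k₁ r₁ p * weightTerm s₂ k₂ r₂ p = weightTerm (s₁ + s₂) (k₁ + k₂) (r₁ + r₂) p := by
  have hexp : ((s₁ + s₂ : ℝ) - ↑(k₁ + k₂) - ↑(r₁ + r₂)) / 2
      = (s₁ - k₁ - r₁) / 2 + (s₂ - k₂ - r₂) / 2 := by push_cast; ring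
  rw [weightTerm, weightTerm, weightTerm, hexp, rpow_add (X_pos hp), pow_add, pow_add]
  ring

theorem weightTerm_le_of_le {s s' : ℝ} (hs : s' ≤ s) (k r : ℕ) :
    weightTerm s k r p ≤ 3 ^ ((s - s') / 2) * weightTerm s' k r p := by
  have hX : X p ^ ((s - k - r) / 2) ≤ 3 ^ ((s - s') / 2) * X p ^ ((s' - k - r) / 2) := by
    rw [show (s - k - r) / 2 = (s - s') / 2 + (s' - k - r) / 2 by ring, rpow_add (X_pos hp)]
    exact mul_le_mul_of_nonneg_right
      (rpow_le_rpow (X_pos hp).le (X_le_three hp) (by linarith)) (rpow_nonneg (X_pos hp).le _)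
  unfold weightTerm
  have := mul_le_mul_of_nonneg_left hX
    (mul_nonneg (pow_nonneg (sinSum_nonneg hp) k) (pow_nonneg (cosSum_nonneg hp) r))
  linarith

theorem weightTerm_le_weightBound {kc rc k r : ℕ} (hk : k ≤ kc) (hr : r ≤ rc) (s : ℝ) :
    weightTerm s k r p ≤ weightBound kc rc s p :=
  Finset.single_le_sum (f := fun kr : ℕ × ℕ => weightTerm s kr.1 kr.2 p)
    (fun _ _ => weightTerm_nonneg hp _ _ _) (a := (k, r))
    (Finset.mem_product.2 ⟨Finset.mem_range.2 (by omega), Finset.mem_range.2 (by omega)⟩)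

theorem sinSum_le_weightBound : sinSum p ≤ weightBound 1 0 1 p := by
  simpa [weightTerm] using weightTerm_le_weightBound hp (k := 1) (r := 0) le_rfl le_rfl 1

theorem cosSum_le_weightBound : cosSum p ≤ weightBound 0 1 1 p := by
  simpa [weightTerm] using weightTerm_le_weightBound hp (k := 0) (r := 1) le_rfl le_rfl 1

theorem weightBound_nonneg (kc rc : ℕ) (s : ℝ) : 0 ≤ weightBound kc rc s p :=
  Finset.sum_nonneg fun _ _ => weightTerm_nonneg hp _ _ _

theorem weightBound_mul_le (k₁ r₁ k₂ r₂ : ℕ) (s₁ s₂ : ℝ) :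
    weightBound k₁ r₁ s₁ p * weightBound k₂ r₂ s₂ p ≤
      ((k₁ + 1) * (r₁ + 1) * ((k₂ + 1) * (r₂ + 1)) : ℕ) *
        weightBound (k₁ + k₂) (r₁ + r₂) (s₁ + s₂) p := by
  calc weightBound k₁ r₁ s₁ p * weightBound k₂ r₂ s₂ p
      = ∑ a ∈ Finset.range (k₁ + 1) ×ˢ Finset.range (r₁ + 1),
          ∑ b ∈ Finset.range (k₂ + 1) ×ˢ Finset.range (r₂ + 1),
            weightTerm (s₁ + s₂) (a.1 + b.1) (a.2 + b.2) p := by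
        simp only [weightBound, Finset.sum_mul_sum, weightTerm_mul hp]
    _ ≤ ∑ a ∈ Finset.range (k₁ + 1) ×ˢ Finset.range (r₁ + 1),
          ∑ b ∈ Finset.range (k₂ + 1) ×ˢ Finset.range (r₂ + 1),
            weightBound (k₁ + k₂) (r₁ + r₂) (s₁ + s₂) p := by
        refine Finset.sum_le_sum fun a ha => Finset.sum_le_sum fun b hb => ?_
        simp only [Finset.mem_product, Finset.mem_range] at ha hb
        exact weightTerm_le_weightBound hp (by omega) (by omega) _
    _ = _ := by
        simp only [Finset.sum_const, Finset.card_product, Finset.card_range, nsmul_eq_mul]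
        push_cast; ring

theorem weightBound_le_of_le {kc rc kc' rc' : ℕ} {s s' : ℝ} (hk : kc ≤ kc') (hr : rc ≤ rc')
    (hs : s' ≤ s) : weightBound kc rc s p ≤ 3 ^ ((s - s') / 2) * weightBound kc' rc' s' p := by
  rw [weightBound, weightBound, Finset.mul_sum]
  refine (Finset.sum_le_sum fun kr _ => weightTerm_le_of_le hp hs kr.1 kr.2).trans ?_
  refine Finset.sum_le_sum_of_subset_of_nonneg
    (Finset.product_subset_product (Finset.range_subset_range.2 (by omega))
      (Finset.range_subset_range.2 (by omega))) fun _ _ _ => ?_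
  exact mul_nonneg (rpow_nonneg (by norm_num) _) (weightTerm_nonneg hp _ _ _)

theorem weightBound_le_sum {K R : ℕ} (hK : K ≤ 1) (hR : R ≤ 1) (s : ℝ) :
    weightBound (2 * K) (2 * R) s p ≤
      ∑ k ∈ Finset.range 3, ∑ r ∈ Finset.range 3, weightTerm s (K * k) (R * r) p := by
  rw [weightBound, Finset.sum_product]
  refine (Finset.sum_le_sum fun k _ => sum_range_le_sum_range_three hR
    fun r => weightTerm_nonneg hp s k r).trans ?_
  exact sum_range_le_sum_range_three hK fun k =>
    Finset.sum_nonneg fun r _ => weightTerm_nonneg hp s k _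

end domain

def IsDominated (kc rc : ℕ) (s : ℝ) (f : Point → ℝ) : Prop :=
  ∃ C, 0 ≤ C ∧ ∀ p ∈ domain, |f p| ≤ C * weightBound kc rc s p

namespace IsDominated

variable {kc rc k₁ r₁ k₂ r₂ : ℕ} {s s₁ s₂ : ℝ} {f g : Point → ℝ}

theorem of_abs_le {C : ℝ} (h : ∀ p ∈ domain, |f p| ≤ C) : IsDominated 0 0 0 f := by
  refine ⟨max C 0, le_max_right _ _, fun p hp => ?_⟩
  rw [weightBound_zero_zero, zero_div, rpow_zero, mul_one]
  exact (h p hp).trans (le_max_left _ _)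

theorem of_sq_le {c : ℝ} (h : ∀ p ∈ domain, f p ^ 2 ≤ c * X p) : IsDominated 0 0 1 f := by
  refine ⟨√(max c 0), sqrt_nonneg _, fun p hp => ?_⟩
  have hX := (domain.X_pos hp).le
  rw [weightBound_zero_zero, ← sqrt_eq_rpow, ← sqrt_mul (le_max_right _ _)]
  exact abs_le_sqrt ((h p hp).trans (mul_le_mul_of_nonneg_right (le_max_left _ _) hX))

theorem add (hf : IsDominated kc rc s f) (hg : IsDominated kc rc s g) :
    IsDominated kc rc s (f + g) := by
  obtain ⟨C₁, hC₁, hf⟩ := hf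
  obtain ⟨C₂, hC₂, hg⟩ := hg
  refine ⟨C₁ + C₂, add_nonneg hC₁ hC₂, fun p hp => ?_⟩
  calc |f p + g p| ≤ |f p| + |g p| := abs_add_le _ _
    _ ≤ C₁ * weightBound kc rc s p + C₂ * weightBound kc rc s p := add_le_add (hf p hp) (hg p hp)
    _ = (C₁ + C₂) * weightBound kc rc s p := by ring

theorem mul (hf : IsDominated k₁ r₁ s₁ f) (hg : IsDominated k₂ r₂ s₂ g) :
    IsDominated (k₁ + k₂) (r₁ + r₂) (s₁ + s₂) (f * g) := by
  obtain ⟨C₁, hC₁, hf⟩ := hf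
  obtain ⟨C₂, hC₂, hg⟩ := hg
  set n : ℝ := (((k₁ + 1) * (r₁ + 1) * ((k₂ + 1) * (r₂ + 1)) : ℕ) : ℝ)
  refine ⟨C₁ * C₂ * n, by positivity, fun p hp => ?_⟩
  calc |f p * g p| = |f p| * |g p| := abs_mul _ _
    _ ≤ (C₁ * weightBound k₁ r₁ s₁ p) * (C₂ * weightBound k₂ r₂ s₂ p) :=
        mul_le_mul (hf p hp) (hg p hp) (abs_nonneg _)
          (mul_nonneg hC₁ (domain.weightBound_nonneg hp _ _ _))
    _ = C₁ * C₂ * (weightBound k₁ r₁ s₁ p * weightBound k₂ r₂ s₂ p) := by ring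
    _ ≤ C₁ * C₂ * (n * weightBound (k₁ + k₂) (r₁ + r₂) (s₁ + s₂) p) :=
        mul_le_mul_of_nonneg_left (domain.weightBound_mul_le hp _ _ _ _ _ _) (by positivity)
    _ = C₁ * C₂ * n * weightBound (k₁ + k₂) (r₁ + r₂) (s₁ + s₂) p := by ring

theorem mono {kc' rc' : ℕ} {s' : ℝ} (hk : kc ≤ kc') (hr : rc ≤ rc') (hs : s' ≤ s)
    (hf : IsDominated kc rc s f) : IsDominated kc' rc' s' f := by
  obtain ⟨C, hC, hf⟩ := hf
  refine ⟨C * 3 ^ ((s - s') / 2), by positivity, fun p hp => ?_⟩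
  calc |f p| ≤ C * weightBound kc rc s p := hf p hp
    _ ≤ C * (3 ^ ((s - s') / 2) * weightBound kc' rc' s' p) :=
        mul_le_mul_of_nonneg_left (domain.weightBound_le_of_le hp hk hr hs) hC
    _ = C * 3 ^ ((s - s') / 2) * weightBound kc' rc' s' p := by ring

end IsDominated

theorem isDominated_Q_rpow_neg (a : ℝ) : IsDominated 0 0 (-2 * a) fun p => Q p ^ (-a) := by
  refine ⟨8 ^ |-a|, by positivity, fun p hp => ?_⟩
  rw [weightBound_zero_zero, abs_of_nonneg (rpow_nonneg (domain.Q_pos hp).le _),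
    show -2 * a / 2 = -a by ring]
  exact rpow_le_mul_rpow (domain.Q_pos hp) (domain.Q_le_X hp) (domain.X_le_eight_mul_Q hp) _

noncomputable def partialDeriv (i : Fin 5) (f : Point → ℝ) (p : Point) : ℝ :=
  deriv (fun y => f (update p i y)) (p i)

noncomputable def mixedPartial (K R L N M : ℕ) (f : Point → ℝ) : Point → ℝ :=
  (partialDeriv 3)^[K] ((partialDeriv 4)^[R] ((partialDeriv 2)^[L] ((partialDeriv 1)^[N]
    ((partialDeriv 0)^[M] f))))

theorem iteratedDeriv_update_eq_iterate (i : Fin 5) (n : ℕ) (f : Point → ℝ) (p : Point) :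
    iteratedDeriv n (fun y => f (update p i y)) (p i) = (partialDeriv i)^[n] f p := by
  induction n generalizing f with
  | zero => simp
  | succ n ih =>
    have : deriv (fun y => f (update p i y)) = fun y => partialDeriv i f (update p i y) := by
      funext y; simp [partialDeriv]
    rw [iteratedDeriv_succ', this, ih, iterate_succ_apply]

theorem hasDerivAt_update_apply_comp {g g' : ℝ → ℝ} (hg : ∀ x, HasDerivAt g (g' x) x)
    (i j : Fin 5) (p : Point) :
    HasDerivAt (fun y => g (update p i y j)) (if j = i then g' (p j) else 0) (p i) := by
  by_cases h : j = i
  · subst h; simpa using hg (p j)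
  · simpa [update_of_ne h, h] using hasDerivAt_const (p i) (g (p j))

theorem hasDerivAt_sin_half (x : ℝ) : HasDerivAt (fun x => sin (x / 2)) (cos (x / 2) * (1 / 2)) x :=
  ((hasDerivAt_id x).div_const 2).sin

theorem hasDerivAt_cos_half (x : ℝ) :
    HasDerivAt (fun x => cos (x / 2)) (-sin (x / 2) * (1 / 2)) x :=
  ((hasDerivAt_id x).div_const 2).cos

theorem hasDerivAt_sinh_half (x : ℝ) :
    HasDerivAt (fun x => sinh (x / 2)) (cosh (x / 2) * (1 / 2)) x :=
  ((hasDerivAt_id x).div_const 2).sinh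

theorem hasDerivAt_cosh_half (x : ℝ) :
    HasDerivAt (fun x => cosh (x / 2)) (sinh (x / 2) * (1 / 2)) x :=
  ((hasDerivAt_id x).div_const 2).cosh

theorem continuous_Q : Continuous Q := by unfold Q qf; fun_prop

theorem eventually_Q_update_pos {p : Point} (hp : 0 < Q p) (i : Fin 5) :
    ∀ᶠ y in 𝓝 (p i), 0 < Q (update p i y) := by
  have hc : Continuous fun y => Q (update p i y) :=
    continuous_Q.comp (continuous_const.update i continuous_id)
  exact continuousAt_const.eventually_lt hc.continuousAt (by simpa using hp)

noncomputable def Qderiv : Fin 5 → Point → ℝ :=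
  ![fun p => sinh (p 0 / 2) / 2, dqθ, dqφ, fun p => -(sin (p 1 / 2) * sin (p 2 / 2)),
    fun p => -(cos (p 1 / 2) * cos (p 2 / 2))]

theorem hasDerivAt_Q (i : Fin 5) (p : Point) :
    HasDerivAt (fun y => Q (update p i y)) (Qderiv i p) (p i) := by
  have h := (((hasDerivAt_update_apply_comp hasDerivAt_cosh_half i 0 p).sub_const 1).add
    (((hasDerivAt_const (p i) 1).sub
      (((hasDerivAt_update_apply_comp hasDerivAt_id i 3 p).mul
        (hasDerivAt_update_apply_comp hasDerivAt_sin_half i 1 p)).mul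
          (hasDerivAt_update_apply_comp hasDerivAt_sin_half i 2 p))).sub
      (((hasDerivAt_update_apply_comp hasDerivAt_id i 4 p).mul
        (hasDerivAt_update_apply_comp hasDerivAt_cos_half i 1 p)).mul
          (hasDerivAt_update_apply_comp hasDerivAt_cos_half i 2 p))))
  refine h.congr_deriv ?_
  fin_cases i <;> simp [Qderiv, dqθ, dqφ] <;> ring

noncomputable def dqθDeriv : Fin 5 → Point → ℝ :=
  ![0, fun p => (p 3 * sin (p 1 / 2) * sin (p 2 / 2) + p 4 * cos (p 1 / 2) * cos (p 2 / 2)) / 4,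
    fun p => -(p 3 * cos (p 1 / 2) * cos (p 2 / 2) + p 4 * sin (p 1 / 2) * sin (p 2 / 2)) / 4,
    fun p => -(cos (p 1 / 2) * sin (p 2 / 2)) / 2, fun p => sin (p 1 / 2) * cos (p 2 / 2) / 2]

noncomputable def dqφDeriv : Fin 5 → Point → ℝ :=
  ![0, fun p => -(p 3 * cos (p 1 / 2) * cos (p 2 / 2) + p 4 * sin (p 1 / 2) * sin (p 2 / 2)) / 4,
    fun p => (p 3 * sin (p 1 / 2) * sin (p 2 / 2) + p 4 * cos (p 1 / 2) * cos (p 2 / 2)) / 4,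
    fun p => -(sin (p 1 / 2) * cos (p 2 / 2)) / 2, fun p => cos (p 1 / 2) * sin (p 2 / 2) / 2]

theorem hasDerivAt_dqθ (i : Fin 5) (p : Point) :
    HasDerivAt (fun y => dqθ (update p i y)) (dqθDeriv i p) (p i) := by
  have h := ((((hasDerivAt_update_apply_comp hasDerivAt_id i 4 p).mul
        (hasDerivAt_update_apply_comp hasDerivAt_sin_half i 1 p)).mul
          (hasDerivAt_update_apply_comp hasDerivAt_cos_half i 2 p)).sub
      (((hasDerivAt_update_apply_comp hasDerivAt_id i 3 p).mul
        (hasDerivAt_update_apply_comp hasDerivAt_cos_half i 1 p)).mul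
          (hasDerivAt_update_apply_comp hasDerivAt_sin_half i 2 p))).div_const 2
  refine h.congr_deriv ?_
  fin_cases i <;> simp [dqθDeriv] <;> ring

theorem hasDerivAt_dqφ (i : Fin 5) (p : Point) :
    HasDerivAt (fun y => dqφ (update p i y)) (dqφDeriv i p) (p i) := by
  have h := ((((hasDerivAt_update_apply_comp hasDerivAt_id i 4 p).mul
        (hasDerivAt_update_apply_comp hasDerivAt_cos_half i 1 p)).mul
          (hasDerivAt_update_apply_comp hasDerivAt_sin_half i 2 p)).sub
      (((hasDerivAt_update_apply_comp hasDerivAt_id i 3 p).mul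
        (hasDerivAt_update_apply_comp hasDerivAt_sin_half i 1 p)).mul
          (hasDerivAt_update_apply_comp hasDerivAt_cos_half i 2 p))).div_const 2
  refine h.congr_deriv ?_
  fin_cases i <;> simp [dqφDeriv] <;> ring

def kShift : Fin 5 → ℕ := ![0, 0, 0, 2, 0]

def rShift : Fin 5 → ℕ := ![0, 0, 0, 0, 2]

def sShift : Fin 5 → ℕ := ![1, 1, 1, 0, 0]

/-- Symbols of weight `(kc, rc, s)`. Atoms whose order comes from an inequality rather than from
the algebra, such as `sinh (t/2)` and `∂_θ q` (of order `1`), enter through `of_hasDerivAt`;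
identities are only required on `{Q > 0}`, an open set containing the domain. -/
inductive IsSymbol : ℕ → ℕ → ℝ → (Point → ℝ) → Prop
  | zero {kc rc s} : IsSymbol kc rc s 0
  | const (c : ℝ) : IsSymbol 0 0 0 fun _ => c
  | coord (j : Fin 5) : IsSymbol 0 0 0 fun p => p j
  | sin_half (j : Fin 5) : IsSymbol 0 0 0 fun p => sin (p j / 2)
  | cos_half (j : Fin 5) : IsSymbol 0 0 0 fun p => cos (p j / 2)
  | sinh_half : IsSymbol 0 0 0 fun p => sinh (p 0 / 2)
  | cosh_half : IsSymbol 0 0 0 fun p => cosh (p 0 / 2)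
  | Q_rpow_neg (a : ℝ) : IsSymbol 0 0 (-2 * a) fun p => Q p ^ (-a)
  | add {kc rc s f g} : IsSymbol kc rc s f → IsSymbol kc rc s g → IsSymbol kc rc s (f + g)
  | mul {k₁ r₁ s₁ k₂ r₂ s₂ f g} : IsSymbol k₁ r₁ s₁ f → IsSymbol k₂ r₂ s₂ g →
      IsSymbol (k₁ + k₂) (r₁ + r₂) (s₁ + s₂) (f * g)
  | mono {kc rc s kc' rc' s' f} : kc ≤ kc' → rc ≤ rc' → s' ≤ s → IsSymbol kc rc s f →
      IsSymbol kc' rc' s' f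
  | congr {kc rc s f g} : IsSymbol kc rc s f → (∀ p, 0 < Q p → f p = g p) → IsSymbol kc rc s g
  | of_hasDerivAt {kc rc s f} (f' : Fin 5 → Point → ℝ) :
      (∀ i p, 0 < Q p → HasDerivAt (fun y => f (update p i y)) (f' i p) (p i)) →
      (∀ i, IsSymbol (kc + kShift i) (rc + rShift i) (s - sShift i) (f' i)) →
      IsDominated kc rc s f → IsSymbol kc rc s f

namespace IsSymbol

variable {kc rc : ℕ} {s : ℝ} {f : Point → ℝ}

theorem isDominated (h : IsSymbol kc rc s f) : IsDominated kc rc s f := by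
  induction h with
  | zero => exact ⟨0, le_rfl, fun p hp => by simp⟩
  | const c => exact .of_abs_le (C := |c|) fun _ _ => le_rfl
  | coord j => exact .of_abs_le fun p hp => domain.abs_apply_le_four hp j
  | sin_half j => exact .of_abs_le fun p _ => abs_sin_le_one _
  | cos_half j => exact .of_abs_le fun p _ => abs_cos_le_one _
  | sinh_half =>
    refine .of_abs_le (C := 3) fun p hp => abs_le_of_sq_le_sq' ?_ (by norm_num) |> abs_le.2
    nlinarith [domain.sinh_sq_le hp, domain.X_le_three hp]
  | cosh_half =>
    refine .of_abs_le (C := 2) fun p hp => ?_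
    have h := cosh_sub_one_le_sq (y := p 0 / 2) (by
      rw [abs_of_pos (by linarith [hp.1.1])]; linarith [hp.1.2])
    rw [abs_of_pos (cosh_pos _)]
    nlinarith [hp.1.1, hp.1.2]
  | Q_rpow_neg a => exact isDominated_Q_rpow_neg a
  | add _ _ hf hg => exact hf.add hg
  | mul _ _ hf hg => exact hf.mul hg
  | mono hk hr hs _ hf => exact hf.mono hk hr hs
  | congr _ hfg hf =>
    obtain ⟨C, hC, hf⟩ := hf
    exact ⟨C, hC, fun p hp => hfg p (domain.Q_pos hp) ▸ hf p hp⟩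
  | of_hasDerivAt _ _ _ hf => exact hf

theorem of_weight_zero (h : IsSymbol 0 0 0 f) (hs : s ≤ 0) : IsSymbol kc rc s f :=
  h.mono (Nat.zero_le _) (Nat.zero_le _) hs

theorem ite_zero {c : Prop} [Decidable c] (h : c → IsSymbol kc rc s f) :
    IsSymbol kc rc s fun p => if c then f p else 0 := by
  by_cases hc : c
  · simpa [hc] using h hc
  · simp only [hc, if_false]; exact zero

theorem const_mul (c : ℝ) (h : IsSymbol kc rc s f) : IsSymbol kc rc s fun p => c * f p :=
  ((const c).mul h).mono (zero_add kc).le (zero_add rc).le (zero_add s).ge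

theorem mul_of_weight_zero {f g : Point → ℝ} (hf : IsSymbol 0 0 0 f) (hg : IsSymbol 0 0 0 g) :
    IsSymbol 0 0 0 fun p => f p * g p :=
  (hf.mul hg).mono le_rfl le_rfl (by simp)

theorem u_mul_add_v_mul {f g : Point → ℝ} (hf : IsSymbol 0 0 0 f) (hg : IsSymbol 0 0 0 g) :
    IsSymbol 0 0 0 fun p => p 3 * f p + p 4 * g p :=
  ((coord 3).mul_of_weight_zero hf).add ((coord 4).mul_of_weight_zero hg)

theorem sin_half_weighted {j : Fin 5} (hj : j = 1 ∨ j = 2) :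
    IsSymbol 1 0 1 fun p => sin (p j / 2) := by
  refine of_hasDerivAt (fun i p => if j = i then cos (p j / 2) * (1 / 2) else 0)
    (fun i p _ => hasDerivAt_update_apply_comp hasDerivAt_sin_half i j p)
    (fun i => ite_zero fun hji => ?_) ⟨1, zero_le_one, fun p hp => ?_⟩
  · subst hji
    refine (((cos_half j).mul (const _)).mono (by simp) (by simp) ?_)
    rcases hj with rfl | rfl <;> simp [sShift]
  · have := domain.sinSum_le_weightBound hp
    obtain ⟨h1, -⟩ := domain.half_angle_trig_nonneg hp (j := 1) (.inl rfl)
    obtain ⟨h2, -⟩ := domain.half_angle_trig_nonneg hp (j := 2) (.inr rfl)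
    rw [sinSum] at this
    rcases hj with rfl | rfl <;> rw [abs_of_nonneg (by assumption)] <;> linarith

theorem cos_half_weighted {j : Fin 5} (hj : j = 1 ∨ j = 2) :
    IsSymbol 0 1 1 fun p => cos (p j / 2) := by
  refine of_hasDerivAt (fun i p => if j = i then -sin (p j / 2) * (1 / 2) else 0)
    (fun i p _ => hasDerivAt_update_apply_comp hasDerivAt_cos_half i j p)
    (fun i => ite_zero fun hji => ?_) ⟨1, zero_le_one, fun p hp => ?_⟩
  · subst hji
    refine (((sin_half j).mul (const (-(1 / 2)))).mono (by simp) (by simp) ?_).congr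
      fun p _ => by simp only [Pi.mul_apply]; ring
    rcases hj with rfl | rfl <;> simp [sShift]
  · have := domain.cosSum_le_weightBound hp
    obtain ⟨-, h1⟩ := domain.half_angle_trig_nonneg hp (j := 1) (.inl rfl)
    obtain ⟨-, h2⟩ := domain.half_angle_trig_nonneg hp (j := 2) (.inr rfl)
    rw [cosSum] at this
    rcases hj with rfl | rfl <;> rw [abs_of_nonneg (by assumption)] <;> linarith

theorem sinh_half_weighted : IsSymbol 0 0 1 fun p => sinh (p 0 / 2) := by
  refine of_hasDerivAt (fun i p => if 0 = i then cosh (p 0 / 2) * (1 / 2) else 0)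
    (fun i p _ => hasDerivAt_update_apply_comp hasDerivAt_sinh_half i 0 p)
    (fun i => ite_zero fun hi => ?_) (.of_sq_le fun p hp => domain.sinh_sq_le hp)
  subst hi
  exact (cosh_half.mul (const _)).mono (by simp) (by simp) (by simp [sShift])

theorem shift_of_weight_zero (h : IsSymbol 0 0 0 f) (i : Fin 5) :
    IsSymbol (0 + kShift i) (0 + rShift i) (0 - sShift i) f :=
  h.of_weight_zero (by simp)

end IsSymbol

section

open IsSymbol

theorem isSymbol_u_sin_sin_add_v_cos_cos :
    IsSymbol 0 0 0 fun p =>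
      p 3 * sin (p 1 / 2) * sin (p 2 / 2) + p 4 * cos (p 1 / 2) * cos (p 2 / 2) :=
  (u_mul_add_v_mul ((sin_half 1).mul_of_weight_zero (sin_half 2))
    ((cos_half 1).mul_of_weight_zero (cos_half 2))).congr fun p _ => by ring

theorem isSymbol_u_cos_cos_add_v_sin_sin :
    IsSymbol 0 0 0 fun p =>
      p 3 * cos (p 1 / 2) * cos (p 2 / 2) + p 4 * sin (p 1 / 2) * sin (p 2 / 2) :=
  (u_mul_add_v_mul ((cos_half 1).mul_of_weight_zero (cos_half 2))
    ((sin_half 1).mul_of_weight_zero (sin_half 2))).congr fun p _ => by ring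

theorem isSymbol_dqθ : IsSymbol 0 0 1 dqθ := by
  refine of_hasDerivAt dqθDeriv (fun i p _ => hasDerivAt_dqθ i p) (fun i => ?_)
    (.of_sq_le (c := 1) fun p hp => by simpa using domain.dqθ_sq_le hp)
  fin_cases i <;> simp only [dqθDeriv, kShift, rShift, sShift] <;> norm_num
  · exact IsSymbol.zero
  · exact (isSymbol_u_sin_sin_add_v_cos_cos.const_mul (1 / 4)).congr fun p _ => by ring
  · exact (isSymbol_u_cos_cos_add_v_sin_sin.const_mul (-1 / 4)).congr fun p _ => by ring
  · exact ((((cos_half 1).mul (sin_half_weighted (.inr rfl))).const_mul (-1 / 2)).mono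
      (by norm_num) le_rfl (by norm_num)).congr fun p _ => by simp only [Pi.mul_apply]; ring
  · exact ((((sin_half 1).mul (cos_half_weighted (.inr rfl))).const_mul (1 / 2)).mono
      le_rfl (by norm_num) (by norm_num)).congr fun p _ => by simp only [Pi.mul_apply]; ring

theorem isSymbol_dqφ : IsSymbol 0 0 1 dqφ := by
  refine of_hasDerivAt dqφDeriv (fun i p _ => hasDerivAt_dqφ i p) (fun i => ?_)
    (.of_sq_le (c := 1) fun p hp => by simpa using domain.dqφ_sq_le hp)
  fin_cases i <;> simp only [dqφDeriv, kShift, rShift, sShift] <;> norm_num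
  · exact IsSymbol.zero
  · exact (isSymbol_u_cos_cos_add_v_sin_sin.const_mul (-1 / 4)).congr fun p _ => by ring
  · exact (isSymbol_u_sin_sin_add_v_cos_cos.const_mul (1 / 4)).congr fun p _ => by ring
  · exact ((((sin_half_weighted (.inl rfl)).mul (cos_half 2)).const_mul (-1 / 2)).mono
      (by norm_num) le_rfl (by norm_num)).congr fun p _ => by simp only [Pi.mul_apply]; ring
  · exact ((((cos_half_weighted (.inl rfl)).mul (sin_half 2)).const_mul (1 / 2)).mono
      le_rfl (by norm_num) (by norm_num)).congr fun p _ => by simp only [Pi.mul_apply]; ring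

theorem isSymbol_Qderiv (i : Fin 5) : IsSymbol (kShift i) (rShift i) (2 - sShift i) (Qderiv i) := by
  fin_cases i <;> simp only [Qderiv, kShift, rShift, sShift] <;> norm_num
  · exact (sinh_half_weighted.const_mul (1 / 2)).congr fun p _ => by ring
  · exact isSymbol_dqθ
  · exact isSymbol_dqφ
  · exact (((sin_half_weighted (.inl rfl)).mul (sin_half_weighted (.inr rfl))).const_mul
      (-1)).mono le_rfl le_rfl (by norm_num) |>.congr fun p _ => by simp only [Pi.mul_apply]; ring
  · exact (((cos_half_weighted (.inl rfl)).mul (cos_half_weighted (.inr rfl))).const_mul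
      (-1)).mono le_rfl le_rfl (by norm_num) |>.congr fun p _ => by simp only [Pi.mul_apply]; ring

end

namespace IsSymbol

variable {kc rc : ℕ} {s : ℝ} {f : Point → ℝ}

theorem exists_hasDerivAt (h : IsSymbol kc rc s f) (i : Fin 5) :
    ∃ g, IsSymbol (kc + kShift i) (rc + rShift i) (s - sShift i) g ∧
      ∀ p, 0 < Q p → HasDerivAt (fun y => f (update p i y)) (g p) (p i) := by
  induction h with
  | zero => exact ⟨0, zero, fun p _ => hasDerivAt_const _ _⟩
  | const c => exact ⟨0, zero, fun p _ => hasDerivAt_const _ _⟩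
  | coord j =>
    exact ⟨_, (ite_zero fun _ => const 1).shift_of_weight_zero i,
      fun p _ => hasDerivAt_update_apply_comp hasDerivAt_id i j p⟩
  | sin_half j =>
    exact ⟨_, (ite_zero fun _ => (cos_half j).mul_of_weight_zero (const _)).shift_of_weight_zero i,
      fun p _ => hasDerivAt_update_apply_comp hasDerivAt_sin_half i j p⟩
  | cos_half j =>
    refine ⟨_, (ite_zero fun _ => ?_).shift_of_weight_zero i,
      fun p _ => hasDerivAt_update_apply_comp hasDerivAt_cos_half i j p⟩
    exact ((sin_half j).mul_of_weight_zero (const (-(1 / 2)))).congr fun p _ => by ring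
  | sinh_half =>
    exact ⟨_, (ite_zero fun _ => cosh_half.mul_of_weight_zero (const _)).shift_of_weight_zero i,
      fun p _ => hasDerivAt_update_apply_comp hasDerivAt_sinh_half i 0 p⟩
  | cosh_half =>
    exact ⟨_, (ite_zero fun _ => sinh_half.mul_of_weight_zero (const _)).shift_of_weight_zero i,
      fun p _ => hasDerivAt_update_apply_comp hasDerivAt_cosh_half i 0 p⟩
  | Q_rpow_neg a =>
    refine ⟨fun p => Qderiv i p * -a * Q p ^ (-a - 1), ?_, fun p hp => ?_⟩
    · refine (((isSymbol_Qderiv i).mul ((Q_rpow_neg (a + 1)).const_mul (-a))).mono (by simp)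
        (by simp) (by linarith)).congr fun p _ => ?_
      rw [Pi.mul_apply, show -(a + 1) = -a - 1 by ring]; ring
    · simpa using (hasDerivAt_Q i p).rpow_const (p := -a) (.inl (by simpa using hp.ne'))
  | add _ _ ihf ihg =>
    obtain ⟨g₁, hg₁, hd₁⟩ := ihf
    obtain ⟨g₂, hg₂, hd₂⟩ := ihg
    exact ⟨g₁ + g₂, hg₁.add hg₂, fun p hp => (hd₁ p hp).add (hd₂ p hp)⟩
  | @mul k₁ r₁ s₁ k₂ r₂ s₂ f g hf hg ihf ihg =>
    obtain ⟨g₁, hg₁, hd₁⟩ := ihf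
    obtain ⟨g₂, hg₂, hd₂⟩ := ihg
    refine ⟨fun p => g₁ p * g p + f p * g₂ p, ?_, fun p hp => ?_⟩
    · exact ((hg₁.mul hg).mono (by omega) (by omega) (by linarith)).add
        ((hf.mul hg₂).mono (by omega) (by omega) (by linarith))
    · have h := (hd₁ p hp).mul (hd₂ p hp)
      simp only [update_eq_self] at h
      exact h
  | mono hk hr hs _ ih =>
    obtain ⟨g, hg, hd⟩ := ih
    exact ⟨g, hg.mono (by omega) (by omega) (by linarith), hd⟩
  | congr _ hfg ih =>
    obtain ⟨g, hg, hd⟩ := ih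
    exact ⟨g, hg, fun p hp => (hd p hp).congr_of_eventuallyEq
      ((eventually_Q_update_pos hp i).mono fun y hy => (hfg _ hy).symm)⟩
  | of_hasDerivAt f' hd hf' _ _ => exact ⟨f' i, hf' i, hd i⟩

theorem partialDeriv (h : IsSymbol kc rc s f) (i : Fin 5) :
    IsSymbol (kc + kShift i) (rc + rShift i) (s - sShift i) (PsilEstimate.partialDeriv i f) :=
  let ⟨_, hg, hd⟩ := h.exists_hasDerivAt i
  hg.congr fun p hp => (hd p hp).deriv.symm

theorem iterate_partialDeriv (h : IsSymbol kc rc s f) (i : Fin 5) (n : ℕ) :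
    IsSymbol (kc + n * kShift i) (rc + n * rShift i) (s - n * sShift i)
      ((PsilEstimate.partialDeriv i)^[n] f) := by
  induction n with
  | zero => simpa using h
  | succ n ih =>
    rw [iterate_succ_apply']
    exact (ih.partialDeriv i).mono (by rw [add_one_mul]; omega) (by rw [add_one_mul]; omega)
      (by push_cast; linarith)

theorem mixedPartial (h : IsSymbol kc rc s f) (K R L N M : ℕ) :
    IsSymbol (kc + 2 * K) (rc + 2 * R) (s - (M + N + L)) (PsilEstimate.mixedPartial K R L N M f) :=
  (((((h.iterate_partialDeriv 0 M).iterate_partialDeriv 1 N).iterate_partialDeriv 2 L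
    ).iterate_partialDeriv 4 R).iterate_partialDeriv 3 K).mono
      (by simp [kShift]; omega) (by simp [rShift]; omega) (by simp [sShift])

end IsSymbol

noncomputable def psil (l : ℝ) (p : Point) : ℝ := Psil l (p 0) (p 1) (p 2) (p 3) (p 4)

theorem PsilD_eq_mixedPartial (l : ℝ) (K R L N M : ℕ) (t θ φ u v : ℝ) :
    PsilD l K R L N M t θ φ u v = mixedPartial K R L N M (psil l) ![t, θ, φ, u, v] := by
  simp only [mixedPartial, ← iteratedDeriv_update_eq_iterate]
  simp [PsilD, psil]

theorem isSymbol_psil (l : ℝ) : IsSymbol 0 0 (1 - 2 * l) (psil l) :=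
  ((IsSymbol.sinh_half_weighted.mul (.Q_rpow_neg l)).mono le_rfl le_rfl (by linarith)).congr
    fun p hp => by rw [Pi.mul_apply, rpow_neg hp.le, ← div_eq_mul_inv]; rfl

end PsilEstimate

theorem psil_mixed_derivative_estimate_general (l : ℝ) (M N K R L : ℕ)
    (hK : K ≤ 1) (hR : R ≤ 1) :
    ∃ C : ℝ, 0 < C ∧ ∀ t ∈ Ioc (0 : ℝ) 1, ∀ θ ∈ Icc (0 : ℝ) π, ∀ φ ∈ Icc (0 : ℝ) π,
      ∀ u ∈ Icc (-1 : ℝ) 1, ∀ v ∈ Icc (-1 : ℝ) 1,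
      |PsilD l K R L N M t θ φ u v| ≤
        C * ∑ k ∈ Finset.range 3, ∑ r ∈ Finset.range 3,
          (Real.sin (θ/2) + Real.sin (φ/2)) ^ (K * k) *
          (Real.cos (θ/2) + Real.cos (φ/2)) ^ (R * r) *
          (t ^ 2 + qf θ φ u v) ^
            (-(l + ((L : ℝ) + N + M - 1 + K * k + R * r) / 2)) := by
  open PsilEstimate in
  have hsymb :
      IsSymbol (2 * K) (2 * R) (1 - 2 * l - (M + N + L)) (mixedPartial K R L N M (psil l)) :=
    ((isSymbol_psil l).mixedPartial K R L N M).mono (by omega) (by omega) le_rfl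
  obtain ⟨C, hC, hbound⟩ := hsymb.isDominated
  refine ⟨C + 1, by linarith, fun t ht θ hθ φ hφ u hu v hv => ?_⟩
  have hp : ![t, θ, φ, u, v] ∈ domain := ⟨ht, hθ, hφ, hu, hv⟩
  rw [PsilD_eq_mixedPartial]
  refine (hbound _ hp).trans (mul_le_mul (by linarith) ?_ (domain.weightBound_nonneg hp _ _ _)
    (by linarith))
  refine (domain.weightBound_le_sum hp hK hR _).trans_eq (Finset.sum_congr rfl fun k _ =>
    Finset.sum_congr rfl fun r _ => ?_)
  simp only [weightTerm, sinSum, cosSum, X]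
  congr 1
  push_cast
  ring_nf

theorem psil_mixed_derivative_estimate (l : ℝ) (M N K R L : ℕ)
    (hK : K ≤ 1) (hR : R ≤ 1) (hL : L ≤ 1) :
    ∃ C : ℝ, 0 < C ∧ ∀ t ∈ Ioc (0 : ℝ) 1, ∀ θ ∈ Icc (0 : ℝ) π, ∀ φ ∈ Icc (0 : ℝ) π,
      ∀ u ∈ Icc (-1 : ℝ) 1, ∀ v ∈ Icc (-1 : ℝ) 1,
      |PsilD l K R L N M t θ φ u v| ≤
        C * ∑ k ∈ Finset.range 3, ∑ r ∈ Finset.range 3,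
          (Real.sin (θ/2) + Real.sin (φ/2)) ^ (K * k) *
          (Real.cos (θ/2) + Real.cos (φ/2)) ^ (R * r) *
          (t ^ 2 + qf θ φ u v) ^
            (-(l + ((L : ℝ) + N + M - 1 + K * k + R * r) / 2)) :=
  psil_mixed_derivative_estimate_general l M N K R L hK hR
end

section
/- Let τ > 0 be fixed. Then there exists a constant c > 0 (depending only on τ) such that for all real numbers a, b, c', d with 0 < a ≤ b, a ≤ c', b ≤ d, c' ≤ d and a + d = b + c': a^{-τ} − b^{-τ} − c'^{-τ} + d^{-τ} ≥ c · (min(min(b,c') − a, a))² / a^{τ+2}. -/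
open MeasureTheory Real Set
open scoped ENNReal Classical

/-!
The function `f x = x ^ (-τ)` is convex, so its increments `f (x + δ) - f x` increase with `x`;
this lets us move `b` and `c'` down to `a + m`, where `m = min (min b c' - a) a`, and bound the
second difference by the symmetric one `f a - 2 f (a + m) + f (a + 2 m)`. On `[a, 3a]` we have
`f'' ≥ τ (τ + 1) (3a) ^ (-τ - 2)`, so `f` is strongly convex there and the symmetric second
difference is at least that modulus times `m ^ 2`.
-/

theorem strongConvexOn_of_hasDerivWithinAt2_ge {D : Set ℝ} (hD : Convex ℝ D) {f f' f'' : ℝ → ℝ}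
    {m : ℝ} (hf : ContinuousOn f D)
    (hf' : ∀ x ∈ interior D, HasDerivWithinAt f (f' x) (interior D) x)
    (hf'' : ∀ x ∈ interior D, HasDerivWithinAt f' (f'' x) (interior D) x)
    (hm : ∀ x ∈ interior D, m ≤ f'' x) : StrongConvexOn D m f := by
  simp only [strongConvexOn_iff_convex, Real.norm_eq_abs, sq_abs]
  refine convexOn_of_hasDerivWithinAt2_nonneg hD (f' := fun x ↦ f' x - m * x)
    (f'' := fun x ↦ f'' x - m) ?_ (fun x hx ↦ ?_) (fun x hx ↦ ?_) (fun x hx ↦ sub_nonneg.2 (hm x hx))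
  · exact hf.sub (by fun_prop)
  · have hsq : HasDerivAt (fun y : ℝ ↦ m / 2 * y ^ 2) (m * x) x :=
      ((hasDerivAt_pow 2 x).const_mul (m / 2)).congr_deriv (by push_cast; ring)
    exact (hf' x hx).sub hsq.hasDerivWithinAt
  · simpa using (hf'' x hx).fun_sub ((hasDerivAt_id' x).const_mul m).hasDerivWithinAt

theorem StrongConvexOn.mul_sq_le_second_difference {s : Set ℝ} {f : ℝ → ℝ} {m x h : ℝ}
    (hf : StrongConvexOn s m f) (hx : x ∈ s) (hx' : x + 2 * h ∈ s) :
    m * h ^ 2 ≤ f x - 2 * f (x + h) + f (x + 2 * h) := by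
  have hmid := hf.2 hx hx' (by norm_num : (0 : ℝ) ≤ 1 / 2) (by norm_num : (0 : ℝ) ≤ 1 / 2)
    (by norm_num)
  have hcomb : (1 / 2 : ℝ) • x + (1 / 2 : ℝ) • (x + 2 * h) = x + h := by
    simp only [smul_eq_mul]; ring
  rw [hcomb] at hmid
  simp only [smul_eq_mul, Real.norm_eq_abs, sq_abs] at hmid
  nlinarith [hmid]

theorem ConvexOn.increment_le_increment {s : Set ℝ} {f : ℝ → ℝ} (hf : ConvexOn ℝ s f)
    {x y δ : ℝ} (hx : x ∈ s) (hyδ : y + δ ∈ s) (hxy : x ≤ y) (hδ : 0 ≤ δ) :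
    f (x + δ) - f x ≤ f (y + δ) - f y := by
  rcases hδ.eq_or_lt with rfl | hδ
  · simp
  have hy : y ∈ s := hf.1.ordConnected.out hx hyδ ⟨hxy, by linarith⟩
  have hxδ : x + δ ∈ s := hf.1.ordConnected.out hx hyδ ⟨by linarith, by linarith⟩
  have hleft := hf.secant_mono hx hxδ hyδ (by linarith) (by linarith) (by linarith)
  have hright := hf.secant_mono hyδ hx hy (by linarith) (by linarith) hxy
  rw [add_sub_cancel_left] at hleft
  rw [← neg_div_neg_eq, neg_sub, neg_sub, ← neg_div_neg_eq (f y - _), neg_sub, neg_sub,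
    add_sub_cancel_left] at hright
  exact (div_le_div_iff_of_pos_right hδ).1 (hleft.trans hright)

theorem ConvexOn.second_difference_le {f : ℝ → ℝ} {a b c d m : ℝ} (hf : ConvexOn ℝ (Icc a d) f)
    (hm : 0 ≤ m) (hb : a + m ≤ b) (hc : a + m ≤ c) (hd : a + d = b + c) :
    f a - 2 * f (a + m) + f (a + 2 * m) ≤ f a - f b - f c + f d := by
  have hshift_b := hf.increment_le_increment (x := a + m) (y := c + m) (δ := b - (a + m))
    ⟨by linarith, by linarith⟩ ⟨by linarith, by linarith⟩ (by linarith) (by linarith)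
  have hshift_c := hf.increment_le_increment (x := a + m) (y := c) (δ := m)
    ⟨by linarith, by linarith⟩ ⟨by linarith, by linarith⟩ hc hm
  rw [show a + m + (b - (a + m)) = b by ring, show c + m + (b - (a + m)) = d by linarith]
    at hshift_b
  rw [show a + m + m = a + 2 * m by ring] at hshift_c
  linarith

theorem strongConvexOn_rpow_neg {τ a b : ℝ} (hτ : 0 ≤ τ) (ha : 0 < a) :
    StrongConvexOn (Icc a b) (τ * (τ + 1) * b ^ (-τ - 2)) fun x : ℝ ↦ x ^ (-τ) := by
  refine strongConvexOn_of_hasDerivWithinAt2_ge (convex_Icc a b)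
    (f' := fun x ↦ -τ * x ^ (-τ - 1)) (f'' := fun x ↦ -τ * ((-τ - 1) * x ^ (-τ - 1 - 1)))
    (fun x hx ↦ ?_) (fun x hx ↦ ?_) (fun x hx ↦ ?_) (fun x hx ↦ ?_)
  all_goals simp only [interior_Icc, mem_Ioo, mem_Icc] at hx
  · exact (continuousAt_rpow_const _ _ (Or.inl (ha.trans_le hx.1).ne')).continuousWithinAt
  · exact (hasDerivAt_rpow_const (Or.inl (ha.trans hx.1).ne')).hasDerivWithinAt
  · exact ((hasDerivAt_rpow_const (Or.inl (ha.trans hx.1).ne')).const_mul (-τ)).hasDerivWithinAt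
  · have hpow : b ^ (-τ - 2) ≤ x ^ (-τ - 1 - 1) := by
      rw [show -τ - 1 - 1 = -τ - 2 by ring]
      exact rpow_le_rpow_of_nonpos (ha.trans hx.1) hx.2.le (by linarith)
    nlinarith [mul_nonneg hτ (by linarith : (0 : ℝ) ≤ τ + 1)]

theorem second_difference_lower_bound (τ : ℝ) (hτ : 0 < τ) :
    ∃ c : ℝ, 0 < c ∧ ∀ a b c' d : ℝ, 0 < a → a ≤ b → a ≤ c' → b ≤ d → c' ≤ d →
      a + d = b + c' →
      c * ((min (min b c' - a) a) ^ 2 / a ^ (τ + 2))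
        ≤ a ^ (-τ) - b ^ (-τ) - c' ^ (-τ) + d ^ (-τ) := by
  refine ⟨τ * (τ + 1) * 3 ^ (-τ - 2), by positivity, ?_⟩
  intro a b c' d ha hab hac hbd _ hsum
  set m := min (min b c' - a) a
  have hm : 0 ≤ m := le_min (sub_nonneg.2 (le_min hab hac)) ha.le
  have hmb : a + m ≤ b := by linarith [min_le_left (min b c' - a) a, min_le_left b c']
  have hmc : a + m ≤ c' := by linarith [min_le_left (min b c' - a) a, min_le_right b c']
  have hma : m ≤ a := min_le_right _ _
  have hconvex : ConvexOn ℝ (Icc a d) fun x : ℝ ↦ x ^ (-τ) :=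
    strongConvexOn_zero.1 ((strongConvexOn_rpow_neg hτ.le ha).mono
      (mul_nonneg (by positivity) (rpow_nonneg (by linarith) _)))
  have hstrong := (strongConvexOn_rpow_neg (b := 3 * a) hτ.le ha).mul_sq_le_second_difference
    (x := a) (h := m) ⟨le_rfl, by linarith⟩ ⟨by linarith, by linarith⟩
  have hmodulus : τ * (τ + 1) * 3 ^ (-τ - 2) * (m ^ 2 / a ^ (τ + 2))
      = τ * (τ + 1) * (3 * a) ^ (-τ - 2) * m ^ 2 := by
    rw [mul_rpow (by norm_num) ha.le, show -τ - 2 = -(τ + 2) by ring, rpow_neg ha.le]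
    ring
  rw [hmodulus]
  exact hstrong.trans (hconvex.second_difference_le hm hmb hmc hsum)
end

section
/- Let α, β > -1. Then there exist constants 0 < c ≤ C (depending only on α and β) such that for all t ≥ 1 and all θ, φ ∈ [0,π]: c · exp(−t(α+β+1)/2) ≤ 𝓗_t^{α,β}(θ,φ) ≤ C · exp(−t(α+β+1)/2). -/
open MeasureTheory Real Set
open scoped ENNReal Classical

set_option maxHeartbeats 1000000

private lemma poch_pos {a : ℝ} (ha : 0 < a) (n : ℕ) :
    0 < (ascPochhammer ℝ n).eval a := by
  induction n with
  | zero => simp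
  | succ k ih =>
      rw [ascPochhammer_succ_eval]
      have : (0:ℝ) < a + k := by positivity
      exact mul_pos ih this

private lemma poch_upper {a : ℝ} (ha : 0 < a) {N : ℕ} (haN : a ≤ N) (k : ℕ) :
    (ascPochhammer ℝ k).eval a ≤ (k + 1 : ℝ) ^ N * (Nat.factorial k) := by
  induction k with
  | zero => simp
  | succ k ih =>
      rw [ascPochhammer_succ_eval]
      have hposk : (0:ℝ) < (k:ℝ) + 1 := by positivity
      have h1 : (ascPochhammer ℝ k).eval a * (a + k) ≤
          (((k:ℝ)+1) ^ N * (Nat.factorial k)) * ((N:ℝ) + k) := by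
        have hak : (0:ℝ) ≤ a + k := by positivity
        have h2 : a + (k:ℝ) ≤ (N:ℝ) + k := by linarith
        exact mul_le_mul ih h2 hak (by positivity)
      refine h1.trans ?_
      have hber : 1 + (N:ℝ) * (1/((k:ℝ)+1)) ≤ (1 + 1/((k:ℝ)+1)) ^ N := by
        have h0 : (0:ℝ) ≤ 1/((k:ℝ)+1) := by positivity
        exact one_add_mul_le_pow (by linarith) N
      have h3 : ((k:ℝ)+1)^N * (((k:ℝ)+1) + N) ≤ ((k:ℝ)+2)^N * ((k:ℝ)+1) := by
        have c1 : ((k:ℝ)+1)^N * (((k:ℝ)+1) + N)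
            = (((k:ℝ)+1)^N * ((k:ℝ)+1)) * (1 + (N:ℝ) * (1/((k:ℝ)+1))) := by
          field_simp
        have c2 : (((k:ℝ)+1)^N * ((k:ℝ)+1)) * (1 + (N:ℝ) * (1/((k:ℝ)+1)))
            ≤ (((k:ℝ)+1)^N * ((k:ℝ)+1)) * (1 + 1/((k:ℝ)+1)) ^ N := by
          apply mul_le_mul_of_nonneg_left hber (by positivity)
        have c3 : (((k:ℝ)+1)^N * ((k:ℝ)+1)) * (1 + 1/((k:ℝ)+1)) ^ N
            = (((k:ℝ)+1) * (1 + 1/((k:ℝ)+1)))^N * ((k:ℝ)+1) := by rw [mul_pow]; ring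
        have c4 : ((k:ℝ)+1) * (1 + 1/((k:ℝ)+1)) = (k:ℝ)+2 := by field_simp; ring
        rw [c1]; rw [c4] at c3; exact c2.trans_eq c3
      have hfac : (0:ℝ) ≤ (Nat.factorial k : ℝ) := by positivity
      calc (((k:ℝ)+1) ^ N * (Nat.factorial k)) * ((N:ℝ) + k)
          ≤ (((k:ℝ)+1) ^ N * (Nat.factorial k)) * (((k:ℝ)+1) + N) := by
            apply mul_le_mul_of_nonneg_left (by linarith) (by positivity)
        _ = (((k:ℝ)+1)^N * (((k:ℝ)+1) + N)) * (Nat.factorial k) := by ring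
        _ ≤ (((k:ℝ)+2)^N * ((k:ℝ)+1)) * (Nat.factorial k) := by
            apply mul_le_mul_of_nonneg_right h3 hfac
        _ = ((k:ℝ)+2)^N * (((k:ℝ)+1) * (Nat.factorial k)) := by ring
        _ = ((k+1 : ℕ) + 1 : ℝ)^N * (Nat.factorial (k+1)) := by
            push_cast [Nat.factorial_succ]; ring

private lemma poch_mono {a b : ℝ} (ha : 0 < a) (hab : a ≤ b) (n : ℕ) :
    (ascPochhammer ℝ n).eval a ≤ (ascPochhammer ℝ n).eval b := by
  induction n with
  | zero => simp
  | succ k ih =>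
      rw [ascPochhammer_succ_eval, ascPochhammer_succ_eval]
      have h1 : (0:ℝ) ≤ a + k := by positivity
      have h2 : a + (k:ℝ) ≤ b + k := by linarith
      exact mul_le_mul ih h2 h1 (poch_pos (lt_of_lt_of_le ha hab) k).le

private lemma poch_lower {b : ℝ} (hb : 0 < b) (m : ℕ) :
    min b 1 * (Nat.factorial m) / ((m:ℝ) + 1) ≤ (ascPochhammer ℝ m).eval b := by
  set δ := min b 1 with hδ
  have hδ0 : 0 < δ := lt_min hb one_pos
  have hδ1 : δ ≤ 1 := min_le_right _ _
  have hδb : δ ≤ b := min_le_left _ _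
  have key : ∀ m : ℕ, δ * (Nat.factorial m) ≤ (ascPochhammer ℝ (m+1)).eval δ := by
    intro m
    induction m with
    | zero => simp [ascPochhammer_one]
    | succ k ih =>
        rw [ascPochhammer_succ_eval]
        have h1 : ((k:ℝ)+1) ≤ δ + (k+1 : ℕ) := by push_cast; linarith
        have h2 : δ * (Nat.factorial (k+1)) = (δ * Nat.factorial k) * ((k:ℝ)+1) := by
          rw [Nat.factorial_succ]; push_cast; ring
        rw [h2]
        exact mul_le_mul ih h1 (by positivity) (poch_pos hδ0 _).le
  have hmono := poch_mono hδ0 hδb m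
  match m with
  | 0 => simpa using hδ1
  | Nat.succ k =>
      refine le_trans ?_ (le_trans (key k) hmono)
      rw [Nat.factorial_succ]
      rw [div_le_iff₀ (by positivity)]
      push_cast
      have : (0:ℝ) ≤ δ * Nat.factorial k := by positivity
      nlinarith [this]

private lemma nat_cast_ineq1 (m n : ℕ) : ((m + n : ℕ) : ℝ) + 1 ≤ ((m:ℝ) + 1) * ((n:ℝ) + 1) := by
  push_cast
  nlinarith [Nat.cast_nonneg (α := ℝ) m, Nat.cast_nonneg (α := ℝ) n]

private lemma nat_cast_ineq2 (m n : ℕ) : (1:ℝ) ≤ ((m:ℝ) + 1) * ((n:ℝ) + 1) := by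
  nlinarith [Nat.cast_nonneg (α := ℝ) m, Nat.cast_nonneg (α := ℝ) n]

private lemma F4_bounds (a₁ a₂ b₁ b₂ : ℝ) (ha₁ : 0 < a₁) (ha₂ : 0 < a₂)
    (hb₁ : 0 < b₁) (hb₂ : 0 < b₂) {r₀ : ℝ} (hr0 : 0 < r₀) (hr1 : r₀ < 1) :
    ∃ K : ℝ, 0 < K ∧ ∀ u v : ℝ, 0 ≤ u → 0 ≤ v → u + v ≤ r₀ →
      1 ≤ F4 a₁ a₂ b₁ b₂ (u ^ 2) (v ^ 2) ∧ F4 a₁ a₂ b₁ b₂ (u ^ 2) (v ^ 2) ≤ K := by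
  set N₁ := ⌈a₁⌉₊ with hN₁
  set N₂ := ⌈a₂⌉₊ with hN₂
  set M := N₁ + N₂ + 2 with hM
  set δ₁ := min b₁ 1 with hδ₁def
  set δ₂ := min b₂ 1 with hδ₂def
  have hδ₁ : 0 < δ₁ := lt_min hb₁ one_pos
  have hδ₂ : 0 < δ₂ := lt_min hb₂ one_pos
  set D := (δ₁ * δ₂)⁻¹ with hD
  have hD0 : 0 < D := by positivity
  set ρ := r₀ ^ 2 with hρdef
  have hρ0 : 0 < ρ := by positivity
  have hρ1 : ρ < 1 := by nlinarith
  set g : ℕ → ℝ := fun i => ((i:ℝ) + 1) ^ M * ρ ^ i with hgdef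
  have hg0 : ∀ i, 0 ≤ g i := fun i => by positivity
  have hgsum : Summable g := by
    have h1 : Summable (fun n : ℕ => (n:ℝ) ^ M * ρ ^ n) :=
      summable_pow_mul_geometric_of_norm_lt_one M
        (by rw [Real.norm_eq_abs, abs_of_pos hρ0]; exact hρ1)
    have h2 : Summable ((fun n : ℕ => (n:ℝ) ^ M * ρ ^ n) ∘ Nat.succ) :=
      h1.comp_injective Nat.succ_injective
    have h3 := h2.mul_left ρ⁻¹
    refine h3.congr fun n => ?_
    simp only [Function.comp, Nat.succ_eq_add_one, hgdef]
    push_cast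
    field_simp
    ring
  have hKsum : Summable (fun p : ℕ × ℕ => D * (g p.1 * g p.2)) :=
    ((hgsum.mul_of_nonneg hgsum hg0 hg0).mul_left D)
  refine ⟨∑' p : ℕ × ℕ, D * (g p.1 * g p.2), ?_, ?_⟩
  · have h1 := Summable.le_tsum hKsum (0,0) (fun p _ => by positivity)
    have h00 : (0:ℝ) < D * (g (0,0).1 * g (0,0).2) := by
      simp only [hgdef]; positivity
    linarith
  intro u v hu hv huv
  set T : ℕ × ℕ → ℝ := fun p =>
    (Polynomial.eval a₁ (ascPochhammer ℝ (p.1 + p.2)) *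
      Polynomial.eval a₂ (ascPochhammer ℝ (p.1 + p.2))) /
    (Polynomial.eval b₁ (ascPochhammer ℝ p.1) * Polynomial.eval b₂ (ascPochhammer ℝ p.2) *
      (Nat.factorial p.1) * (Nat.factorial p.2)) * (u ^ 2) ^ p.1 * (v ^ 2) ^ p.2 with hTdef
  have hF4 : F4 a₁ a₂ b₁ b₂ (u ^ 2) (v ^ 2) = ∑' p : ℕ × ℕ, T p := rfl
  have hT0 : ∀ p, 0 ≤ T p := by
    intro p
    have h1 := poch_pos ha₁ (p.1 + p.2)
    have h2 := poch_pos ha₂ (p.1 + p.2)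
    have h3 := poch_pos hb₁ p.1
    have h4 := poch_pos hb₂ p.2
    have h5 : (0:ℝ) < (Nat.factorial p.1 : ℝ) := by positivity
    have h6 : (0:ℝ) < (Nat.factorial p.2 : ℝ) := by positivity
    apply mul_nonneg (mul_nonneg _ (by positivity)) (by positivity)
    exact div_nonneg (by positivity) (by positivity)
  have hTle : ∀ p : ℕ × ℕ, T p ≤ D * (g p.1 * g p.2) := by
    rintro ⟨m, n⟩
    have hTeq : T (m, n) =
        Polynomial.eval a₁ (ascPochhammer ℝ (m + n)) *
          Polynomial.eval a₂ (ascPochhammer ℝ (m + n)) /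
        (Polynomial.eval b₁ (ascPochhammer ℝ m) * Polynomial.eval b₂ (ascPochhammer ℝ n) *
          (Nat.factorial m) * (Nat.factorial n)) * (u ^ 2) ^ m * (v ^ 2) ^ n := rfl
    rw [hTeq]
    have hA := poch_upper ha₁ (Nat.le_ceil a₁) (m + n)
    have hB := poch_upper ha₂ (Nat.le_ceil a₂) (m + n)
    have hPl := poch_lower hb₁ m
    have hQl := poch_lower hb₂ n
    have hPpos := poch_pos hb₁ m
    have hQpos := poch_pos hb₂ n
    have hApos := poch_pos ha₁ (m + n)
    have hBpos := poch_pos ha₂ (m + n)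
    set A := Polynomial.eval a₁ (ascPochhammer ℝ (m + n)) with hAdef
    set B := Polynomial.eval a₂ (ascPochhammer ℝ (m + n)) with hBdef
    set P := Polynomial.eval b₁ (ascPochhammer ℝ m) with hPdef
    set Q := Polynomial.eval b₂ (ascPochhammer ℝ n) with hQdef
    set F1 : ℝ := ((Nat.factorial m : ℕ) : ℝ) with hF1def
    set F2 : ℝ := ((Nat.factorial n : ℕ) : ℝ) with hF2def
    set KF : ℝ := ((Nat.factorial (m + n) : ℕ) : ℝ) with hKFdef
    set c : ℝ := ((Nat.choose (m + n) n : ℕ) : ℝ) with hcdef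
    set p : ℝ := (m : ℝ) + 1 with hpdef
    set q : ℝ := (n : ℝ) + 1 with hqdef
    have hF1 : (0:ℝ) < F1 := by rw [hF1def]; positivity
    have hF2 : (0:ℝ) < F2 := by rw [hF2def]; positivity
    have hp0 : (0:ℝ) < p := by rw [hpdef]; positivity
    have hq0 : (0:ℝ) < q := by rw [hqdef]; positivity
    have hc0 : (0:ℝ) ≤ c := by rw [hcdef]; positivity
    have hden : (0:ℝ) < P * Q * F1 * F2 :=
      mul_pos (mul_pos (mul_pos hPpos hQpos) hF1) hF2
    rw [div_mul_eq_mul_div, div_mul_eq_mul_div, div_le_iff₀ hden]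
    have hfact : KF = c * F1 * F2 := by
      rw [hKFdef, hcdef, hF1def, hF2def, ← Nat.add_choose_mul_factorial_mul_factorial m n]
      push_cast; ring
    have hchoose : c * u ^ m * v ^ n ≤ r₀ ^ (m + n) := by
      have hbp : u ^ m * v ^ (m + n - m) * ((m + n).choose m : ℝ) ≤ (u + v) ^ (m + n) := by
        rw [add_pow u v (m + n)]
        exact Finset.single_le_sum
          (f := fun i => u ^ i * v ^ (m + n - i) * ((m + n).choose i : ℝ))
          (fun i _ => by positivity) (by simp [Nat.lt_succ_iff])
      have hkm : m + n - m = n := by omega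
      have hcc : (((m + n).choose m : ℕ) : ℝ) = c := by
        rw [hcdef, Nat.choose_symm_add]
      rw [hkm, hcc] at hbp
      calc c * u ^ m * v ^ n = u ^ m * v ^ n * c := by ring
        _ ≤ (u + v) ^ (m + n) := hbp
        _ ≤ r₀ ^ (m + n) := pow_le_pow_left₀ (by positivity) huv _
    have hsq : (c * u ^ m * v ^ n) ^ 2 ≤ ρ ^ m * ρ ^ n := by
      calc (c * u ^ m * v ^ n) ^ 2 ≤ (r₀ ^ (m + n)) ^ 2 :=
            pow_le_pow_left₀ (by positivity) hchoose 2
        _ = ρ ^ m * ρ ^ n := by rw [hρdef]; ring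
    have hAB : A * B ≤ (((m + n : ℕ):ℝ) + 1) ^ (N₁ + N₂) * (c * F1 * F2) ^ 2 := by
      calc A * B ≤ ((((m + n : ℕ):ℝ) + 1) ^ N₁ * KF) * ((((m + n : ℕ):ℝ) + 1) ^ N₂ * KF) :=
            mul_le_mul hA hB hBpos.le (by positivity)
        _ = (((m + n : ℕ):ℝ) + 1) ^ (N₁ + N₂) * KF ^ 2 := by rw [pow_add]; ring
        _ = _ := by rw [hfact]
    have hk1 : (((m + n : ℕ):ℝ) + 1) ≤ p * q := by
      rw [hpdef, hqdef]; exact nat_cast_ineq1 m n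
    have hpq1 : (1:ℝ) ≤ p * q := by
      rw [hpdef, hqdef]; exact nat_cast_ineq2 m n
    have hkpow : (((m + n : ℕ):ℝ) + 1) ^ (N₁ + N₂) * (p * q) ≤ p ^ M * q ^ M := by
      rw [← mul_pow]
      calc (((m + n : ℕ):ℝ) + 1) ^ (N₁ + N₂) * (p * q)
          ≤ (p * q) ^ (N₁ + N₂) * (p * q) :=
            mul_le_mul_of_nonneg_right (pow_le_pow_left₀ (by positivity) hk1 _) (by positivity)
        _ = (p * q) ^ (N₁ + N₂ + 1) := by rw [pow_succ]
        _ ≤ (p * q) ^ M := pow_le_pow_right₀ hpq1 (by omega)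
    have hRHS : D * (g m * g n) * (δ₁ * F1 / p * (δ₂ * F2 / q) * F1 * F2)
        = (p ^ M * q ^ M / (p * q)) * (ρ ^ m * ρ ^ n) * (F1 * F2) ^ 2 := by
      have hgm : g m = p ^ M * ρ ^ m := by rw [hgdef, hpdef]
      have hgn : g n = q ^ M * ρ ^ n := by rw [hgdef, hqdef]
      rw [hgm, hgn, hD]
      field_simp
    have hmain : A * B * (u ^ 2) ^ m * (v ^ 2) ^ n
        ≤ D * (g m * g n) * (δ₁ * F1 / p * (δ₂ * F2 / q) * F1 * F2) := by
      rw [hRHS]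
      calc A * B * (u ^ 2) ^ m * (v ^ 2) ^ n
          ≤ ((((m + n : ℕ):ℝ) + 1) ^ (N₁ + N₂) * (c * F1 * F2) ^ 2) * ((u ^ 2) ^ m * (v ^ 2) ^ n) := by
            have h2 : (0:ℝ) ≤ (u ^ 2) ^ m * (v ^ 2) ^ n := by positivity
            calc A * B * (u ^ 2) ^ m * (v ^ 2) ^ n
                = (A * B) * ((u ^ 2) ^ m * (v ^ 2) ^ n) := by ring
              _ ≤ _ := mul_le_mul_of_nonneg_right hAB h2
        _ = (((m + n : ℕ):ℝ) + 1) ^ (N₁ + N₂) * (c * u ^ m * v ^ n) ^ 2 * (F1 * F2) ^ 2 := by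
            ring
        _ ≤ (((m + n : ℕ):ℝ) + 1) ^ (N₁ + N₂) * (ρ ^ m * ρ ^ n) * (F1 * F2) ^ 2 := by
            apply mul_le_mul_of_nonneg_right
              (mul_le_mul_of_nonneg_left hsq (by positivity)) (by positivity)
        _ ≤ (p ^ M * q ^ M / (p * q)) * (ρ ^ m * ρ ^ n) * (F1 * F2) ^ 2 := by
            apply mul_le_mul_of_nonneg_right (mul_le_mul_of_nonneg_right ?_ (by positivity))
              (by positivity)
            rw [le_div_iff₀ (by positivity)]
            exact hkpow
    refine hmain.trans ?_
    have hDg : (0:ℝ) ≤ D * (g m * g n) := by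
      have := hg0 m; have := hg0 n
      positivity
    apply mul_le_mul_of_nonneg_left ?_ hDg
    calc δ₁ * F1 / p * (δ₂ * F2 / q) * F1 * F2
        ≤ P * (δ₂ * F2 / q) * F1 * F2 := by
          apply mul_le_mul_of_nonneg_right (mul_le_mul_of_nonneg_right
            (mul_le_mul_of_nonneg_right hPl (by positivity)) hF1.le) hF2.le
      _ ≤ P * Q * F1 * F2 := by
          apply mul_le_mul_of_nonneg_right (mul_le_mul_of_nonneg_right
            (mul_le_mul_of_nonneg_left hQl hPpos.le) hF1.le) hF2.le
  have hTsum : Summable T := Summable.of_nonneg_of_le hT0 hTle hKsum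
  constructor
  · rw [hF4]
    have h1 := Summable.le_tsum hTsum (0,0) (fun p _ => hT0 p)
    have h2 : T (0,0) = 1 := by
      simp [hTdef, ascPochhammer_zero]
    linarith
  · rw [hF4]
    exact Summable.tsum_le_tsum hTle hTsum hKsum

theorem jacobi_poisson_sharp_long_time (α β : ℝ) (hα : -1 < α) (hβ : -1 < β) :
    ∃ c C : ℝ, 0 < c ∧ c ≤ C ∧ ∀ t : ℝ, 1 ≤ t →
      ∀ θ ∈ Icc (0 : ℝ) π, ∀ φ ∈ Icc (0 : ℝ) π,
      c * Real.exp (-t * (α + β + 1) / 2) ≤ Hker α β t θ φ ∧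
      Hker α β t θ φ ≤ C * Real.exp (-t * (α + β + 1) / 2) := by
  have hγ : 0 < α + β + 2 := by linarith
  have ha₁ : 0 < (α + β + 2) / 2 := by linarith
  have ha₂ : 0 < (α + β + 3) / 2 := by linarith
  have hb₁ : 0 < α + 1 := by linarith
  have hb₂ : 0 < β + 1 := by linarith
  have hcab : 0 < cab α β := by
    rw [cab]
    have h1 := Real.Gamma_pos_of_pos hγ
    have h2 := Real.Gamma_pos_of_pos hb₁
    have h3 := Real.Gamma_pos_of_pos hb₂
    have h4 : (0:ℝ) < (2:ℝ) ^ (α + β + 1) := Real.rpow_pos_of_pos two_pos _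
    positivity
  have hch1 : 1 < Real.cosh (1/2 : ℝ) := by
    rw [Real.one_lt_cosh]; norm_num
  have hchpos : 0 < Real.cosh (1/2 : ℝ) := Real.cosh_pos _
  set r₀ : ℝ := (Real.cosh (1/2 : ℝ))⁻¹ with hr₀def
  have hr0 : 0 < r₀ := by positivity
  have hr1 : r₀ < 1 := by
    rw [hr₀def]
    exact inv_lt_one_of_one_lt₀ hch1
  obtain ⟨K, hK0, hKbound⟩ :=
    F4_bounds _ _ _ _ ha₁ ha₂ hb₁ hb₂ hr0 hr1
  have hK1 : 1 ≤ K := by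
    have := hKbound 0 0 le_rfl le_rfl (by linarith)
    linarith [this.1, this.2]
  have hexp1 : Real.exp (-1 : ℝ) < 1 := by
    rw [Real.exp_lt_one_iff]; norm_num
  set c : ℝ := cab α β * ((1 - Real.exp (-1 : ℝ)) / 2) with hcdef
  set C : ℝ := max c (cab α β * ((2:ℝ) ^ (α + β + 2) / 2 * K)) with hCdef
  have hc0 : 0 < c := by
    apply mul_pos hcab
    linarith
  refine ⟨c, C, hc0, le_max_left _ _, ?_⟩
  intro t ht θ hθ φ hφ
  have hs12 : (1/2 : ℝ) ≤ t / 2 := by linarith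
  have hs0 : (0:ℝ) ≤ t / 2 := by linarith
  have hcosh_pos : 0 < Real.cosh (t/2) := Real.cosh_pos _
  set u : ℝ := Real.sin (θ/2) * Real.sin (φ/2) / Real.cosh (t/2) with hudef
  set v : ℝ := Real.cos (θ/2) * Real.cos (φ/2) / Real.cosh (t/2) with hvdef
  have hu : 0 ≤ u := by
    rw [hudef]
    apply div_nonneg _ hcosh_pos.le
    apply mul_nonneg
    · exact Real.sin_nonneg_of_nonneg_of_le_pi (by linarith [hθ.1]) (by linarith [hθ.2, Real.pi_pos])
    · exact Real.sin_nonneg_of_nonneg_of_le_pi (by linarith [hφ.1]) (by linarith [hφ.2, Real.pi_pos])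
  have hv : 0 ≤ v := by
    rw [hvdef]
    apply div_nonneg _ hcosh_pos.le
    apply mul_nonneg
    · apply Real.cos_nonneg_of_mem_Icc
      constructor
      · linarith [hθ.1, Real.pi_pos]
      · linarith [hθ.2]
    · apply Real.cos_nonneg_of_mem_Icc
      constructor
      · linarith [hφ.1, Real.pi_pos]
      · linarith [hφ.2]
  have hcosh_mono : Real.cosh (1/2 : ℝ) ≤ Real.cosh (t/2) := by
    rw [Real.cosh_le_cosh]
    rw [abs_of_nonneg (by norm_num : (0:ℝ) ≤ (1/2:ℝ)), abs_of_nonneg hs0]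
    exact hs12
  have huv : u + v ≤ r₀ := by
    have h1 : u + v = Real.cos (θ/2 - φ/2) / Real.cosh (t/2) := by
      rw [hudef, hvdef, Real.cos_sub]
      ring
    rw [h1, hr₀def]
    rw [inv_eq_one_div]
    exact div_le_div₀ (by norm_num) (Real.cos_le_one _) hchpos hcosh_mono
  obtain ⟨hF4low, hF4high⟩ := hKbound u v hu hv huv
  have hHker : Hker α β t θ φ =
      cab α β * Real.sinh (t/2) / Real.cosh (t/2) ^ (α + β + 2) *
        F4 ((α + β + 2) / 2) ((α + β + 3) / 2) (α + 1) (β + 1) (u ^ 2) (v ^ 2) := rfl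
  set X : ℝ := Real.exp (t/2) with hXdef
  have hXpos : 0 < X := Real.exp_pos _
  have hsinh_up : Real.sinh (t/2) ≤ X / 2 := by
    rw [Real.sinh_eq]
    have := Real.exp_pos (-(t/2))
    rw [← hXdef]
    linarith
  have hexpneg : Real.exp (-(t/2)) ≤ Real.exp (-1 : ℝ) * X := by
    have h1 : Real.exp (-(t/2)) = Real.exp (-t) * X := by
      rw [hXdef, ← Real.exp_add]; ring_nf
    rw [h1]
    apply mul_le_mul_of_nonneg_right _ hXpos.le
    exact Real.exp_le_exp.2 (by linarith)
  have hsinh_low : (1 - Real.exp (-1 : ℝ)) / 2 * X ≤ Real.sinh (t/2) := by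
    rw [Real.sinh_eq, ← hXdef]
    linarith
  have hcosh_up : Real.cosh (t/2) ≤ X := by
    rw [Real.cosh_eq, ← hXdef]
    have h1 : Real.exp (-(t/2)) ≤ X := by
      rw [hXdef]
      exact Real.exp_le_exp.2 (by linarith)
    linarith
  have hcosh_low : X / 2 ≤ Real.cosh (t/2) := by
    rw [Real.cosh_eq, ← hXdef]
    have := Real.exp_pos (-(t/2))
    linarith
  have hcp_up : Real.cosh (t/2) ^ (α + β + 2) ≤ X ^ (α + β + 2) :=
    Real.rpow_le_rpow hcosh_pos.le hcosh_up hγ.le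
  have h2γpos : (0:ℝ) < (2:ℝ) ^ (α + β + 2) := Real.rpow_pos_of_pos two_pos _
  have hcp_low : X ^ (α + β + 2) / (2:ℝ) ^ (α + β + 2) ≤ Real.cosh (t/2) ^ (α + β + 2) := by
    have h1 := Real.rpow_le_rpow (by positivity) hcosh_low hγ.le
    rwa [Real.div_rpow hXpos.le (by norm_num)] at h1
  have hcppos : 0 < Real.cosh (t/2) ^ (α + β + 2) := Real.rpow_pos_of_pos hcosh_pos _
  set E : ℝ := Real.exp (-t * (α + β + 1) / 2) with hEdef
  have hEpos : 0 < E := Real.exp_pos _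
  have hE : X ^ (α + β + 2) * E = X := by
    rw [hXdef, hEdef, ← Real.exp_mul, ← Real.exp_add]
    congr 1
    ring
  have hR_low : (1 - Real.exp (-1 : ℝ)) / 2 * E ≤
      Real.sinh (t/2) / Real.cosh (t/2) ^ (α + β + 2) := by
    rw [le_div_iff₀ hcppos]
    have hle : (1 - Real.exp (-1 : ℝ)) / 2 * E * Real.cosh (t/2) ^ (α + β + 2)
        ≤ (1 - Real.exp (-1 : ℝ)) / 2 * E * X ^ (α + β + 2) := by
      apply mul_le_mul_of_nonneg_left hcp_up
      have : (0:ℝ) ≤ (1 - Real.exp (-1 : ℝ)) / 2 := by linarith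
      positivity
    refine hle.trans ?_
    have heq : (1 - Real.exp (-1 : ℝ)) / 2 * E * X ^ (α + β + 2)
        = (1 - Real.exp (-1 : ℝ)) / 2 * X := by
      rw [mul_assoc, mul_comm E (X ^ (α + β + 2)), hE]
    rw [heq]
    exact hsinh_low
  have hR_up : Real.sinh (t/2) / Real.cosh (t/2) ^ (α + β + 2)
      ≤ (2:ℝ) ^ (α + β + 2) / 2 * E := by
    rw [div_le_iff₀ hcppos]
    have h1 : (2:ℝ) ^ (α + β + 2) / 2 * E * (X ^ (α + β + 2) / (2:ℝ) ^ (α + β + 2))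
        = X / 2 := by
      calc (2:ℝ) ^ (α + β + 2) / 2 * E * (X ^ (α + β + 2) / (2:ℝ) ^ (α + β + 2))
          = (X ^ (α + β + 2) * E) * ((2:ℝ) ^ (α + β + 2) / (2:ℝ) ^ (α + β + 2)) / 2 := by
            ring
        _ = (X ^ (α + β + 2) * E) / 2 := by
            rw [div_self (ne_of_gt h2γpos)]; ring
        _ = X / 2 := by rw [hE]
    calc Real.sinh (t/2) ≤ X / 2 := hsinh_up
      _ = (2:ℝ) ^ (α + β + 2) / 2 * E * (X ^ (α + β + 2) / (2:ℝ) ^ (α + β + 2)) := h1.symm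
      _ ≤ (2:ℝ) ^ (α + β + 2) / 2 * E * Real.cosh (t/2) ^ (α + β + 2) := by
          apply mul_le_mul_of_nonneg_left hcp_low (by positivity)
  set R : ℝ := Real.sinh (t/2) / Real.cosh (t/2) ^ (α + β + 2) with hRdef
  have hRpos : 0 < R := by
    rw [hRdef]
    apply div_pos _ hcppos
    apply Real.sinh_pos_iff.2
    linarith
  have hHker2 : Hker α β t θ φ = cab α β * R *
      F4 ((α + β + 2) / 2) ((α + β + 3) / 2) (α + 1) (β + 1) (u ^ 2) (v ^ 2) := by
    rw [hHker, hRdef]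
    ring
  constructor
  · calc c * E = cab α β * ((1 - Real.exp (-1 : ℝ)) / 2 * E) * 1 := by
          rw [hcdef]; ring
      _ ≤ cab α β * R * 1 := by
          apply mul_le_mul_of_nonneg_right _ zero_le_one
          exact mul_le_mul_of_nonneg_left hR_low hcab.le
      _ ≤ cab α β * R *
            F4 ((α + β + 2) / 2) ((α + β + 3) / 2) (α + 1) (β + 1) (u ^ 2) (v ^ 2) := by
          apply mul_le_mul_of_nonneg_left hF4low (by positivity)
      _ = Hker α β t θ φ := hHker2.symm
  · calc Hker α β t θ φ = cab α β * R *
          F4 ((α + β + 2) / 2) ((α + β + 3) / 2) (α + 1) (β + 1) (u ^ 2) (v ^ 2) := hHker2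
      _ ≤ cab α β * R * K := by
          apply mul_le_mul_of_nonneg_left hF4high (by positivity)
      _ ≤ cab α β * ((2:ℝ) ^ (α + β + 2) / 2 * E) * K := by
          apply mul_le_mul_of_nonneg_right (mul_le_mul_of_nonneg_left hR_up hcab.le) hK0.le
      _ = cab α β * ((2:ℝ) ^ (α + β + 2) / 2 * K) * E := by ring
      _ ≤ C * E := by
          apply mul_le_mul_of_nonneg_right _ hEpos.le
          rw [hCdef]
          exact le_max_right _ _
end
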